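/- arXiv:1106.5277 — 9 statements merged into one kernel-verified Lean document; each statement's English description precedes it below -/
import Mathlib

section
/- For every natural number k, the Motzkin number M_{2k} satisfies M_{2k} = \sum_{n=0}^{k} \binom{2k}{2n} C_n, where C_n = \frac{1}{n+1}\binom{2n}{n} is the n-th Catalan number. -/
open Finset DyckStep

def dyckVal : DyckStep → ℤ | U => 1 | D => -1

lemma sum_map_dyckVal (l : List DyckStep) :
    (l.map dyckVal).sum = (l.count U : ℤ) - l.count D := by
  induction l with
  | nil => simp
  | cons h t ih => cases h <;> simp [dyckVal, ih, List.count_cons] <;> ring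

def dyckCond (c : ℕ) (b : Fin c → Fin 2) : Prop :=
  (∀ t : ℕ, t ≤ c → 0 ≤ ∑ j : Fin c, if (j : ℕ) < t then (2 * (b j : ℤ) - 1) else 0) ∧
    (∑ j : Fin c, (2 * (b j : ℤ) - 1)) = 0

instance (c : ℕ) : DecidablePred (dyckCond c) := fun b => by unfold dyckCond; infer_instance

def dyckCount (c : ℕ) : ℕ := (univ.filter (dyckCond c)).card


lemma dyckCount_odd {c : ℕ} (hc : ¬ Even c) : dyckCount c = 0 := by
  rw [dyckCount, Finset.card_eq_zero, Finset.filter_eq_empty_iff]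
  rintro b - ⟨-, h2⟩
  apply hc
  have h : ∑ j : Fin c, (2 * (b j : ℤ) - 1)
      = 2 * ∑ j : Fin c, (b j : ℤ) - c := by
    rw [Finset.sum_sub_distrib, ← Finset.mul_sum]
    simp
  rw [h] at h2
  have : Even (c : ℤ) := ⟨∑ j : Fin c, (b j : ℤ), by omega⟩
  exact Int.even_coe_nat c |>.mp this

lemma step_val : ∀ x : Fin 2, dyckVal (if x = 1 then U else D) = 2 * (x : ℤ) - 1 := by decide

lemma prefix_sum_eq {c : ℕ} (b : Fin c → Fin 2) (t : ℕ) :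
    (∑ j : Fin c, if (j : ℕ) < t then (2 * (b j : ℤ) - 1) else 0)
      = (((List.ofFn fun j => if b j = 1 then U else D).take t).map dyckVal).sum := by
  rw [List.map_take, List.map_ofFn, List.sum_take_ofFn, Finset.sum_filter]
  exact Finset.sum_congr rfl fun j _ => by by_cases h : (j:ℕ) < t <;> simp [h, Function.comp, step_val]

lemma step_roundtrip : ∀ s : DyckStep, (if (if s = U then (1 : Fin 2) else 0) = 1 then U else D) = s := by
  rintro (_|_) <;> rfl

lemma fin2_roundtrip : ∀ x : Fin 2, (if (if x = 1 then U else D) = U then (1 : Fin 2) else 0) = x := by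
  decide

lemma ofFn_getD (n : ℕ) (p : DyckWord) (hl : p.toList.length = 2 * n) :
    (List.ofFn fun j : Fin (2 * n) =>
      if (if p.toList.getD j D = U then (1 : Fin 2) else 0) = 1 then U else D) = p.toList := by
  apply List.ext_getElem
  · simp [hl]
  · intro i h1 h2
    simp only [List.getElem_ofFn]
    rw [List.getD_eq_getElem p.toList D h2]
    exact step_roundtrip _

lemma toWord_count {n : ℕ} (b : Fin (2 * n) → Fin 2) (hb : dyckCond (2 * n) b) :
    (List.ofFn fun j => if b j = 1 then U else D).count U
      = (List.ofFn fun j => if b j = 1 then U else D).count D := by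
  have h2 := hb.2
  have e : (∑ j : Fin (2 * n), if (j : ℕ) < 2 * n then (2 * (b j : ℤ) - 1) else 0)
      = ∑ j : Fin (2 * n), (2 * (b j : ℤ) - 1) :=
    Finset.sum_congr rfl fun j _ => by simp [j.isLt]
  rw [← e, prefix_sum_eq, List.take_of_length_le (by simp), sum_map_dyckVal] at h2
  omega

lemma toWord_prefix {n : ℕ} (b : Fin (2 * n) → Fin 2) (hb : dyckCond (2 * n) b) (i : ℕ) :
    ((List.ofFn fun j => if b j = 1 then U else D).take i).count D
      ≤ ((List.ofFn fun j => if b j = 1 then U else D).take i).count U := by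
  rcases le_or_gt i (2 * n) with hi | hi
  · have h1 := hb.1 i hi
    rw [prefix_sum_eq, sum_map_dyckVal] at h1
    omega
  · rw [List.take_of_length_le (by simp; omega), toWord_count b hb]

/-- The Dyck word associated to a function satisfying `dyckCond`. -/
def toWord {n : ℕ} (b : Fin (2 * n) → Fin 2) (hb : dyckCond (2 * n) b) : DyckWord :=
  ⟨List.ofFn fun j => if b j = 1 then U else D, toWord_count b hb, toWord_prefix b hb⟩

lemma toWord_semilength {n : ℕ} (b : Fin (2 * n) → Fin 2) (hb : dyckCond (2 * n) b) :
    (toWord b hb).semilength = n := by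
  have h1 := DyckWord.two_mul_semilength_eq_length (p := toWord b hb)
  have h2 : (toWord b hb).toList.length = 2 * n := by simp [toWord]
  omega

lemma getD_dyckCond {n : ℕ} (p : DyckWord) (hp : p.semilength = n) :
    dyckCond (2 * n) (fun j => if p.toList.getD j D = U then 1 else 0) := by
  have hl : p.toList.length = 2 * n := by
    rw [← DyckWord.two_mul_semilength_eq_length, hp]
  set b' : Fin (2 * n) → Fin 2 := fun j => if p.toList.getD j D = U then 1 else 0 with hb'
  have key : List.ofFn (fun j => if b' j = 1 then U else D) = p.toList := by
    rw [hb']; exact ofFn_getD n p hl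
  constructor
  · intro t ht
    rw [prefix_sum_eq, key, sum_map_dyckVal]
    have := p.count_D_le_count_U t
    omega
  · have e : ∑ j : Fin (2 * n), (2 * (b' j : ℤ) - 1)
        = ∑ j : Fin (2 * n), if (j : ℕ) < 2 * n then (2 * (b' j : ℤ) - 1) else 0 :=
      (Finset.sum_congr rfl fun j _ => by simp [j.isLt]).symm
    rw [e, prefix_sum_eq, key, ← hl, List.take_length, sum_map_dyckVal, p.count_U_eq_count_D]
    ring

lemma dyckCount_even (n : ℕ) : dyckCount (2 * n) = catalan n := by
  classical
  rw [dyckCount, ← Fintype.card_subtype, ← DyckWord.card_dyckWord_semilength_eq_catalan]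
  refine Fintype.card_congr
    { toFun := fun b => ⟨toWord b.1 b.2, toWord_semilength b.1 b.2⟩
      invFun := fun p => ⟨fun j => if p.1.toList.getD j D = U then 1 else 0,
        getD_dyckCond p.1 p.2⟩
      left_inv := ?_
      right_inv := ?_ }
  · intro b
    apply Subtype.ext
    funext j
    show (if (List.ofFn fun j => if b.1 j = 1 then U else D).getD j D = U then (1:Fin 2) else 0)
      = b.1 j
    rw [List.getD_eq_getElem _ D (by simpa using j.isLt), List.getElem_ofFn]
    simpa using fin2_roundtrip (b.1 j)
  · intro p
    apply Subtype.ext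
    apply DyckWord.ext
    exact ofFn_getD n p.1 (by rw [← DyckWord.two_mul_semilength_eq_length, p.2])


lemma lowerset_eq {c : ℕ} (A : Finset (Fin c))
    (hA : ∀ j ∈ A, ∀ j' : Fin c, j' ≤ j → j' ∈ A) :
    A = univ.filter (fun j : Fin c => (j : ℕ) < A.card) := by
  ext j
  simp only [mem_filter, mem_univ, true_and]
  constructor
  · intro hj
    have hsub : Finset.Iic j ⊆ A := fun x hx => hA j hj x (Finset.mem_Iic.mp hx)
    have := Finset.card_le_card hsub
    rw [Fin.card_Iic] at this
    omega
  · intro hj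
    by_contra hjA
    have hsub : A ⊆ Finset.Iio j := fun x hx =>
      Finset.mem_Iio.mpr (lt_of_not_ge fun h => hjA (hA x hx j h))
    have := Finset.card_le_card hsub
    rw [Fin.card_Iio] at this
    omega

lemma sum_support {m : ℕ} (S : Finset (Fin m)) (f : Fin m → ℤ)
    (hf : ∀ i, i ∉ S → f i = 0) (s : ℕ) :
    (∑ i : Fin m, if (i : ℕ) < s then f i else 0)
      = ∑ j : Fin S.card, if ((S.orderIsoOfFin rfl j : Fin m) : ℕ) < s
          then f (S.orderIsoOfFin rfl j) else 0 := by
  rw [← Finset.sum_subset (Finset.subset_univ S) (fun i _ hi => by simp [hf i hi])]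
  rw [← Finset.sum_attach S (fun i => if (i : ℕ) < s then f i else 0)]
  exact ((S.orderIsoOfFin rfl).toEquiv.sum_comp
    (fun x : S => if ((x : Fin m) : ℕ) < s then f x else 0)).symm

lemma prefix_equiv {m : ℕ} (S : Finset (Fin m)) (h : Fin S.card → ℤ) :
    (∀ s : ℕ, s ≤ m → 0 ≤ ∑ j : Fin S.card,
        if ((S.orderIsoOfFin rfl j : Fin m) : ℕ) < s then h j else 0)
      ↔ (∀ t : ℕ, t ≤ S.card → 0 ≤ ∑ j : Fin S.card, if (j : ℕ) < t then h j else 0) := by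
  set iso := S.orderIsoOfFin rfl with hiso
  constructor
  · intro H t ht
    rcases eq_or_lt_of_le ht with rfl | ht
    · have := H m le_rfl
      have e : (∑ j : Fin S.card, if ((iso j : Fin m) : ℕ) < m then h j else 0)
          = ∑ j : Fin S.card, if (j : ℕ) < S.card then h j else 0 :=
        Finset.sum_congr rfl fun j _ => by simp [(iso j : Fin m).isLt, j.isLt]
      rwa [e] at this
    · have hs : ((iso ⟨t, ht⟩ : Fin m) : ℕ) ≤ m := le_of_lt (iso ⟨t, ht⟩ : Fin m).isLt
      have := H _ hs
      have e : (∑ j : Fin S.card, if ((iso j : Fin m) : ℕ) < ((iso ⟨t, ht⟩ : Fin m) : ℕ)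
            then h j else 0)
          = ∑ j : Fin S.card, if (j : ℕ) < t then h j else 0 := by
        refine Finset.sum_congr rfl fun j _ => ?_
        congr 1
        have : ((iso j : Fin m) : ℕ) < ((iso ⟨t, ht⟩ : Fin m) : ℕ) ↔ (j : ℕ) < t :=
          ⟨fun hh => iso.lt_iff_lt.mp (Subtype.coe_lt_coe.mp hh),
           fun hh => Subtype.coe_lt_coe.mpr (iso.lt_iff_lt.mpr hh)⟩
        simp [this]
      rwa [e] at this
  · intro H s hs
    set A : Finset (Fin S.card) := univ.filter (fun j => ((iso j : Fin m) : ℕ) < s) with hA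
    have hlow : ∀ j ∈ A, ∀ j' : Fin S.card, j' ≤ j → j' ∈ A := by
      intro j hj j' hj'
      simp only [hA, mem_filter, mem_univ, true_and] at hj ⊢
      have : (iso j' : Fin m) ≤ (iso j : Fin m) := Subtype.coe_le_coe.mpr (iso.le_iff_le.mpr hj')
      have := Fin.le_def.mp this
      omega
    have hcard : A.card ≤ S.card := le_trans (Finset.card_le_card (Finset.filter_subset _ _))
      (by simp)
    have e1 : (∑ j : Fin S.card, if ((iso j : Fin m) : ℕ) < s then h j else 0) = ∑ j ∈ A, h j :=
      (Finset.sum_filter _ _).symm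
    rw [e1, lowerset_eq A hlow, Finset.sum_filter]
    exact H A.card hcard
lemma fin3_val : ∀ x : Fin 3, x ≠ 1 →
    (x : ℤ) - 1 = 2 * (((if x = 2 then (1 : Fin 2) else 0) : Fin 2) : ℤ) - 1 := by decide
lemma fin2_val : ∀ y : Fin 2,
    (((if y = 1 then (2 : Fin 3) else 0) : Fin 3) : ℤ) - 1 = 2 * (y : ℤ) - 1 := by decide
lemma fin3_rt : ∀ x : Fin 3, x ≠ 1 →
    (if (if x = 2 then (1 : Fin 2) else 0) = 1 then (2 : Fin 3) else 0) = x := by decide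
lemma fin2_rt : ∀ y : Fin 2,
    (if (if y = 1 then (2 : Fin 3) else 0) = 2 then (1 : Fin 2) else 0) = y := by decide
lemma fin3_ne : ∀ y : Fin 2, (if y = 1 then (2 : Fin 3) else 0) ≠ 1 := by decide

lemma fiber_card (m : ℕ) (S : Finset (Fin m)) :
    (univ.filter (fun a : Fin m → Fin 3 =>
      ((∀ s : ℕ, s ≤ m → 0 ≤ ∑ i : Fin m, if (i : ℕ) < s then ((a i : ℤ) - 1) else 0) ∧
        (∑ i : Fin m, ((a i : ℤ) - 1)) = 0) ∧
      univ.filter (fun i => a i ≠ 1) = S)).card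
    = dyckCount S.card := by
  classical
  rw [dyckCount]
  set iso := S.orderIsoOfFin rfl with hiso
  apply Finset.card_nbij'
    (i := fun a => fun j : Fin S.card => if a (iso j) = 2 then (1 : Fin 2) else 0)
    (j := fun b => fun i : Fin m =>
      if h : i ∈ S then (if b (iso.symm ⟨i, h⟩) = 1 then (2 : Fin 3) else 0) else 1)
  · -- forward lands in dyck filter
    intro a ha
    simp only [mem_coe, mem_filter, mem_univ, true_and] at ha
    obtain ⟨⟨h1, h2⟩, hsupp⟩ := ha
    have hmem : ∀ i : Fin m, i ∈ S ↔ a i ≠ 1 := by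
      intro i; rw [← hsupp]; simp
    have hz : ∀ i, i ∉ S → ((a i : ℤ) - 1) = 0 := by
      intro i hi
      have : a i = 1 := by
        by_contra hne
        exact hi ((hmem i).mpr hne)
      rw [this]; simp
    have hval : ∀ j : Fin S.card,
        ((a (iso j) : ℤ) - 1)
          = 2 * (((if a (iso j) = 2 then (1 : Fin 2) else 0) : Fin 2) : ℤ) - 1 :=
      fun j => fin3_val _ ((hmem _).mp (iso j).2)
    simp only [mem_coe, mem_filter, mem_univ, true_and]
    constructor
    · rw [← prefix_equiv S]
      intro s hs
      have := h1 s hs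
      rw [sum_support S _ hz s] at this
      refine le_trans this (le_of_eq (Finset.sum_congr rfl fun j _ => ?_))
      split_ifs
      · exact hval j
      · rfl
    · have e : (∑ i : Fin m, ((a i : ℤ) - 1))
          = ∑ i : Fin m, if (i : ℕ) < m then ((a i : ℤ) - 1) else 0 :=
        Finset.sum_congr rfl fun i _ => by simp [i.isLt]
      rw [e, sum_support S _ hz m] at h2
      rw [← h2]
      refine Finset.sum_congr rfl fun j _ => ?_
      rw [if_pos ((iso j : Fin m).isLt)]
      exact (hval j).symm
  · -- backward lands in motzkin fiber
    intro b hb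
    simp only [mem_coe, mem_filter, mem_univ, true_and] at hb
    obtain ⟨hb1, hb2⟩ := hb
    set a : Fin m → Fin 3 := fun i =>
      if h : i ∈ S then (if b (iso.symm ⟨i, h⟩) = 1 then (2 : Fin 3) else 0) else 1 with haa
    have hz : ∀ i, i ∉ S → ((a i : ℤ) - 1) = 0 := by
      intro i hi; simp [haa, hi]
    have hval : ∀ j : Fin S.card, ((a (iso j) : ℤ) - 1) = 2 * (b j : ℤ) - 1 := by
      intro j
      have hmem : (iso j : Fin m) ∈ S := (iso j).2
      have heq : (⟨(iso j : Fin m), hmem⟩ : {x // x ∈ S}) = iso j := rfl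
      rw [haa]
      simp only [hmem, dif_pos, heq, iso.symm_apply_apply]
      exact fin2_val (b j)
    simp only [mem_coe, mem_filter, mem_univ, true_and]
    refine ⟨⟨?_, ?_⟩, ?_⟩
    · intro s hs
      rw [sum_support S _ hz s]
      have := (prefix_equiv S (fun j => 2 * (b j : ℤ) - 1)).mpr hb1 s hs
      refine le_trans this (le_of_eq (Finset.sum_congr rfl fun j _ => ?_))
      split_ifs
      · exact (hval j).symm
      · rfl
    · have e : (∑ i : Fin m, ((a i : ℤ) - 1))
          = ∑ i : Fin m, if (i : ℕ) < m then ((a i : ℤ) - 1) else 0 :=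
        Finset.sum_congr rfl fun i _ => by simp [i.isLt]
      rw [e, sum_support S _ hz m, ← hb2]
      refine Finset.sum_congr rfl fun j _ => ?_
      rw [if_pos ((iso j : Fin m).isLt)]
      exact hval j
    · ext i
      simp only [mem_filter, mem_univ, true_and, haa]
      by_cases hi : i ∈ S
      · simpa [hi] using fin3_ne _
      · simp [hi]
  · -- left inverse
    intro a ha
    simp only [mem_coe, mem_filter, mem_univ, true_and] at ha
    obtain ⟨-, hsupp⟩ := ha
    funext i
    by_cases hi : i ∈ S
    · have hne : a i ≠ 1 := by
        rw [← hsupp] at hi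
        simpa using hi
      simp only [dif_pos hi, OrderIso.apply_symm_apply]
      exact fin3_rt (a i) hne
    · have : a i = 1 := by
        by_contra hne
        exact hi (by rw [← hsupp]; simpa using hne)
      simp [hi, this]
  · -- right inverse
    intro b hb
    funext j
    have hmem : (iso j : Fin m) ∈ S := (iso j).2
    have he : (⟨(iso j : Fin m), hmem⟩ : {x // x ∈ S}) = iso j := rfl
    simp only [dif_pos hmem, he, iso.symm_apply_apply]
    exact fin2_rt (b j)

/-- The number of Motzkin paths of length `k` and rank `r`: sequences of `k` steps, each
in `{-1, 0, 1}` (encoded via `Fin 3`, with step value `(a i : ℤ) - 1`), all of whose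
partial sums are nonnegative, with total sum `r`. -/
def motzkinCount (k : ℕ) (r : ℤ) : ℕ :=
  (Finset.univ.filter (fun a : Fin k → Fin 3 =>
    (∀ s : ℕ, s ≤ k → 0 ≤ ∑ i : Fin k, if (i : ℕ) < s then ((a i : ℤ) - 1) else 0) ∧
    (∑ i : Fin k, ((a i : ℤ) - 1)) = r)).card

lemma final_sum (k : ℕ) :
    ∑ c ∈ Finset.range (2 * k + 1), (2 * k).choose c * dyckCount c
      = ∑ n ∈ Finset.range (k + 1), (2 * k).choose (2 * n) * catalan n := by
  classical
  rw [← Finset.sum_filter_of_ne (p := fun c => Even c)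
    (fun c _ hc => by
      by_contra hev
      exact hc (by rw [dyckCount_odd hev, mul_zero]))]
  refine Finset.sum_nbij' (i := fun c => c / 2) (j := fun n => 2 * n) ?_ ?_ ?_ ?_ ?_
  · intro c hc
    simp only [Finset.mem_filter, Finset.mem_range] at hc
    simp only [Finset.mem_range]
    omega
  · intro n hn
    simp only [Finset.mem_range] at hn
    simp only [Finset.mem_filter, Finset.mem_range]
    exact ⟨by omega, even_two_mul n⟩
  · intro c hc
    simp only [Finset.mem_filter, Finset.mem_range] at hc
    obtain ⟨-, r, hr⟩ := hc
    show 2 * (c / 2) = c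
    omega
  · intro n _
    show 2 * n / 2 = n
    omega
  · intro c hc
    simp only [Finset.mem_filter, Finset.mem_range] at hc
    obtain ⟨-, hev⟩ := hc
    have h2 : 2 * (c / 2) = c := by
      obtain ⟨r, hr⟩ := hev
      omega
    rw [← dyckCount_even, h2]

theorem motzkin_eq_sum_choose_catalan (k : ℕ) :
    motzkinCount (2 * k) 0 =
      ∑ n ∈ Finset.range (k + 1), Nat.choose (2 * k) (2 * n) * catalan n := by
  classical
  rw [motzkinCount]
  rw [Finset.card_eq_sum_card_fiberwise
    (f := fun a : Fin (2 * k) → Fin 3 => univ.filter (fun i => a i ≠ 1))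
    (t := univ) (fun x _ => mem_univ _)]
  have hfib : ∀ S : Finset (Fin (2 * k)),
      ((univ.filter (fun a : Fin (2 * k) → Fin 3 =>
        (∀ s : ℕ, s ≤ 2 * k → 0 ≤ ∑ i : Fin (2 * k), if (i : ℕ) < s then ((a i : ℤ) - 1) else 0) ∧
        (∑ i : Fin (2 * k), ((a i : ℤ) - 1)) = 0)).filter
          (fun a => univ.filter (fun i => a i ≠ 1) = S)).card = dyckCount S.card := by
    intro S
    rw [Finset.filter_filter]
    exact fiber_card (2 * k) S
  rw [Finset.sum_congr rfl (fun S _ => hfib S)]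
  rw [← Finset.powerset_univ,
    Finset.sum_powerset (univ : Finset (Fin (2 * k))) (fun S => dyckCount S.card)]
  rw [Finset.sum_congr rfl
    (fun j _ => Finset.sum_powersetCard j (univ : Finset (Fin (2 * k))) (fun c => dyckCount c))]
  have hcard : (univ : Finset (Fin (2 * k))).card = 2 * k := by simp
  rw [← final_sum k]
  refine Finset.sum_congr (by rw [hcard]) fun c hc => ?_
  rw [hcard, smul_eq_mul]
end

section
/- For every natural number k, \sum_{r=0}^{k} (m_{k,r})^2 = M_{2k}, i.e. the sum of the squares of the numbers of Motzkin paths of length k of each rank r = 0, 1, …, k equals the number of Motzkin paths of length 2k and rank 0. -/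
/-- Extension of a path to a ℕ-indexed step function (0 beyond the length). -/
def ext3 {n : ℕ} (a : Fin n → Fin 3) (i : ℕ) : ℤ :=
  if h : i < n then (a ⟨i, h⟩ : ℤ) - 1 else 0

/-- Partial sum of steps. -/
def psum {n : ℕ} (a : Fin n → Fin 3) (s : ℕ) : ℤ := ∑ i ∈ Finset.range s, ext3 a i

lemma ext3_le {n : ℕ} (a : Fin n → Fin 3) (i : ℕ) : ext3 a i ≤ 1 := by
  unfold ext3
  split_ifs with h
  · have := (a ⟨i, h⟩).isLt
    omega
  · norm_num

lemma psum_succ {n : ℕ} (a : Fin n → Fin 3) (s : ℕ) :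
    psum a (s + 1) = psum a s + ext3 a s := Finset.sum_range_succ _ _

lemma psum_le {n : ℕ} (a : Fin n → Fin 3) (s : ℕ) : psum a s ≤ s := by
  calc psum a s ≤ ∑ _i ∈ Finset.range s, (1 : ℤ) :=
        Finset.sum_le_sum fun i _ => ext3_le a i
    _ = s := by simp

lemma fin_sum_eq {n : ℕ} (a : Fin n → Fin 3) {s : ℕ} (hs : s ≤ n) :
    (∑ i : Fin n, if (i : ℕ) < s then ((a i : ℤ) - 1) else 0) = psum a s := by
  have h1 : (∑ i : Fin n, if (i : ℕ) < s then ((a i : ℤ) - 1) else 0)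
      = ∑ i : Fin n, (fun m => if m < s then ext3 a m else 0) (i : ℕ) := by
    refine Finset.sum_congr rfl fun i _ => ?_
    simp [ext3, i.isLt]
  rw [h1, Fin.sum_univ_eq_sum_range (fun m => if m < s then ext3 a m else 0) n,
    ← Finset.sum_filter]
  have h2 : (Finset.range n).filter (fun m => m < s) = Finset.range s := by
    ext m
    simp only [Finset.mem_filter, Finset.mem_range]
    omega
  rw [h2]; rfl

lemma fin_total_eq {n : ℕ} (a : Fin n → Fin 3) :
    (∑ i : Fin n, ((a i : ℤ) - 1)) = psum a n := by
  have h1 : (∑ i : Fin n, ((a i : ℤ) - 1)) = ∑ i : Fin n, ext3 a (i : ℕ) := by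
    refine Finset.sum_congr rfl fun i _ => ?_
    simp [ext3, i.isLt]
  rw [h1, Fin.sum_univ_eq_sum_range]; rfl

/-- The finset of Motzkin paths. -/
def mset (k : ℕ) (r : ℤ) : Finset (Fin k → Fin 3) :=
  Finset.univ.filter (fun a : Fin k → Fin 3 =>
    (∀ s : ℕ, s ≤ k → 0 ≤ ∑ i : Fin k, if (i : ℕ) < s then ((a i : ℤ) - 1) else 0) ∧
    (∑ i : Fin k, ((a i : ℤ) - 1)) = r)

lemma motzkinCount_eq (k : ℕ) (r : ℤ) : motzkinCount k r = (mset k r).card := rfl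

lemma mem_mset {k : ℕ} {r : ℤ} {a : Fin k → Fin 3} :
    a ∈ mset k r ↔ (∀ s : ℕ, s ≤ k → 0 ≤ psum a s) ∧ psum a k = r := by
  simp only [mset, Finset.mem_filter, Finset.mem_univ, true_and]
  constructor
  · rintro ⟨h1, h2⟩
    exact ⟨fun s hs => (fin_sum_eq a hs) ▸ h1 s hs, (fin_total_eq a) ▸ h2⟩
  · rintro ⟨h1, h2⟩
    refine ⟨fun s hs => ?_, ?_⟩
    · rw [fin_sum_eq a hs]; exact h1 s hs
    · rw [fin_total_eq a]; exact h2

/-- Negation of a step. -/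
def neg3 (v : Fin 3) : Fin 3 := ⟨2 - (v : ℕ), by omega⟩

lemma neg3_coe (v : Fin 3) : ((neg3 v : Fin 3) : ℤ) = 2 - (v : ℤ) := by
  have := v.isLt
  simp only [neg3]
  omega

lemma neg3_neg3 (v : Fin 3) : neg3 (neg3 v) = v := by
  have := v.isLt
  apply Fin.ext
  simp only [neg3]
  omega

/-- Glue a path with the reverse-negation of another path. -/
def glue {k : ℕ} (a b : Fin k → Fin 3) : Fin (2 * k) → Fin 3 :=
  fun i => if h : (i : ℕ) < k then a ⟨i, h⟩
    else neg3 (b ⟨2 * k - 1 - (i : ℕ), by have := i.isLt; omega⟩)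

def lft {k : ℕ} (c : Fin (2 * k) → Fin 3) : Fin k → Fin 3 :=
  fun i => c ⟨(i : ℕ), by have := i.isLt; omega⟩

def rgt {k : ℕ} (c : Fin (2 * k) → Fin 3) : Fin k → Fin 3 :=
  fun j => neg3 (c ⟨2 * k - 1 - (j : ℕ), by have := j.isLt; omega⟩)

lemma ext3_glue_lt {k : ℕ} (a b : Fin k → Fin 3) {i : ℕ} (h : i < k) :
    ext3 (glue a b) i = ext3 a i := by
  have h2 : i < 2 * k := by omega
  simp [ext3, glue, h, h2]

lemma ext3_glue_ge {k : ℕ} (a b : Fin k → Fin 3) {i : ℕ} (h1 : k ≤ i) (h2 : i < 2 * k) :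
    ext3 (glue a b) i = -ext3 b (2 * k - 1 - i) := by
  have h3 : ¬ i < k := by omega
  have h4 : 2 * k - 1 - i < k := by omega
  simp only [ext3, glue, h2, h4, dif_pos, h3, dif_neg, not_false_iff]
  rw [neg3_coe]
  ring

lemma psum_glue_le {k : ℕ} (a b : Fin k → Fin 3) {s : ℕ} (hs : s ≤ k) :
    psum (glue a b) s = psum a s := by
  refine Finset.sum_congr rfl fun i hi => ?_
  rw [Finset.mem_range] at hi
  exact ext3_glue_lt a b (by omega)

lemma psum_glue_add {k : ℕ} (a b : Fin k → Fin 3) {t : ℕ} (ht : t ≤ k) :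
    psum (glue a b) (k + t) = psum a k - psum b k + psum b (k - t) := by
  induction t with
  | zero => simp [psum_glue_le a b le_rfl]
  | succ t ih =>
    have ht' : t ≤ k := by omega
    rw [← Nat.add_assoc, psum_succ, ih ht', ext3_glue_ge a b (by omega) (by omega)]
    have he : 2 * k - 1 - (k + t) = k - (t + 1) := by omega
    have hk : k - t = (k - (t + 1)) + 1 := by omega
    rw [he, hk, psum_succ]
    ring

lemma glue_lft_rgt {k : ℕ} (c : Fin (2 * k) → Fin 3) : glue (lft c) (rgt c) = c := by
  funext i
  by_cases h : (i : ℕ) < k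
  · simp [glue, h, lft, Fin.eta]
  · simp only [glue, h, dif_neg, not_false_iff, rgt, neg3_neg3]
    congr 1
    apply Fin.ext
    have := i.isLt
    simp only []
    omega

lemma lft_glue {k : ℕ} (a b : Fin k → Fin 3) : lft (glue a b) = a := by
  funext i
  have h : (i : ℕ) < k := i.isLt
  simp only [lft, glue, h, dif_pos]

lemma rgt_glue {k : ℕ} (a b : Fin k → Fin 3) : rgt (glue a b) = b := by
  funext j
  have hj : (j : ℕ) < k := j.isLt
  have h1 : ¬ (2 * k - 1 - (j : ℕ) < k) := by omega
  simp only [rgt, glue, h1, dif_neg, not_false_iff, neg3_neg3]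
  congr 1
  apply Fin.ext
  simp only []
  omega

theorem sum_sq_motzkin (k : ℕ) :
    ∑ r ∈ Finset.range (k + 1), (motzkinCount k r) ^ 2 = motzkinCount (2 * k) 0 := by
  simp only [motzkinCount_eq, sq]
  have h1 : ∀ r : ℕ, (mset k (r : ℤ)).card * (mset k (r : ℤ)).card
      = ((mset k (r : ℤ)) ×ˢ (mset k (r : ℤ))).card := fun r => (Finset.card_product _ _).symm
  simp only [h1]
  rw [← Finset.card_sigma]
  apply Finset.card_bij (fun p _ => glue p.2.1 p.2.2)
  · rintro ⟨r, a, b⟩ hp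
    rw [Finset.mem_sigma, Finset.mem_product] at hp
    obtain ⟨hr, ha, hb⟩ := hp
    rw [mem_mset] at ha hb
    rw [mem_mset]
    constructor
    · intro s hs
      rcases le_or_gt s k with h | h
      · rw [psum_glue_le a b h]; exact ha.1 s h
      · obtain ⟨t, rfl⟩ : ∃ t, s = k + t := ⟨s - k, by omega⟩
        rw [psum_glue_add a b (by omega)]
        have := hb.1 (k - t) (by omega)
        rw [ha.2, hb.2]
        linarith
    · have h2 := psum_glue_add a b (le_refl k)
      have h2k : k + k = 2 * k := by omega
      rw [h2k] at h2
      rw [h2, ha.2, hb.2]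
      simp [psum]
  · rintro ⟨r, a, b⟩ hp ⟨r', a', b'⟩ hp' heq
    rw [Finset.mem_sigma, Finset.mem_product] at hp hp'
    have haa : a = a' := by rw [← lft_glue a b, heq, lft_glue]
    have hbb : b = b' := by rw [← rgt_glue a b, heq, rgt_glue]
    have h2 := (mem_mset.mp hp.2.1).2
    have h3 := (mem_mset.mp hp'.2.1).2
    have hrr : r = r' := by
      have : (r : ℤ) = (r' : ℤ) := by rw [← h2, ← h3, haa]
      exact_mod_cast this
    subst haa; subst hbb; subst hrr; rfl
  · intro c hc
    rw [mem_mset] at hc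
    obtain ⟨hpos, htot⟩ := hc
    set a := lft c
    set b := rgt c
    have hg : glue a b = c := glue_lft_rgt c
    have hpsa : ∀ s : ℕ, s ≤ k → psum a s = psum c s := by
      intro s hs
      rw [← hg, psum_glue_le a b hs]
    have hr0 : (0 : ℤ) ≤ psum c k := hpos k (by omega)
    have hrk : psum c k ≤ k := by rw [← hpsa k le_rfl]; exact psum_le a k
    -- total of b equals psum c k
    have htotc : psum c (2 * k) = 0 := by
      rw [← hg] at htot ⊢
      exact htot
    have hbk : psum b k = psum c k := by
      have := psum_glue_add a b (le_refl k)
      rw [hg] at this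
      have h2k : k + k = 2 * k := by omega
      rw [h2k, htotc] at this
      have hb0 : psum b (k - k) = 0 := by simp [psum]
      rw [hb0, hpsa k le_rfl] at this
      linarith
    refine ⟨⟨(psum c k).toNat, a, b⟩, ?_, hg⟩
    rw [Finset.mem_sigma, Finset.mem_product, Finset.mem_range]
    have hcast : ((psum c k).toNat : ℤ) = psum c k := Int.toNat_of_nonneg hr0
    refine ⟨?_, ?_, ?_⟩
    · show (psum c k).toNat < k + 1
      omega
    · rw [mem_mset]
      exact ⟨fun s hs => (hpsa s hs) ▸ hpos s (by omega), by rw [hpsa k le_rfl, hcast]⟩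
    · rw [mem_mset]
      refine ⟨fun t ht => ?_, by rw [hbk, hcast]⟩
      have := psum_glue_add a b (t := k - t) (by omega)
      rw [hg] at this
      have h1 : k + (k - t) = 2 * k - t := by omega
      have h2 : k - (k - t) = t := by omega
      rw [h1, h2, hpsa k le_rfl, hbk] at this
      have h3 := hpos (2 * k - t) (by omega)
      linarith
end

section
/- For every natural number k, 3^k = \sum_{r=0}^{k} (r+1)\, m_{k,r}. -/
lemma motzkin_sum_if_ge {k : ℕ} (a : Fin k → Fin 3) {s : ℕ} (hs : k ≤ s) :
    ∑ i : Fin k, (if (i : ℕ) < s then ((a i : ℤ) - 1) else 0)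
      = ∑ i : Fin k, ((a i : ℤ) - 1) := by
  apply Finset.sum_congr rfl
  intro i _
  rw [if_pos (lt_of_lt_of_le i.isLt hs)]

lemma motzkin_neg (k : ℕ) {r : ℤ} (hr : r < 0) : motzkinCount k r = 0 := by
  rw [motzkinCount, Finset.card_eq_zero, Finset.filter_eq_empty_iff]
  rintro a - ⟨h1, h2⟩
  have := h1 k le_rfl
  rw [motzkin_sum_if_ge a le_rfl, h2] at this
  omega

lemma motzkin_gt (k : ℕ) {r : ℤ} (hr : (k : ℤ) < r) : motzkinCount k r = 0 := by
  rw [motzkinCount, Finset.card_eq_zero, Finset.filter_eq_empty_iff]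
  rintro a - ⟨h1, h2⟩
  have hb : ∑ i : Fin k, ((a i : ℤ) - 1) ≤ ∑ _i : Fin k, (1 : ℤ) := by
    apply Finset.sum_le_sum
    intro i _
    have : (a i : ℤ) ≤ 2 := by
      have := (a i).isLt
      omega
    omega
  rw [Finset.sum_const, Finset.card_univ, Fintype.card_fin, nsmul_eq_mul, mul_one] at hb
  omega

lemma motzkin_prefix_le {k : ℕ} (a : Fin (k + 1) → Fin 3) {s : ℕ} (hs : s ≤ k) :
    ∑ i : Fin (k + 1), (if (i : ℕ) < s then ((a i : ℤ) - 1) else 0)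
      = ∑ i : Fin k, (if (i : ℕ) < s then ((a i.castSucc : ℤ) - 1) else 0) := by
  rw [Fin.sum_univ_castSucc]
  have : ¬ ((Fin.last k : ℕ) < s) := by simp [Fin.last]; omega
  rw [if_neg this, add_zero]
  apply Finset.sum_congr rfl
  intro i _
  simp [Fin.coe_castSucc]

lemma motzkin_total_last {k : ℕ} (a : Fin (k + 1) → Fin 3) :
    ∑ i : Fin (k + 1), ((a i : ℤ) - 1)
      = (∑ i : Fin k, ((a i.castSucc : ℤ) - 1)) + ((a (Fin.last k) : ℤ) - 1) := by
  rw [Fin.sum_univ_castSucc]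

lemma motzkin_rec (k : ℕ) (r : ℤ) (hr : 0 ≤ r) :
    motzkinCount (k + 1) r
      = motzkinCount k (r - 1) + motzkinCount k r + motzkinCount k (r + 1) := by
  have key : ∀ c : Fin 3,
      ((Finset.univ.filter (fun a : Fin (k+1) → Fin 3 =>
        ((∀ s : ℕ, s ≤ k+1 → 0 ≤ ∑ i : Fin (k+1), if (i : ℕ) < s then ((a i : ℤ) - 1) else 0) ∧
        (∑ i : Fin (k+1), ((a i : ℤ) - 1)) = r))).filter
          (fun a => a (Fin.last k) = c)).card
      = motzkinCount k (r - ((c : ℤ) - 1)) := by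
    intro c
    rw [motzkinCount]
    refine Finset.card_bij' (fun a _ => Fin.init a) (fun b _ => Fin.snoc b c) ?_ ?_ ?_ ?_
    · -- forward membership
      intro a ha
      simp only [Finset.mem_filter, Finset.mem_univ, true_and] at ha ⊢
      obtain ⟨⟨h1, h2⟩, hc⟩ := ha
      constructor
      · intro s hs
        have := h1 s (le_trans hs (Nat.le_succ k))
        rw [motzkin_prefix_le a hs] at this
        exact this
      · rw [motzkin_total_last a, hc] at h2
        show ∑ i : Fin k, ((a i.castSucc : ℤ) - 1) = r - ((c : ℤ) - 1)
        omega
    · -- backward membership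
      intro b hb
      simp only [Finset.mem_filter, Finset.mem_univ, true_and] at hb ⊢
      obtain ⟨h1, h2⟩ := hb
      have htot : ∑ i : Fin (k + 1), (((Fin.snoc b c : Fin (k+1) → Fin 3) i : ℤ) - 1) = r := by
        rw [motzkin_total_last]
        simp only [Fin.snoc_castSucc, Fin.snoc_last]
        rw [h2]; ring
      refine ⟨⟨?_, htot⟩, Fin.snoc_last _ _⟩
      intro s hs
      rcases Nat.lt_or_ge s (k + 1) with h | h
      · rw [motzkin_prefix_le _ (Nat.lt_succ_iff.mp h)]
        simp only [Fin.snoc_castSucc]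
        exact h1 s (Nat.lt_succ_iff.mp h)
      · rw [motzkin_sum_if_ge _ h, htot]
        exact hr
    · intro a ha
      simp only [Finset.mem_filter, Finset.mem_univ, true_and] at ha
      obtain ⟨-, hc⟩ := ha
      subst hc
      exact Fin.snoc_init_self a
    · intro b _
      simp
  rw [motzkinCount,
    Finset.card_eq_sum_card_fiberwise (f := fun a => a (Fin.last k)) (t := Finset.univ)
      (fun x _ => Finset.mem_univ _)]
  rw [Fin.sum_univ_three]
  rw [key 0, key 1, key 2]
  norm_num
  omega

lemma motzkin_step (k : ℕ) :
    ∑ r ∈ Finset.range (k + 2), (r + 1) * motzkinCount (k + 1) r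
      = 3 * ∑ r ∈ Finset.range (k + 1), (r + 1) * motzkinCount k r := by
  have key : ∀ r ∈ Finset.range (k + 2), (r + 1) * motzkinCount (k + 1) (r : ℤ)
      = (r + 1) * motzkinCount k ((r : ℤ) - 1) + (r + 1) * motzkinCount k (r : ℤ)
        + (r + 1) * motzkinCount k ((r : ℤ) + 1) := by
    intro r _
    rw [motzkin_rec k r (Int.natCast_nonneg r)]
    ring
  rw [Finset.sum_congr rfl key, Finset.sum_add_distrib, Finset.sum_add_distrib]
  have T1 : ∑ r ∈ Finset.range (k + 2), (r + 1) * motzkinCount k ((r : ℤ) - 1)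
      = ∑ r ∈ Finset.range (k + 1), (r + 2) * motzkinCount k (r : ℤ) := by
    rw [Finset.sum_range_succ']
    have h0 : motzkinCount k (((0 : ℕ) : ℤ) - 1) = 0 := by
      apply motzkin_neg; norm_num
    rw [h0]
    simp only [mul_zero, add_zero]
    apply Finset.sum_congr rfl
    intro r _
    have : ((r + 1 : ℕ) : ℤ) - 1 = (r : ℤ) := by push_cast; ring
    rw [this]
  have T2 : ∑ r ∈ Finset.range (k + 2), (r + 1) * motzkinCount k (r : ℤ)
      = ∑ r ∈ Finset.range (k + 1), (r + 1) * motzkinCount k (r : ℤ) := by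
    rw [Finset.sum_range_succ]
    have h0 : motzkinCount k ((k + 1 : ℕ) : ℤ) = 0 := by
      apply motzkin_gt; push_cast; omega
    rw [h0, mul_zero, add_zero]
  have T3 : ∑ r ∈ Finset.range (k + 2), (r + 1) * motzkinCount k ((r : ℤ) + 1)
      = ∑ r ∈ Finset.range (k + 1), r * motzkinCount k (r : ℤ) := by
    have expand : ∑ j ∈ Finset.range (k + 3), j * motzkinCount k (j : ℤ)
        = ∑ r ∈ Finset.range (k + 2), (r + 1) * motzkinCount k ((r : ℤ) + 1) := by
      rw [Finset.sum_range_succ']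
      simp only [Nat.cast_zero, zero_mul, add_zero]
      apply Finset.sum_congr rfl
      intro r _
      have : ((r + 1 : ℕ) : ℤ) = (r : ℤ) + 1 := by push_cast; ring
      rw [this]
    rw [← expand, Finset.sum_range_succ, Finset.sum_range_succ]
    have h1 : motzkinCount k ((k + 1 : ℕ) : ℤ) = 0 := by
      apply motzkin_gt; push_cast; omega
    have h2 : motzkinCount k ((k + 2 : ℕ) : ℤ) = 0 := by
      apply motzkin_gt; push_cast; omega
    rw [h1, h2, mul_zero, mul_zero, add_zero, add_zero]
  rw [T1, T2, T3, Finset.mul_sum, ← Finset.sum_add_distrib, ← Finset.sum_add_distrib]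
  apply Finset.sum_congr rfl
  intro r _
  ring

theorem three_pow_eq_sum_motzkin (k : ℕ) :
    3 ^ k = ∑ r ∈ Finset.range (k + 1), (r + 1) * motzkinCount k r := by
  induction k with
  | zero =>
    have h : motzkinCount 0 (0 : ℤ) = 1 := by
      rw [motzkinCount]
      rw [Finset.filter_true_of_mem (fun a _ => by simp)]
      simp
    simp [h]
  | succ k ih =>
    rw [motzkin_step k, ← ih, pow_succ]
    ring
end

section
/- For all natural numbers k and r with 0 ≤ r ≤ k, m_{k,r} = \sum_{\ell=0}^{\lfloor (k-r)/2 \rfloor} \binom{k}{r+2\ell} \left( \binom{r+2\ell}{\ell} - \binom{r+2\ell}{\ell-1} \right), where by convention \binom{n}{-1} = 0. -/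
/-- Recursive count of Motzkin paths. -/
def Mz : ℕ → ℤ → ℕ
  | 0, r => if r = 0 then 1 else 0
  | (k+1), r => if r < 0 then 0 else Mz k (r-1) + Mz k r + Mz k (r+1)

lemma Mz_succ (k : ℕ) (r : ℤ) (hr : 0 ≤ r) :
    Mz (k+1) r = Mz k (r-1) + Mz k r + Mz k (r+1) := by
  rw [Mz, if_neg (not_lt.2 hr)]

lemma motzkinCount_neg (k : ℕ) (r : ℤ) (hr : r < 0) : motzkinCount k r = 0 := by
  unfold motzkinCount
  rw [Finset.card_eq_zero, Finset.filter_eq_empty_iff]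
  rintro a - ⟨h1, h2⟩
  have := h1 k le_rfl
  have hsum : (∑ i : Fin k, if (i : ℕ) < k then ((a i : ℤ) - 1) else 0)
      = ∑ i : Fin k, ((a i : ℤ) - 1) := by
    refine Finset.sum_congr rfl fun i _ => if_pos i.isLt
  rw [hsum, h2] at this
  omega

lemma motzkinCount_eq_Mz (k : ℕ) : ∀ r : ℤ, motzkinCount k r = Mz k r := by
  induction k with
  | zero =>
    intro r
    unfold motzkinCount Mz
    rcases eq_or_ne r 0 with h | h
    · subst h; rw [if_pos rfl]
      rw [Finset.card_eq_one]
      refine ⟨fun i => i.elim0, ?_⟩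
      ext a
      simp only [Finset.mem_filter, Finset.mem_univ, true_and, Finset.mem_singleton]
      constructor
      · intro; exact Subsingleton.elim _ _
      · intro; exact ⟨fun s hs => by simp, by simp⟩
    · rw [if_neg h, Finset.card_eq_zero, Finset.filter_eq_empty_iff]
      intro a _
      simp only [Finset.univ_eq_empty, Finset.sum_empty, not_and]
      intro _
      omega
  | succ k ih =>
    intro r
    rcases lt_or_ge r 0 with hr | hr
    · rw [motzkinCount_neg _ _ hr]
      unfold Mz
      rw [if_pos hr]
    -- main case
    unfold motzkinCount
    rw [← Fintype.card_subtype]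
    have e : {f : Fin (k+1) → Fin 3 //
        (∀ s : ℕ, s ≤ k+1 → 0 ≤ ∑ i : Fin (k+1), if (i : ℕ) < s then ((f i : ℤ) - 1) else 0) ∧
        (∑ i : Fin (k+1), ((f i : ℤ) - 1)) = r} ≃
        {x : Fin 3 × (Fin k → Fin 3) //
          (∀ s : ℕ, s ≤ k → 0 ≤ ∑ i : Fin k, if (i : ℕ) < s then ((x.2 i : ℤ) - 1) else 0) ∧
          (∑ i : Fin k, ((x.2 i : ℤ) - 1)) = r - ((x.1 : ℤ) - 1)} := by
      refine Equiv.subtypeEquiv (Fin.snocEquiv (fun _ => Fin 3)).symm (fun f => ?_)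
      have hsnoc : ((Fin.snocEquiv (fun _ => Fin 3)).symm f).2 = fun i => f i.castSucc := rfl
      have hlast : ((Fin.snocEquiv (fun _ => Fin 3)).symm f).1 = f (Fin.last k) := rfl
      rw [hsnoc, hlast]
      beta_reduce
      have htot : (∑ i : Fin (k+1), ((f i : ℤ) - 1)) =
          (∑ i : Fin k, ((f i.castSucc : ℤ) - 1)) + ((f (Fin.last k) : ℤ) - 1) :=
        Fin.sum_univ_castSucc _
      have hpart : ∀ s : ℕ, s ≤ k →
          (∑ i : Fin (k+1), if (i : ℕ) < s then ((f i : ℤ) - 1) else 0) =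
          (∑ i : Fin k, if (i : ℕ) < s then ((f i.castSucc : ℤ) - 1) else 0) := by
        intro s hs
        rw [Fin.sum_univ_castSucc
          (f := fun i : Fin (k+1) => if (i : ℕ) < s then ((f i : ℤ) - 1) else 0)]
        simp only [Fin.coe_castSucc, Fin.val_last]
        rw [if_neg (by omega), add_zero]
      have hfull : (∑ i : Fin (k+1), if (i : ℕ) < k+1 then ((f i : ℤ) - 1) else 0) =
          ∑ i : Fin (k+1), ((f i : ℤ) - 1) :=
        Finset.sum_congr rfl fun i _ => if_pos i.isLt
      constructor
      · rintro ⟨h1, h2⟩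
        refine ⟨fun s hs => ?_, by omega⟩
        rw [← hpart s hs]; exact h1 s (by omega)
      · rintro ⟨h1, h2⟩
        have h2' : (∑ i : Fin (k+1), ((f i : ℤ) - 1)) = r := by omega
        refine ⟨fun s hs => ?_, h2'⟩
        rcases Nat.lt_or_ge s (k+1) with hs' | hs'
        · rw [hpart s (by omega)]; exact h1 s (by omega)
        · have : s = k+1 := by omega
          subst this
          rw [hfull, h2']; exact hr
    rw [Fintype.card_congr e]
    have h2 : Fintype.card {x : Fin 3 × (Fin k → Fin 3) //
          (∀ s : ℕ, s ≤ k → 0 ≤ ∑ i : Fin k, if (i : ℕ) < s then ((x.2 i : ℤ) - 1) else 0) ∧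
          (∑ i : Fin k, ((x.2 i : ℤ) - 1)) = r - ((x.1 : ℤ) - 1)} =
        ∑ c : Fin 3, Fintype.card {a : Fin k → Fin 3 //
          (∀ s : ℕ, s ≤ k → 0 ≤ ∑ i : Fin k, if (i : ℕ) < s then ((a i : ℤ) - 1) else 0) ∧
          (∑ i : Fin k, ((a i : ℤ) - 1)) = r - ((c : ℤ) - 1)} := by
      rw [Fintype.card_congr (Equiv.subtypeProdEquivSigmaSubtype
        (fun (c : Fin 3) (a : Fin k → Fin 3) =>
          (∀ s : ℕ, s ≤ k → 0 ≤ ∑ i : Fin k, if (i : ℕ) < s then ((a i : ℤ) - 1) else 0) ∧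
          (∑ i : Fin k, ((a i : ℤ) - 1)) = r - ((c : ℤ) - 1)))]
      rw [Fintype.card_sigma]
    rw [h2]
    have hc : ∀ c : Fin 3, (Fintype.card {a : Fin k → Fin 3 //
        (∀ s : ℕ, s ≤ k → 0 ≤ ∑ i : Fin k, if (i : ℕ) < s then ((a i : ℤ) - 1) else 0) ∧
        (∑ i : Fin k, ((a i : ℤ) - 1)) = r - ((c : ℤ) - 1)}) = Mz k (r - ((c : ℤ) - 1)) := by
      intro c
      rw [Fintype.card_subtype]
      exact ih _
    rw [Fin.sum_univ_three, hc 0, hc 1, hc 2, Mz_succ k r hr]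
    norm_num
    ring_nf


/-- Ballot numbers. -/
def Bn (n ℓ : ℕ) : ℕ :=
  n.choose ℓ - if ℓ = 0 then 0 else n.choose (ℓ - 1)

/-- The formula side. -/
def Fm (k r : ℕ) : ℕ := ∑ ℓ ∈ Finset.range (k+1), k.choose (r + 2*ℓ) * Bn (r + 2*ℓ) ℓ

lemma choose_pred_le (n ℓ : ℕ) (h : 2*ℓ ≤ n + 1) (h0 : ℓ ≠ 0) :
    n.choose (ℓ-1) ≤ n.choose ℓ := by
  obtain ⟨j, rfl⟩ : ∃ j, ℓ = j + 1 := ⟨ℓ-1, by omega⟩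
  rcases Nat.lt_or_ge (2*(j+1)) (n+1) with hlt | hge
  · simpa using Nat.choose_le_succ_of_lt_half_left (r := j) (n := n) (by omega)
  · -- n = 2*j+1, equality by symmetry
    have hn : n = 2*j+1 := by omega
    subst hn
    have := Nat.choose_symm (n := 2*j+1) (k := j) (by omega)
    simp only [Nat.add_sub_cancel]
    rw [show 2*j+1-j = j+1 by omega] at this
    omega

/-- Pascal-type recursion for ballot numbers. -/
lemma Bn_pascal (m ℓ : ℕ) :
    Bn (m + 1 + 2*ℓ) ℓ = Bn (m + 2*ℓ) ℓ + if ℓ = 0 then 0 else Bn (m + 2*ℓ) (ℓ-1) := by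
  rcases eq_or_ne ℓ 0 with h0 | h0
  · simp [Bn, h0]
  · obtain ⟨j, rfl⟩ : ∃ j, ℓ = j + 1 := ⟨ℓ-1, by omega⟩
    simp only [Bn, if_neg h0, Nat.add_sub_cancel]
    have h1 : (m + 1 + 2*(j+1)).choose (j+1)
        = (m + 2*(j+1)).choose j + (m + 2*(j+1)).choose (j+1) := by
      rw [show m + 1 + 2*(j+1) = (m + 2*(j+1)) + 1 by ring]
      exact Nat.choose_succ_succ _ _
    have h2 : (m + 1 + 2*(j+1)).choose j
        = (if j = 0 then 0 else (m + 2*(j+1)).choose (j-1)) + (m + 2*(j+1)).choose j := by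
      rcases eq_or_ne j 0 with hj | hj
      · simp [hj]
      · obtain ⟨i, rfl⟩ : ∃ i, j = i + 1 := ⟨j-1, by omega⟩
        rw [if_neg hj, Nat.add_sub_cancel,
          show m + 1 + 2*(i+1+1) = (m + 2*(i+1+1)) + 1 by ring]
        exact Nat.choose_succ_succ _ _
    have m1 : (m + 2*(j+1)).choose j ≤ (m + 2*(j+1)).choose (j+1) := by
      have := choose_pred_le (m + 2*(j+1)) (j+1) (by omega) (by omega)
      rwa [Nat.add_sub_cancel] at this
    have m2 : (if j = 0 then 0 else (m + 2*(j+1)).choose (j-1)) ≤ (m + 2*(j+1)).choose j := by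
      rcases eq_or_ne j 0 with hj | hj
      · simp [hj]
      · rw [if_neg hj]
        exact choose_pred_le (m + 2*(j+1)) j (by omega) hj
    omega

/-- Boundary ballot identity. -/
lemma Bn_boundary (j : ℕ) : Bn (2*j+2) (j+1) = Bn (2*j+1) j := by
  simp only [Bn, if_neg (Nat.succ_ne_zero j), Nat.add_sub_cancel]
  have h1 : (2*j+2).choose (j+1) = (2*j+1).choose j + (2*j+1).choose (j+1) := by
    rw [show 2*j+2 = (2*j+1)+1 by ring]
    exact Nat.choose_succ_succ _ _
  have hs : (2*j+1).choose (j+1) = (2*j+1).choose j := by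
    have := Nat.choose_symm (n := 2*j+1) (k := j) (by omega)
    rw [show 2*j+1-j = j+1 by omega] at this
    omega
  have h2 : (2*j+2).choose j
      = (if j = 0 then 0 else (2*j+1).choose (j-1)) + (2*j+1).choose j := by
    rcases eq_or_ne j 0 with hj | hj
    · simp [hj]
    · obtain ⟨i, rfl⟩ : ∃ i, j = i + 1 := ⟨j-1, by omega⟩
      rw [if_neg hj, Nat.add_sub_cancel, show 2*(i+1)+2 = (2*(i+1)+1)+1 by ring]
      have := Nat.choose_succ_succ (2*(i+1)+1) i
      convert this using 2
  have m2 : (if j = 0 then 0 else (2*j+1).choose (j-1)) ≤ (2*j+1).choose j := by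
    rcases eq_or_ne j 0 with hj | hj
    · simp [hj]
    · rw [if_neg hj]
      exact choose_pred_le (2*j+1) j (by omega) hj
  omega

lemma Fm_eq (k r N : ℕ) (h : k+1 ≤ N) :
    Fm k r = ∑ ℓ ∈ Finset.range N, k.choose (r + 2*ℓ) * Bn (r + 2*ℓ) ℓ := by
  refine Finset.sum_subset (Finset.range_subset_range.2 h) (fun ℓ _ hℓ => ?_)
  rw [Finset.mem_range, not_lt] at hℓ
  rw [Nat.choose_eq_zero_of_lt (by omega), zero_mul]

lemma Fm_zero (r : ℕ) : Fm 0 r = if r = 0 then 1 else 0 := by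
  rcases eq_or_ne r 0 with h | h
  · simp [Fm, h, Bn]
  · rw [if_neg h]
    unfold Fm
    rw [Finset.sum_range_one, Nat.choose_eq_zero_of_lt (by omega), zero_mul]

lemma Fm_succ_succ (k m : ℕ) : Fm (k+1) (m+1) = Fm k m + Fm k (m+1) + Fm k (m+2) := by
  have key : ∀ ℓ : ℕ, (k+1).choose (m+1 + 2*ℓ) * Bn (m+1 + 2*ℓ) ℓ
      = k.choose (m + 2*ℓ) * Bn (m + 2*ℓ) ℓ
        + k.choose (m+1 + 2*ℓ) * Bn (m+1 + 2*ℓ) ℓ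
        + k.choose (m + 2*ℓ) * (if ℓ = 0 then 0 else Bn (m + 2*ℓ) (ℓ-1)) := by
    intro ℓ
    have hp : (k+1).choose (m+1 + 2*ℓ) = k.choose (m + 2*ℓ) + k.choose (m+1 + 2*ℓ) := by
      rw [show m+1+2*ℓ = (m + 2*ℓ) + 1 by ring]
      exact Nat.choose_succ_succ _ _
    rw [hp, add_mul, Bn_pascal m ℓ, mul_add]
    ring
  have hsum := Finset.sum_congr (rfl : Finset.range (k+2) = Finset.range (k+2))
    (fun ℓ _ => key ℓ)
  rw [Fm_eq (k+1) (m+1) (k+2) le_rfl, hsum,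
    Finset.sum_add_distrib, Finset.sum_add_distrib,
    ← Fm_eq k m (k+2) (by omega), ← Fm_eq k (m+1) (k+2) (by omega)]
  congr 1
  rw [Finset.sum_range_succ']
  simp only [Nat.add_sub_cancel, Nat.succ_ne_zero, if_false, if_true, eq_self_iff_true, mul_zero, add_zero]
  rw [Fm_eq k (m+2) (k+1) le_rfl]
  apply Finset.sum_congr rfl
  intro j hj
  rw [show m + 2*(j+1) = m + 2 + 2*j by ring]

lemma Fm_succ_zero (k : ℕ) : Fm (k+1) 0 = Fm k 0 + Fm k 1 := by
  have key : ∀ j : ℕ, (k+1).choose (0 + 2*(j+1)) * Bn (0 + 2*(j+1)) (j+1)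
      = k.choose (0 + 2*(j+1)) * Bn (0 + 2*(j+1)) (j+1)
        + k.choose (1 + 2*j) * Bn (1 + 2*j) j := by
    intro j
    rw [show (0 + 2*(j+1)) = (1 + 2*j) + 1 by ring]
    rw [Nat.choose_succ_succ k (1 + 2*j)]
    have hb : Bn ((1 + 2*j) + 1) (j+1) = Bn (1 + 2*j) j := by
      have := Bn_boundary j
      rwa [show 2*j+2 = (1+2*j)+1 by ring, show 2*j+1 = 1+2*j by ring] at this
    rw [hb, add_mul]
    ring
  have L : Fm (k+1) 0 = (∑ j ∈ Finset.range (k+1),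
      (k+1).choose (0 + 2*(j+1)) * Bn (0 + 2*(j+1)) (j+1)) + 1 := by
    unfold Fm
    rw [Finset.sum_range_succ']
    simp [Bn]
  have e2 : Fm k 0 = (∑ j ∈ Finset.range (k+1),
      k.choose (0 + 2*(j+1)) * Bn (0 + 2*(j+1)) (j+1)) + 1 := by
    rw [Fm_eq k 0 (k+2) (by omega), Finset.sum_range_succ']
    simp [Bn]
  have e3 : Fm k 1 = ∑ j ∈ Finset.range (k+1), k.choose (1 + 2*j) * Bn (1 + 2*j) j := rfl
  have hsum := Finset.sum_congr (rfl : Finset.range (k+1) = Finset.range (k+1))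
    (fun j _ => key j)
  rw [L, hsum, Finset.sum_add_distrib, e2, e3]
  omega

lemma Mz_neg (k : ℕ) (r : ℤ) (hr : r < 0) : Mz k r = 0 := by
  cases k with
  | zero => rw [Mz, if_neg (by omega)]
  | succ k => rw [Mz, if_pos hr]

lemma Mz_eq_Fm (k : ℕ) : ∀ r : ℕ, Mz k (r : ℤ) = Fm k r := by
  induction k with
  | zero =>
    intro r
    rw [Mz, Fm_zero]
    rcases eq_or_ne r 0 with h | h
    · simp [h]
    · rw [if_neg h, if_neg (by exact_mod_cast h)]
  | succ k ih =>
    intro r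
    rw [Mz_succ k r (by positivity)]
    cases r with
    | zero =>
      rw [show ((0:ℕ):ℤ) - 1 = (-1 : ℤ) by norm_num, Mz_neg k (-1) (by norm_num),
        show ((0:ℕ):ℤ) = ((0:ℕ):ℤ) from rfl]
      rw [show ((0:ℕ):ℤ) + 1 = ((1:ℕ):ℤ) by norm_num]
      rw [ih 0, ih 1, Fm_succ_zero]
      omega
    | succ m =>
      rw [show ((m+1:ℕ):ℤ) - 1 = ((m:ℕ):ℤ) by push_cast; ring,
        show ((m+1:ℕ):ℤ) + 1 = ((m+2:ℕ):ℤ) by push_cast; ring]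
      rw [ih m, ih (m+1), ih (m+2), Fm_succ_succ]

theorem motzkin_eq_sum_choose_temperleyLieb (k r : ℕ) (h : r ≤ k) :
    motzkinCount k r =
      ∑ ℓ ∈ Finset.range ((k - r) / 2 + 1),
        Nat.choose k (r + 2 * ℓ) *
          (Nat.choose (r + 2 * ℓ) ℓ -
            if ℓ = 0 then 0 else Nat.choose (r + 2 * ℓ) (ℓ - 1)) := by
  rw [motzkinCount_eq_Mz k r, Mz_eq_Fm k r]
  have hBn : ∀ ℓ : ℕ, Nat.choose (r + 2 * ℓ) ℓ -
      (if ℓ = 0 then 0 else Nat.choose (r + 2 * ℓ) (ℓ - 1)) = Bn (r + 2*ℓ) ℓ := fun ℓ => rfl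
  rw [Finset.sum_congr rfl (fun ℓ _ => by rw [hBn ℓ])]
  rw [Fm_eq k r (k+1) le_rfl]
  symm
  refine Finset.sum_subset ?_ ?_
  · intro x hx
    rw [Finset.mem_range] at *
    omega
  · intro ℓ _ hℓ
    rw [Finset.mem_range, not_lt] at hℓ
    rw [Nat.choose_eq_zero_of_lt (by omega), zero_mul]
end

section
/- For all natural numbers n and j, the number of noncrossing partial matchings on the linearly ordered set {1, …, n} having exactly j edges equals \binom{n}{2j} \cdot C_j, where C_j is the j-th Catalan number. -/
/-- A noncrossing partial matching on the linearly ordered set `Fin n`: a finite set of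
edges `(i, j)` with `i < j`, pairwise disjoint as two-element sets, with no two edges
`(i, j)`, `(i', j')` satisfying `i < i' < j < j'`. -/
def IsNoncrossingMatching {n : ℕ} (E : Finset (Fin n × Fin n)) : Prop :=
  (∀ e ∈ E, e.1 < e.2) ∧
  (∀ e ∈ E, ∀ f ∈ E, e ≠ f →
    e.1 ≠ f.1 ∧ e.1 ≠ f.2 ∧ e.2 ≠ f.1 ∧ e.2 ≠ f.2) ∧
  (∀ e ∈ E, ∀ f ∈ E, ¬ (e.1 < f.1 ∧ f.1 < e.2 ∧ e.2 < f.2))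

instance {n : ℕ} (E : Finset (Fin n × Fin n)) : Decidable (IsNoncrossingMatching E) := by
  unfold IsNoncrossingMatching
  refine @instDecidableAnd _ _ ?_ (@instDecidableAnd _ _ ?_ ?_) <;> infer_instance

namespace NCMAux

open Finset

/-- The support (set of matched points) of a set of edges over `ℕ`. -/
def supp (E : Finset (ℕ × ℕ)) : Finset ℕ := E.biUnion fun e => {e.1, e.2}

/-- Noncrossing partial matching, over `ℕ`. -/
def NCM (E : Finset (ℕ × ℕ)) : Prop :=
  (∀ e ∈ E, e.1 < e.2) ∧
  (∀ e ∈ E, ∀ f ∈ E, e ≠ f →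
    e.1 ≠ f.1 ∧ e.1 ≠ f.2 ∧ e.2 ≠ f.1 ∧ e.2 ≠ f.2) ∧
  (∀ e ∈ E, ∀ f ∈ E, ¬ (e.1 < f.1 ∧ f.1 < e.2 ∧ e.2 < f.2))

instance : DecidablePred NCM := fun E => by
  unfold NCM
  refine @instDecidableAnd _ _ ?_ (@instDecidableAnd _ _ ?_ ?_) <;> infer_instance

/-- Relabel the points of a matching. -/
def mapE (f : ℕ → ℕ) (E : Finset (ℕ × ℕ)) : Finset (ℕ × ℕ) := E.image (Prod.map f f)

/-- Noncrossing perfect matchings on the finite set `S ⊆ ℕ`. -/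
def PM (S : Finset ℕ) : Finset (Finset (ℕ × ℕ)) :=
  ((S ×ˢ S).powerset).filter (fun E => NCM E ∧ supp E = S)

lemma mem_supp {x : ℕ} {E : Finset (ℕ × ℕ)} :
    x ∈ supp E ↔ ∃ e ∈ E, x = e.1 ∨ x = e.2 := by
  simp [supp]

lemma fst_mem_supp {e : ℕ × ℕ} {E : Finset (ℕ × ℕ)} (he : e ∈ E) : e.1 ∈ supp E :=
  mem_supp.2 ⟨e, he, Or.inl rfl⟩

lemma snd_mem_supp {e : ℕ × ℕ} {E : Finset (ℕ × ℕ)} (he : e ∈ E) : e.2 ∈ supp E :=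
  mem_supp.2 ⟨e, he, Or.inr rfl⟩

lemma subset_product_iff {E : Finset (ℕ × ℕ)} {S : Finset ℕ} :
    E ⊆ S ×ˢ S ↔ supp E ⊆ S := by
  constructor
  · intro h x hx
    rcases mem_supp.1 hx with ⟨e, he, rfl | rfl⟩
    · exact (mem_product.1 (h he)).1
    · exact (mem_product.1 (h he)).2
  · intro h e he
    exact mem_product.2 ⟨h (fst_mem_supp he), h (snd_mem_supp he)⟩

lemma mem_PM {E : Finset (ℕ × ℕ)} {S : Finset ℕ} :
    E ∈ PM S ↔ NCM E ∧ supp E = S := by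
  constructor
  · intro h
    exact (mem_filter.1 h).2
  · intro h
    refine mem_filter.2 ⟨mem_powerset.2 (subset_product_iff.2 h.2.le), h⟩

lemma NCM_subset {E F : Finset (ℕ × ℕ)} (hEF : E ⊆ F) (h : NCM F) : NCM E :=
  ⟨fun e he => h.1 e (hEF he),
   fun e he f hf hef => h.2.1 e (hEF he) f (hEF hf) hef,
   fun e he f hf => h.2.2 e (hEF he) f (hEF hf)⟩

lemma mem_mapE {f : ℕ → ℕ} {E : Finset (ℕ × ℕ)} {e : ℕ × ℕ} :
    e ∈ mapE f E ↔ ∃ e' ∈ E, Prod.map f f e' = e := by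
  simp [mapE]

lemma supp_mapE (f : ℕ → ℕ) (E : Finset (ℕ × ℕ)) :
    supp (mapE f E) = (supp E).image f := by
  ext x
  constructor
  · intro hx
    rcases mem_supp.1 hx with ⟨e, he, rfl | rfl⟩ <;>
      rcases mem_mapE.1 he with ⟨e', he', rfl⟩
    · exact Finset.mem_image.2 ⟨e'.1, fst_mem_supp he', rfl⟩
    · exact Finset.mem_image.2 ⟨e'.2, snd_mem_supp he', rfl⟩
  · intro hx
    rcases Finset.mem_image.1 hx with ⟨y, hy, rfl⟩
    rcases mem_supp.1 hy with ⟨e, he, rfl | rfl⟩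
    · exact mem_supp.2 ⟨Prod.map f f e, mem_mapE.2 ⟨e, he, rfl⟩, Or.inl rfl⟩
    · exact mem_supp.2 ⟨Prod.map f f e, mem_mapE.2 ⟨e, he, rfl⟩, Or.inr rfl⟩

lemma mapE_id_of {f : ℕ → ℕ} {E : Finset (ℕ × ℕ)} (h : ∀ x ∈ supp E, f x = x) :
    mapE f E = E := by
  have : ∀ e ∈ E, Prod.map f f e = e := by
    intro e he
    have h1 := h e.1 (fst_mem_supp he)
    have h2 := h e.2 (snd_mem_supp he)
    simp [Prod.map, h1, h2]
  rw [mapE, Finset.image_congr (fun e he => this e (by simpa using he)), Finset.image_id']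

lemma mapE_comp (f g : ℕ → ℕ) (E : Finset (ℕ × ℕ)) :
    mapE f (mapE g E) = mapE (f ∘ g) E := by
  simp only [mapE, Finset.image_image]
  rfl

/-- Relabelling along a map that is strictly monotone on the support preserves `PM`. -/
lemma mapE_mem_PM {f : ℕ → ℕ} {T S : Finset ℕ}
    (hf : ∀ a ∈ T, ∀ b ∈ T, a < b ↔ f a < f b) (hS : T.image f = S)
    {E : Finset (ℕ × ℕ)} (hE : E ∈ PM T) : mapE f E ∈ PM S := by
  obtain ⟨hncm, hsupp⟩ := mem_PM.1 hE
  have hmemT : ∀ x ∈ supp E, x ∈ T := fun x hx => hsupp ▸ hx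
  have hinj : ∀ a ∈ T, ∀ b ∈ T, f a = f b → a = b := by
    intro a ha b hb hab
    rcases lt_trichotomy a b with h | h | h
    · exact absurd ((hf a ha b hb).1 h) (by omega)
    · exact h
    · exact absurd ((hf b hb a ha).1 h) (by omega)
  refine mem_PM.2 ⟨?_, by rw [supp_mapE, hsupp, hS]⟩
  have hmem : ∀ e ∈ mapE f E, ∃ e' ∈ E, e = Prod.map f f e' := by
    intro e he
    rcases Finset.mem_image.1 he with ⟨e', he', rfl⟩
    exact ⟨e', he', rfl⟩
  refine ⟨?_, ?_, ?_⟩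
  · rintro e he
    obtain ⟨e', he', rfl⟩ := hmem e he
    exact (hf _ (hmemT _ (fst_mem_supp he')) _ (hmemT _ (snd_mem_supp he'))).1
      (hncm.1 e' he')
  · rintro e he g hg hne
    obtain ⟨e', he', rfl⟩ := hmem e he
    obtain ⟨g', hg', rfl⟩ := hmem g hg
    have hne' : e' ≠ g' := by rintro rfl; exact hne rfl
    obtain ⟨h1, h2, h3, h4⟩ := hncm.2.1 e' he' g' hg' hne'
    have m1 := hmemT _ (fst_mem_supp he')
    have m2 := hmemT _ (snd_mem_supp he')
    have m3 := hmemT _ (fst_mem_supp hg')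
    have m4 := hmemT _ (snd_mem_supp hg')
    exact ⟨fun h => h1 (hinj _ m1 _ m3 h), fun h => h2 (hinj _ m1 _ m4 h),
      fun h => h3 (hinj _ m2 _ m3 h), fun h => h4 (hinj _ m2 _ m4 h)⟩
  · rintro e he g hg ⟨c1, c2, c3⟩
    obtain ⟨e', he', rfl⟩ := hmem e he
    obtain ⟨g', hg', rfl⟩ := hmem g hg
    have m1 := hmemT _ (fst_mem_supp he')
    have m2 := hmemT _ (snd_mem_supp he')
    have m3 := hmemT _ (fst_mem_supp hg')
    have m4 := hmemT _ (snd_mem_supp hg')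
    exact hncm.2.2 e' he' g' hg'
      ⟨(hf _ m1 _ m3).2 c1, (hf _ m3 _ m2).2 c2, (hf _ m2 _ m4).2 c3⟩

/-- Relabelling along a strictly monotone bijection between `T` and `S = f '' T`
gives a cardinality-preserving bijection between `PM T` and `PM S`. -/
lemma card_PM_relabel {f : ℕ → ℕ} {T S : Finset ℕ}
    (hf : ∀ a ∈ T, ∀ b ∈ T, a < b ↔ f a < f b) (hS : T.image f = S) :
    (PM S).card = (PM T).card := by
  classical
  -- build an inverse g of f on S
  set g : ℕ → ℕ := fun y => if h : ∃ a ∈ T, f a = y then h.choose else 0 with hg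
  have hinj : ∀ a ∈ T, ∀ b ∈ T, f a = f b → a = b := by
    intro a ha b hb hab
    rcases lt_trichotomy a b with h | h | h
    · exact absurd ((hf a ha b hb).1 h) (by omega)
    · exact h
    · exact absurd ((hf b hb a ha).1 h) (by omega)
  have hgf : ∀ a ∈ T, g (f a) = a := by
    intro a ha
    have hex : ∃ b ∈ T, f b = f a := ⟨a, ha, rfl⟩
    have := hex.choose_spec
    simp only [hg, dif_pos hex]
    exact hinj _ this.1 _ ha this.2
  have hgmemT : ∀ y ∈ S, g y ∈ T := by
    intro y hy
    rw [← hS] at hy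
    rcases Finset.mem_image.1 hy with ⟨a, ha, rfl⟩
    rw [hgf a ha]; exact ha
  have hfg : ∀ y ∈ S, f (g y) = y := by
    intro y hy
    rw [← hS] at hy
    rcases Finset.mem_image.1 hy with ⟨a, ha, rfl⟩
    rw [hgf a ha]
  have hgmono : ∀ a ∈ S, ∀ b ∈ S, a < b ↔ g a < g b := by
    intro a ha b hb
    have h1 := hfg a ha
    have h2 := hfg b hb
    have h3 := hgmemT a ha
    have h4 := hgmemT b hb
    constructor
    · intro h
      by_contra hc
      push_neg at hc
      rcases Nat.lt_or_ge (g b) (g a) with h5 | h5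
      · have := (hf _ h4 _ h3).1 h5
        omega
      · have : g a = g b := by omega
        have : f (g a) = f (g b) := by rw [this]
        omega
    · intro h
      have := (hf _ h3 _ h4).1 h
      omega
  have hgS : S.image g = T := by
    rw [← hS, Finset.image_image]
    apply Finset.image_congr (g := id) (fun a ha => hgf a (by simpa using ha)) |>.trans
    exact Finset.image_id
  refine Finset.card_bij' (fun E _ => mapE g E) (fun E _ => mapE f E) ?_ ?_ ?_ ?_
  · intro E hE
    exact mapE_mem_PM hgmono hgS hE
  · intro E hE
    exact mapE_mem_PM hf hS hE
  · intro E hE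
    obtain ⟨_, hsupp⟩ := mem_PM.1 hE
    show mapE f (mapE g E) = E
    rw [mapE_comp]
    exact mapE_id_of (fun x hx => hfg x (hsupp ▸ hx))
  · intro E hE
    obtain ⟨_, hsupp⟩ := mem_PM.1 hE
    show mapE g (mapE f E) = E
    rw [mapE_comp]
    exact mapE_id_of (fun x hx => hgf x (hsupp ▸ hx))

lemma card_supp {E : Finset (ℕ × ℕ)} (h : NCM E) : (supp E).card = 2 * E.card := by
  rw [supp, Finset.card_biUnion]
  · rw [Finset.sum_congr rfl (g := fun _ => 2), Finset.sum_const, smul_eq_mul, mul_comm]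
    intro e he
    have := h.1 e he
    rw [Finset.card_insert_of_notMem (by simp; omega), Finset.card_singleton]
  · intro e he f hf hef
    obtain ⟨h1, h2, h3, h4⟩ := h.2.1 e he f hf hef
    simp only [Finset.disjoint_left, Finset.mem_insert, Finset.mem_singleton]
    rintro x (rfl | rfl) (h5 | h5) <;> omega

lemma PM_empty : PM (∅ : Finset ℕ) = {∅} := by
  ext E
  simp only [mem_PM, Finset.mem_singleton]
  constructor
  · rintro ⟨_, hsupp⟩
    by_contra h
    obtain ⟨e, he⟩ := Finset.nonempty_iff_ne_empty.2 h
    have := fst_mem_supp he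
    rw [hsupp] at this
    simp at this
  · rintro rfl
    refine ⟨⟨?_, ?_, ?_⟩, ?_⟩ <;> simp [supp]

/-- The cardinality of the set of noncrossing perfect matchings on `2*m` points. -/
def D (m : ℕ) : ℕ := (PM (Finset.range (2 * m))).card

lemma D_zero : D 0 = 1 := by
  simp [D, PM_empty]

lemma card_PM_of_card {S : Finset ℕ} {j : ℕ} (hS : S.card = 2 * j) :
    (PM S).card = D j := by
  classical
  set f : ℕ → ℕ := fun i => if h : i < 2 * j then (S.orderEmbOfFin hS ⟨i, h⟩ : ℕ) else 0
    with hfdef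
  have hf : ∀ a ∈ Finset.range (2 * j), ∀ b ∈ Finset.range (2 * j), a < b ↔ f a < f b := by
    intro a ha b hb
    rw [Finset.mem_range] at ha hb
    simp only [hfdef, dif_pos ha, dif_pos hb]
    have := (S.orderEmbOfFin hS).lt_iff_lt (a := ⟨a, ha⟩) (b := ⟨b, hb⟩)
    rw [Fin.mk_lt_mk] at this
    exact this.symm
  have himg : (Finset.range (2 * j)).image f = S := by
    apply Finset.eq_of_subset_of_card_le
    · intro x hx
      rcases Finset.mem_image.1 hx with ⟨a, ha, rfl⟩
      rw [Finset.mem_range] at ha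
      simp only [hfdef, dif_pos ha]
      exact S.orderEmbOfFin_mem hS _
    · rw [hS]
      have : ((Finset.range (2 * j)).image f).card = (Finset.range (2 * j)).card := by
        apply Finset.card_image_of_injOn
        intro a ha b hb hab
        rcases lt_trichotomy a b with h | h | h
        · exact absurd ((hf a ha b hb).1 h) (by omega)
        · exact h
        · exact absurd ((hf b hb a ha).1 h) (by omega)
      rw [this, Finset.card_range]
  rw [D, card_PM_relabel hf himg]

/-- Gluing: edge `(0,k)`, a matching inside `(0,k)` and a matching above `k`. -/
lemma NCM_glue {k : ℕ} (hk : 0 < k) {A B : Finset (ℕ × ℕ)}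
    (hA : NCM A) (hB : NCM B)
    (hsA : ∀ x ∈ supp A, 0 < x ∧ x < k) (hsB : ∀ x ∈ supp B, k < x) :
    NCM (insert (0, k) (A ∪ B)) := by
  have hmem : ∀ e ∈ insert ((0 : ℕ), k) (A ∪ B), e = (0, k) ∨ e ∈ A ∨ e ∈ B := by
    intro e he
    rcases Finset.mem_insert.1 he with h | h
    · exact Or.inl h
    · rcases Finset.mem_union.1 h with h | h
      · exact Or.inr (Or.inl h)
      · exact Or.inr (Or.inr h)
  have boundsA : ∀ e ∈ A, 0 < e.1 ∧ e.1 < k ∧ 0 < e.2 ∧ e.2 < k := by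
    intro e he
    obtain ⟨h1, h2⟩ := hsA _ (fst_mem_supp he)
    obtain ⟨h3, h4⟩ := hsA _ (snd_mem_supp he)
    exact ⟨h1, h2, h3, h4⟩
  have boundsB : ∀ e ∈ B, k < e.1 ∧ k < e.2 := by
    intro e he
    exact ⟨hsB _ (fst_mem_supp he), hsB _ (snd_mem_supp he)⟩
  refine ⟨?_, ?_, ?_⟩
  · intro e he
    rcases hmem e he with rfl | h | h
    · exact hk
    · exact hA.1 e h
    · exact hB.1 e h
  · intro e he f hf hef
    rcases hmem e he with rfl | he' | he' <;> rcases hmem f hf with rfl | hf' | hf'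
    · exact absurd rfl hef
    · have := boundsA f hf'; simp only [ne_eq]; omega
    · have := boundsB f hf'; simp only [ne_eq]; omega
    · have := boundsA e he'; simp only [ne_eq]; omega
    · exact hA.2.1 e he' f hf' hef
    · have h1 := boundsA e he'; have h2 := boundsB f hf'; simp only [ne_eq]; omega
    · have := boundsB e he'; simp only [ne_eq]; omega
    · have h1 := boundsB e he'; have h2 := boundsA f hf'; simp only [ne_eq]; omega
    · exact hB.2.1 e he' f hf' hef
  · intro e he f hf
    rcases hmem e he with rfl | he' | he' <;> rcases hmem f hf with rfl | hf' | hf'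
    · omega
    · have := boundsA f hf'; omega
    · have := boundsB f hf'; omega
    · have := boundsA e he'; omega
    · exact hA.2.2 e he' f hf'
    · have h1 := boundsA e he'; have h2 := boundsB f hf'; omega
    · have := boundsB e he'; omega
    · have h1 := boundsB e he'; have h2 := boundsA f hf'; omega
    · exact hB.2.2 e he' f hf'

lemma supp_insert (e : ℕ × ℕ) (E : Finset (ℕ × ℕ)) :
    supp (insert e E) = insert e.1 (insert e.2 (supp E)) := by
  ext x
  simp only [supp, Finset.mem_biUnion, Finset.mem_insert, Finset.mem_singleton]
  constructor
  · rintro ⟨f, (rfl | hf), h⟩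
    · tauto
    · exact Or.inr (Or.inr ⟨f, hf, h⟩)
  · rintro (rfl | rfl | ⟨f, hf, h⟩)
    · exact ⟨e, Or.inl rfl, Or.inl rfl⟩
    · exact ⟨e, Or.inl rfl, Or.inr rfl⟩
    · exact ⟨f, Or.inr hf, h⟩

lemma supp_union (E F : Finset (ℕ × ℕ)) : supp (E ∪ F) = supp E ∪ supp F := by
  ext x
  simp only [supp, Finset.mem_biUnion, Finset.mem_union]
  constructor
  · rintro ⟨f, (hf | hf), h⟩
    · exact Or.inl ⟨f, hf, h⟩
    · exact Or.inr ⟨f, hf, h⟩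
  · rintro (⟨f, hf, h⟩ | ⟨f, hf, h⟩)
    · exact ⟨f, Or.inl hf, h⟩
    · exact ⟨f, Or.inr hf, h⟩

/-- Glue an inside matching (shifted by 1), the edge `(0, 2i+1)`, and an outside
matching (shifted by `2i+2`). -/
def combine (i : ℕ) (p : Finset (ℕ × ℕ) × Finset (ℕ × ℕ)) : Finset (ℕ × ℕ) :=
  insert (0, 2 * i + 1) (mapE (· + 1) p.1 ∪ mapE (· + (2 * i + 2)) p.2)

lemma combine_mem {m i : ℕ} (him : i ≤ m) {A B : Finset (ℕ × ℕ)}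
    (hA : A ∈ PM (Finset.range (2 * i))) (hB : B ∈ PM (Finset.range (2 * (m - i)))) :
    combine i (A, B) ∈ PM (Finset.range (2 * m + 2)) := by
  have hA' : mapE (· + 1) A ∈ PM ((Finset.range (2 * i)).image (· + 1)) :=
    mapE_mem_PM (by intro a _ b _; omega) rfl hA
  have hB' : mapE (· + (2 * i + 2)) B ∈ PM ((Finset.range (2 * (m - i))).image (· + (2 * i + 2))) :=
    mapE_mem_PM (by intro a _ b _; omega) rfl hB
  obtain ⟨hA'ncm, hA'supp⟩ := mem_PM.1 hA'
  obtain ⟨hB'ncm, hB'supp⟩ := mem_PM.1 hB'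
  have hsA : ∀ x ∈ supp (mapE (· + 1) A), 0 < x ∧ x < 2 * i + 1 := by
    intro x hx
    rw [hA'supp] at hx
    rcases Finset.mem_image.1 hx with ⟨y, hy, rfl⟩
    rw [Finset.mem_range] at hy
    omega
  have hsB : ∀ x ∈ supp (mapE (· + (2 * i + 2)) B), 2 * i + 1 < x ∧ x < 2 * m + 2 := by
    intro x hx
    rw [hB'supp] at hx
    rcases Finset.mem_image.1 hx with ⟨y, hy, rfl⟩
    rw [Finset.mem_range] at hy
    omega
  refine mem_PM.2 ⟨?_, ?_⟩
  · exact NCM_glue (by omega) hA'ncm hB'ncm hsA (fun x hx => (hsB x hx).1)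
  · show supp (insert (0, 2 * i + 1) (mapE (· + 1) A ∪ mapE (· + (2 * i + 2)) B)) = _
    rw [supp_insert, supp_union]
    ext x
    simp only [Finset.mem_insert, Finset.mem_union, Finset.mem_range]
    constructor
    · rintro (rfl | rfl | hx | hx)
      · omega
      · omega
      · exact (hsA x hx).2.trans (by omega)
      · exact (hsB x hx).2
    · intro hx
      rcases Nat.eq_zero_or_pos x with rfl | hx0
      · exact Or.inl rfl
      rcases Nat.lt_or_ge x (2 * i + 1) with h2 | h2
      · refine Or.inr (Or.inr (Or.inl ?_))
        rw [hA'supp]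
        exact Finset.mem_image.2 ⟨x - 1, Finset.mem_range.2 (by omega), by omega⟩
      rcases Nat.eq_or_lt_of_le h2 with rfl | h3
      · exact Or.inr (Or.inl rfl)
      · refine Or.inr (Or.inr (Or.inr ?_))
        rw [hB'supp]
        exact Finset.mem_image.2 ⟨x - (2 * i + 2), Finset.mem_range.2 (by omega), by omega⟩

lemma split_combine {i mi : ℕ} {A B : Finset (ℕ × ℕ)}
    (hA : A ∈ PM (Finset.range (2 * i))) (hB : B ∈ PM (Finset.range (2 * mi))) :
    mapE (· - 1) ((combine i (A, B)).filter (fun e => e.2 < 2 * i + 1)) = A ∧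
    mapE (· - (2 * i + 2)) ((combine i (A, B)).filter (fun e => 2 * i + 1 < e.1)) = B := by
  obtain ⟨hAncm, hAsupp⟩ := mem_PM.1 hA
  obtain ⟨hBncm, hBsupp⟩ := mem_PM.1 hB
  have boundA : ∀ e ∈ mapE (· + 1) A, 0 < e.1 ∧ e.1 ≤ 2 * i ∧ 0 < e.2 ∧ e.2 ≤ 2 * i := by
    intro e he
    rcases mem_mapE.1 he with ⟨e', he', rfl⟩
    have h1 : e'.1 ∈ supp A := fst_mem_supp he'
    have h2 : e'.2 ∈ supp A := snd_mem_supp he'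
    rw [hAsupp, Finset.mem_range] at h1 h2
    show 0 < e'.1 + 1 ∧ e'.1 + 1 ≤ 2 * i ∧ 0 < e'.2 + 1 ∧ e'.2 + 1 ≤ 2 * i
    omega
  have boundB : ∀ e ∈ mapE (· + (2 * i + 2)) B, 2 * i + 2 ≤ e.1 ∧ 2 * i + 2 ≤ e.2 := by
    intro e he
    rcases mem_mapE.1 he with ⟨e', he', rfl⟩
    show 2 * i + 2 ≤ e'.1 + (2 * i + 2) ∧ 2 * i + 2 ≤ e'.2 + (2 * i + 2)
    omega
  constructor
  · have hfil : (combine i (A, B)).filter (fun e => e.2 < 2 * i + 1) = mapE (· + 1) A := by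
      show (insert ((0 : ℕ), 2 * i + 1) (mapE (· + 1) A ∪ mapE (· + (2 * i + 2)) B)).filter
        (fun e => e.2 < 2 * i + 1) = mapE (· + 1) A
      rw [Finset.filter_insert, if_neg (by simp), Finset.filter_union,
        Finset.filter_true_of_mem (fun e he => by have := boundA e he; omega),
        Finset.filter_false_of_mem (fun e he => by have := boundB e he; omega),
        Finset.union_empty]
    rw [hfil, mapE_comp]
    exact mapE_id_of (fun x _ => by simp)
  · have hfil : (combine i (A, B)).filter (fun e => 2 * i + 1 < e.1) = mapE (· + (2 * i + 2)) B := by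
      show (insert ((0 : ℕ), 2 * i + 1) (mapE (· + 1) A ∪ mapE (· + (2 * i + 2)) B)).filter
        (fun e => 2 * i + 1 < e.1) = mapE (· + (2 * i + 2)) B
      rw [Finset.filter_insert, if_neg (by simp), Finset.filter_union,
        Finset.filter_false_of_mem (fun e he => by have := boundA e he; omega),
        Finset.filter_true_of_mem (fun e he => by have := boundB e he; omega),
        Finset.empty_union]
    rw [hfil, mapE_comp]
    exact mapE_id_of (fun x _ => by simp)

lemma partner_eq {E : Finset (ℕ × ℕ)} (h : NCM E) {a b : ℕ}
    (ha : (0, a) ∈ E) (hb : (0, b) ∈ E) : a = b := by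
  by_contra hne
  have hab : ((0 : ℕ), a) ≠ (0, b) := by simp [hne]
  exact (h.2.1 _ ha _ hb hab).1 rfl

lemma PM_decomp {m : ℕ} {E : Finset (ℕ × ℕ)} (hE : E ∈ PM (Finset.range (2 * m + 2))) :
    ∃ i ≤ m, ∃ A ∈ PM (Finset.range (2 * i)), ∃ B ∈ PM (Finset.range (2 * (m - i))),
      combine i (A, B) = E := by
  classical
  obtain ⟨hncm, hsupp⟩ := mem_PM.1 hE
  have h0 : (0 : ℕ) ∈ supp E := by rw [hsupp, Finset.mem_range]; omega
  obtain ⟨e₀, he₀, h0e⟩ := mem_supp.1 h0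
  have he₀1 : e₀.1 = 0 := by
    have := hncm.1 e₀ he₀
    omega
  have h0k : ((0 : ℕ), e₀.2) ∈ E := by
    have : e₀ = (0, e₀.2) := by
      rw [Prod.ext_iff]
      exact ⟨he₀1, rfl⟩
    rwa [← this]
  set k := e₀.2 with hk
  have hkpos : 0 < k := hncm.1 _ h0k
  have hklt : k < 2 * m + 2 := by
    have := snd_mem_supp h0k
    rwa [hsupp, Finset.mem_range] at this
  have dich : ∀ e ∈ E, e ≠ (0, k) → (0 < e.1 ∧ e.2 < k) ∨ (k < e.1 ∧ k < e.2) := by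
    intro e he hne
    obtain ⟨d1, d2, d3, d4⟩ := hncm.2.1 e he _ h0k hne
    have hlt := hncm.1 e he
    have hnc : ¬ (0 < e.1 ∧ e.1 < k ∧ k < e.2) := hncm.2.2 _ h0k e he
    have d1' : e.1 ≠ 0 := d1
    have d2' : e.1 ≠ k := d2
    have d3' : e.2 ≠ 0 := d3
    have d4' : e.2 ≠ k := d4
    omega
  set inside := E.filter (fun e => e.2 < k) with hins
  set outside := E.filter (fun e => k < e.1) with houts
  have suppins : supp inside = Finset.Ioo 0 k := by
    ext x
    rw [Finset.mem_Ioo]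
    constructor
    · intro hx
      obtain ⟨e, he, hxe⟩ := mem_supp.1 hx
      obtain ⟨heE, h2⟩ := Finset.mem_filter.1 he
      have hlt := hncm.1 _ heE
      have hne : e ≠ (0, k) := by
        rintro rfl
        have : k < k := h2
        omega
      rcases dich e heE hne with h | h <;> rcases hxe with rfl | rfl <;> omega
    · rintro ⟨hx1, hx2⟩
      have hxE : x ∈ supp E := by rw [hsupp, Finset.mem_range]; omega
      obtain ⟨e, he, hxe⟩ := mem_supp.1 hxE
      have hlt := hncm.1 e he
      have hne : e ≠ (0, k) := by
        rintro rfl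
        have : x = 0 ∨ x = k := hxe
        omega
      rcases dich e he hne with h | h
      · exact mem_supp.2 ⟨e, Finset.mem_filter.2 ⟨he, h.2⟩, hxe⟩
      · rcases hxe with rfl | rfl <;> omega
  have suppouts : supp outside = Finset.Ico (k + 1) (2 * m + 2) := by
    ext x
    rw [Finset.mem_Ico]
    constructor
    · intro hx
      obtain ⟨e, he, hxe⟩ := mem_supp.1 hx
      obtain ⟨heE, h2⟩ := Finset.mem_filter.1 he
      have hlt := hncm.1 _ heE
      have hb1 := fst_mem_supp heE
      have hb2 := snd_mem_supp heE
      rw [hsupp, Finset.mem_range] at hb1 hb2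
      rcases hxe with rfl | rfl <;> omega
    · rintro ⟨hx1, hx2⟩
      have hxE : x ∈ supp E := by rw [hsupp, Finset.mem_range]; omega
      obtain ⟨e, he, hxe⟩ := mem_supp.1 hxE
      have hlt := hncm.1 e he
      have hne : e ≠ (0, k) := by
        rintro rfl
        have : x = 0 ∨ x = k := hxe
        omega
      rcases dich e he hne with h | h
      · rcases hxe with rfl | rfl <;> omega
      · exact mem_supp.2 ⟨e, Finset.mem_filter.2 ⟨he, h.1⟩, hxe⟩
  have hinsncm : NCM inside := NCM_subset (Finset.filter_subset _ _) hncm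
  have houtsncm : NCM outside := NCM_subset (Finset.filter_subset _ _) hncm
  have hinsPM : inside ∈ PM (Finset.Ioo 0 k) := mem_PM.2 ⟨hinsncm, suppins⟩
  have houtsPM : outside ∈ PM (Finset.Ico (k + 1) (2 * m + 2)) := mem_PM.2 ⟨houtsncm, suppouts⟩
  have hcardins : k - 1 = 2 * inside.card := by
    have := card_supp hinsncm
    rwa [suppins, Nat.card_Ioo] at this
  set i := inside.card with hidef
  have hkk : k = 2 * i + 1 := by omega
  have him : i ≤ m := by omega
  refine ⟨i, him, mapE (· - 1) inside, ?_, mapE (· - (2 * i + 2)) outside, ?_, ?_⟩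
  · refine mapE_mem_PM ?_ ?_ hinsPM
    · intro a ha b hb
      rw [Finset.mem_Ioo] at ha hb
      omega
    · ext y
      simp only [Finset.mem_image, Finset.mem_Ioo, Finset.mem_range]
      constructor
      · rintro ⟨x, hx, rfl⟩
        omega
      · intro hy
        exact ⟨y + 1, by omega, by omega⟩
  · refine mapE_mem_PM ?_ ?_ houtsPM
    · intro a ha b hb
      rw [Finset.mem_Ico] at ha hb
      omega
    · ext y
      simp only [Finset.mem_image, Finset.mem_Ico, Finset.mem_range]
      constructor
      · rintro ⟨x, hx, rfl⟩
        omega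
      · intro hy
        exact ⟨y + (2 * i + 2), by omega, by omega⟩
  · show insert ((0 : ℕ), 2 * i + 1)
      (mapE (· + 1) (mapE (· - 1) inside) ∪
        mapE (· + (2 * i + 2)) (mapE (· - (2 * i + 2)) outside)) = E
    rw [mapE_comp, mapE_comp,
      mapE_id_of (fun x hx => by
        rw [suppins, Finset.mem_Ioo] at hx
        simp only [Function.comp_apply]
        omega),
      mapE_id_of (fun x hx => by
        rw [suppouts, Finset.mem_Ico] at hx
        simp only [Function.comp_apply]
        omega),
      ← hkk]
    ext e
    constructor
    · intro he
      rcases Finset.mem_insert.1 he with rfl | h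
      · exact h0k
      · rcases Finset.mem_union.1 h with h | h
        · exact (Finset.mem_filter.1 h).1
        · exact (Finset.mem_filter.1 h).1
    · intro he
      by_cases hne : e = (0, k)
      · rw [hne]
        exact Finset.mem_insert_self _ _
      · rcases dich e he hne with h | h
        · exact Finset.mem_insert_of_mem (Finset.mem_union_left _ (Finset.mem_filter.2 ⟨he, h.2⟩))
        · exact Finset.mem_insert_of_mem (Finset.mem_union_right _ (Finset.mem_filter.2 ⟨he, h.1⟩))

lemma D_succ (m : ℕ) :
    D (m + 1) = ∑ i ∈ Finset.range (m + 1), D i * D (m - i) := by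
  classical
  have h2 : 2 * (m + 1) = 2 * m + 2 := by ring
  have key : PM (Finset.range (2 * m + 2)) =
      (Finset.range (m + 1)).biUnion
        (fun i => (PM (Finset.range (2 * i)) ×ˢ PM (Finset.range (2 * (m - i)))).image
          (combine i)) := by
    ext E
    simp only [Finset.mem_biUnion, Finset.mem_image, Finset.mem_range, Finset.mem_product,
      Prod.exists]
    constructor
    · intro hE
      obtain ⟨i, hi, A, hA, B, hB, hcomb⟩ := PM_decomp hE
      exact ⟨i, by omega, A, B, ⟨hA, hB⟩, hcomb⟩
    · rintro ⟨i, hi, A, B, ⟨hA, hB⟩, rfl⟩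
      exact combine_mem (by omega) hA hB
  have hdisj : ∀ i ∈ Finset.range (m + 1), ∀ i' ∈ Finset.range (m + 1), i ≠ i' →
      Disjoint
        ((PM (Finset.range (2 * i)) ×ˢ PM (Finset.range (2 * (m - i)))).image (combine i))
        ((PM (Finset.range (2 * i')) ×ˢ PM (Finset.range (2 * (m - i')))).image (combine i')) := by
    intro i hi i' hi' hne
    rw [Finset.mem_range] at hi hi'
    rw [Finset.disjoint_left]
    intro E hEi hEi'
    rcases Finset.mem_image.1 hEi with ⟨p, hp, rfl⟩
    rcases Finset.mem_image.1 hEi' with ⟨q, hq, hEq⟩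
    obtain ⟨A, B⟩ := p
    obtain ⟨A', B'⟩ := q
    rw [Finset.mem_product] at hp hq
    have hncm : NCM (combine i (A, B)) :=
      (mem_PM.1 (combine_mem (by omega) hp.1 hp.2)).1
    have h1 : ((0 : ℕ), 2 * i + 1) ∈ combine i (A, B) := Finset.mem_insert_self _ _
    have h2 : ((0 : ℕ), 2 * i' + 1) ∈ combine i (A, B) := by
      rw [← hEq]
      exact Finset.mem_insert_self _ _
    have := partner_eq hncm h1 h2
    omega
  rw [D, h2, key, Finset.card_biUnion hdisj]
  refine Finset.sum_congr rfl fun i hi => ?_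
  rw [Finset.mem_range] at hi
  have hinj : Set.InjOn (combine i)
      ((PM (Finset.range (2 * i)) ×ˢ PM (Finset.range (2 * (m - i))) : Finset _) : Set _) := by
    rintro ⟨A, B⟩ hp ⟨A', B'⟩ hq hpq
    rw [Finset.mem_coe, Finset.mem_product] at hp hq
    obtain ⟨hA1, hA2⟩ := split_combine (A := A) (B := B) hp.1 hp.2
    obtain ⟨hB1, hB2⟩ := split_combine (A := A') (B := B') hq.1 hq.2
    rw [hpq] at hA1 hA2
    rw [Prod.mk.injEq]
    exact ⟨hA1.symm.trans hB1, hA2.symm.trans hB2⟩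
  rw [Finset.card_image_of_injOn hinj, Finset.card_product]
  rfl

lemma D_eq_catalan (m : ℕ) : D m = catalan m := by
  induction m using Nat.strong_induction_on with
  | _ m ih =>
    match m with
    | 0 => simpa using D_zero
    | m + 1 =>
      rw [D_succ, catalan_succ', Finset.Nat.sum_antidiagonal_eq_sum_range_succ_mk]
      refine Finset.sum_congr rfl fun i hi => ?_
      rw [Finset.mem_range] at hi
      rw [ih i (by omega), ih (m - i) (by omega)]

lemma fin_iff {n : ℕ} (E : Finset (Fin n × Fin n)) :
    IsNoncrossingMatching E ↔ NCM (E.image (Prod.map Fin.val Fin.val)) := by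
  have hmem : ∀ e ∈ E.image (Prod.map Fin.val Fin.val),
      ∃ e' ∈ E, Prod.map Fin.val Fin.val e' = e := by
    intro e he
    rcases Finset.mem_image.1 he with ⟨e', h1, h2⟩
    exact ⟨e', h1, h2⟩
  have hvinj : Function.Injective (Prod.map Fin.val Fin.val : Fin n × Fin n → ℕ × ℕ) :=
    Function.Injective.prodMap Fin.val_injective Fin.val_injective
  constructor
  · rintro ⟨h1, h2, h3⟩
    refine ⟨?_, ?_, ?_⟩
    · intro e he
      obtain ⟨e', he', rfl⟩ := hmem e he
      exact h1 e' he'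
    · intro e he f hf hne
      obtain ⟨e', he', rfl⟩ := hmem e he
      obtain ⟨f', hf', rfl⟩ := hmem f hf
      have hne' : e' ≠ f' := fun h => hne (by rw [h])
      obtain ⟨d1, d2, d3, d4⟩ := h2 e' he' f' hf' hne'
      exact ⟨fun h => d1 (Fin.val_injective h), fun h => d2 (Fin.val_injective h),
        fun h => d3 (Fin.val_injective h), fun h => d4 (Fin.val_injective h)⟩
    · intro e he f hf
      obtain ⟨e', he', rfl⟩ := hmem e he
      obtain ⟨f', hf', rfl⟩ := hmem f hf
      exact h3 e' he' f' hf'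
  · rintro ⟨h1, h2, h3⟩
    refine ⟨?_, ?_, ?_⟩
    · intro e he
      exact h1 _ (Finset.mem_image_of_mem _ he)
    · intro e he f hf hne
      obtain ⟨d1, d2, d3, d4⟩ := h2 _ (Finset.mem_image_of_mem _ he) _
        (Finset.mem_image_of_mem _ hf) (fun h => hne (hvinj h))
      exact ⟨fun h => d1 (congrArg Fin.val h), fun h => d2 (congrArg Fin.val h),
        fun h => d3 (congrArg Fin.val h), fun h => d4 (congrArg Fin.val h)⟩
    · intro e he f hf
      exact h3 _ (Finset.mem_image_of_mem _ he) _ (Finset.mem_image_of_mem _ hf)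

lemma main (n j : ℕ) :
    (Finset.univ.filter
        (fun E : Finset (Fin n × Fin n) =>
          IsNoncrossingMatching E ∧ E.card = j)).card =
      Nat.choose n (2 * j) * catalan j := by
  classical
  have hvinj : Function.Injective (Prod.map Fin.val Fin.val : Fin n × Fin n → ℕ × ℕ) :=
    Function.Injective.prodMap Fin.val_injective Fin.val_injective
  set Mfil := ((Finset.range n ×ˢ Finset.range n).powerset).filter
    (fun E => NCM E ∧ E.card = j) with hMfil
  have transfer : (Finset.univ.filter
      (fun E : Finset (Fin n × Fin n) =>
        IsNoncrossingMatching E ∧ E.card = j)).card = Mfil.card := by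
    refine Finset.card_bij (fun E _ => E.image (Prod.map Fin.val Fin.val)) ?_ ?_ ?_
    · intro E hE
      rw [Finset.mem_filter] at hE
      rw [hMfil, Finset.mem_filter, Finset.mem_powerset]
      refine ⟨?_, (fin_iff E).1 hE.2.1, ?_⟩
      · intro e he
        rcases Finset.mem_image.1 he with ⟨e', _, rfl⟩
        rw [Finset.mem_product]
        exact ⟨Finset.mem_range.2 e'.1.2, Finset.mem_range.2 e'.2.2⟩
      · rw [Finset.card_image_of_injective _ hvinj]
        exact hE.2.2
    · intro E1 h1 E2 h2 heq
      exact Finset.image_injective hvinj heq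
    · intro F hF
      rw [hMfil, Finset.mem_filter, Finset.mem_powerset] at hF
      obtain ⟨hFsub, hFncm, hFcard⟩ := hF
      rcases Finset.eq_empty_or_nonempty F with rfl | ⟨e₀, he₀⟩
      · refine ⟨∅, Finset.mem_filter.2 ⟨Finset.mem_univ _, ?_, by simpa using hFcard⟩, by simp⟩
        exact ⟨fun e he => absurd he (Finset.notMem_empty e),
          fun e he => absurd he (Finset.notMem_empty e),
          fun e he => absurd he (Finset.notMem_empty e)⟩
      · have hn : 0 < n := by
          have := hFsub he₀
          simp only [Finset.mem_product, Finset.mem_range] at this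
          omega
        set g : ℕ → Fin n := fun x => ⟨x % n, Nat.mod_lt x hn⟩ with hgdef
        set E := F.image (Prod.map g g) with hEdef
        have himg : E.image (Prod.map Fin.val Fin.val) = F := by
          rw [hEdef, Finset.image_image]
          refine (Finset.image_congr ?_).trans Finset.image_id'
          intro e he
          obtain ⟨a, b⟩ := e
          have hab := hFsub he
          simp only [Finset.mem_product, Finset.mem_range] at hab
          show ((g a : ℕ), (g b : ℕ)) = (a, b)
          simp [hgdef, Nat.mod_eq_of_lt hab.1, Nat.mod_eq_of_lt hab.2]
        refine ⟨E, Finset.mem_filter.2 ⟨Finset.mem_univ _, (fin_iff E).2 ?_, ?_⟩, himg⟩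
        · rw [himg]
          exact hFncm
        · have hc : E.card = F.card := by
            rw [← himg, Finset.card_image_of_injective _ hvinj]
          omega
  rw [transfer]
  have hmap : ∀ E ∈ Mfil, supp E ∈ Finset.powersetCard (2 * j) (Finset.range n) := by
    intro E hE
    rw [hMfil, Finset.mem_filter, Finset.mem_powerset] at hE
    rw [Finset.mem_powersetCard]
    exact ⟨subset_product_iff.1 hE.1, by rw [card_supp hE.2.1, hE.2.2]⟩
  rw [Finset.card_eq_sum_card_fiberwise hmap]
  have hfib : ∀ S ∈ Finset.powersetCard (2 * j) (Finset.range n),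
      (Mfil.filter (fun E => supp E = S)).card = catalan j := by
    intro S hS
    rw [Finset.mem_powersetCard] at hS
    have hPM : Mfil.filter (fun E => supp E = S) = PM S := by
      ext E
      simp only [hMfil, Finset.mem_filter, Finset.mem_powerset, mem_PM]
      constructor
      · rintro ⟨⟨hsub, hncm, hcard⟩, hsupp⟩
        exact ⟨hncm, hsupp⟩
      · rintro ⟨hncm, hsupp⟩
        have hsub : supp E ⊆ Finset.range n := hsupp ▸ hS.1
        have h3 : 2 * E.card = 2 * j := by rw [← card_supp hncm, hsupp, hS.2]
        exact ⟨⟨subset_product_iff.2 hsub, hncm, by omega⟩, hsupp⟩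
    rw [hPM, card_PM_of_card hS.2, D_eq_catalan]
  rw [Finset.sum_congr rfl hfib, Finset.sum_const, smul_eq_mul,
    Finset.card_powersetCard, Finset.card_range]

end NCMAux

theorem card_noncrossingMatchings_with_edges (n j : ℕ) :
    (Finset.univ.filter
        (fun E : Finset (Fin n × Fin n) =>
          IsNoncrossingMatching E ∧ E.card = j)).card =
      Nat.choose n (2 * j) * catalan j :=
  NCMAux.main n j
end

section
/- For every natural number k, the number of noncrossing perfect matchings on the linearly ordered set {1, …, 2k} (i.e., noncrossing partial matchings in which every element of {1, …, 2k} belongs to an edge) equals the Catalan number C_k. -/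
namespace NCM

variable {n : ℕ}

/-- step value at position `i` -/
def stp (w : Fin n → Bool) (i : ℕ) : ℤ :=
  if h : i < n then (if w ⟨i, h⟩ then 1 else -1) else 0

/-- height after `s` steps -/
def ht (w : Fin n → Bool) (s : ℕ) : ℤ := ∑ i ∈ Finset.range s, stp w i

@[simp] lemma ht_zero (w : Fin n → Bool) : ht w 0 = 0 := by simp [ht]

lemma ht_succ (w : Fin n → Bool) (s : ℕ) : ht w (s + 1) = ht w s + stp w s := by
  simp [ht, Finset.sum_range_succ]

lemma stp_le (w : Fin n → Bool) (i : ℕ) : stp w i ≤ 1 := by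
  unfold stp; split_ifs <;> omega

lemma le_stp (w : Fin n → Bool) (i : ℕ) : -1 ≤ stp w i := by
  unfold stp; split_ifs <;> omega

lemma ivt_up (f : ℕ → ℤ) (hf : ∀ t, f (t + 1) ≤ f t + 1) {a b : ℕ} (hab : a ≤ b)
    {v : ℤ} (h1 : f a ≤ v) (h2 : v ≤ f b) : ∃ t, a ≤ t ∧ t ≤ b ∧ f t = v := by
  induction b with
  | zero =>
    have : a = 0 := Nat.le_zero.mp hab
    exact ⟨0, by omega, le_refl 0, by subst this; omega⟩
  | succ b ih =>
    rcases Nat.lt_or_ge a (b + 1) with h | h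
    · have hab' : a ≤ b := by omega
      rcases le_or_gt v (f b) with h' | h'
      · obtain ⟨t, ht1, ht2, ht3⟩ := ih hab' h'
        exact ⟨t, ht1, by omega, ht3⟩
      · exact ⟨b + 1, by omega, le_refl _, by have := hf b; omega⟩
    · have : a = b + 1 := by omega
      exact ⟨a, le_refl a, by omega, by subst this; omega⟩

lemma ivt_down (f : ℕ → ℤ) (hf : ∀ t, f t - 1 ≤ f (t + 1)) {a b : ℕ} (hab : a ≤ b)
    {v : ℤ} (h1 : v ≤ f a) (h2 : f b ≤ v) : ∃ t, a ≤ t ∧ t ≤ b ∧ f t = v := by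
  obtain ⟨t, h1', h2', h3'⟩ := ivt_up (fun t => -f t)
    (fun t => show -f (t+1) ≤ -f t + 1 by have := hf t; omega) hab
    (v := -v) (show -f a ≤ -v by omega) (show -v ≤ -f b by omega)
  refine ⟨t, h1', h2', ?_⟩
  have : -f t = -v := h3'
  omega

lemma ht_ivt_up (w : Fin n → Bool) {a b : ℕ} (hab : a ≤ b) {v : ℤ}
    (h1 : ht w a ≤ v) (h2 : v ≤ ht w b) : ∃ t, a ≤ t ∧ t ≤ b ∧ ht w t = v :=
  ivt_up _ (fun t => by have := stp_le w t; rw [ht_succ]; omega) hab h1 h2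

lemma ht_ivt_down (w : Fin n → Bool) {a b : ℕ} (hab : a ≤ b) {v : ℤ}
    (h1 : v ≤ ht w a) (h2 : ht w b ≤ v) : ∃ t, a ≤ t ∧ t ≤ b ∧ ht w t = v :=
  ivt_down _ (fun t => by have := le_stp w t; rw [ht_succ]; omega) hab h1 h2

/-- ups in the interval `[s, t)` -/
def ups (w : Fin n → Bool) (s t : ℕ) : Finset (Fin n) :=
  Finset.univ.filter (fun u => s ≤ (u : ℕ) ∧ (u : ℕ) < t ∧ w u = true)

/-- downs in the interval `[s, t)` -/
def dns (w : Fin n → Bool) (s t : ℕ) : Finset (Fin n) :=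
  Finset.univ.filter (fun u => s ≤ (u : ℕ) ∧ (u : ℕ) < t ∧ w u = false)

lemma ht_sub (w : Fin n → Bool) {s t : ℕ} (hst : s ≤ t) :
    ht w t - ht w s = (ups w s t).card - (dns w s t).card := by
  induction t, hst using Nat.le_induction with
  | base =>
    have h1 : ups w s s = ∅ := by
      ext u; simp only [ups, Finset.mem_filter, Finset.mem_univ, true_and,
        Finset.notMem_empty, iff_false]; omega
    have h2 : dns w s s = ∅ := by
      ext u; simp only [dns, Finset.mem_filter, Finset.mem_univ, true_and,
        Finset.notMem_empty, iff_false]; omega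
    simp [h1, h2]
  | succ t hst ih =>
    rw [ht_succ]
    rcases Nat.lt_or_ge t n with h | h
    · set u : Fin n := ⟨t, h⟩ with hu
      have hstp : stp w t = if w u then 1 else -1 := by simp [stp, h, hu]
      cases hw : w u with
      | true =>
        have h1 : ups w s (t + 1) = insert u (ups w s t) := by
          ext x
          simp only [ups, Finset.mem_filter, Finset.mem_univ, true_and, Finset.mem_insert]
          constructor
          · rintro ⟨hx1, hx2, hx3⟩
            rcases Nat.lt_or_ge (x : ℕ) t with h' | h'
            · exact Or.inr ⟨hx1, h', hx3⟩
            · left; apply Fin.ext; simp [hu]; omega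
          · rintro (rfl | ⟨hx1, hx2, hx3⟩)
            · exact ⟨hst, by simp [hu], hw⟩
            · exact ⟨hx1, by omega, hx3⟩
        have h2 : dns w s (t + 1) = dns w s t := by
          ext x
          simp only [dns, Finset.mem_filter, Finset.mem_univ, true_and]
          constructor
          · rintro ⟨hx1, hx2, hx3⟩
            refine ⟨hx1, ?_, hx3⟩
            rcases Nat.lt_or_ge (x : ℕ) t with h' | h'
            · exact h'
            · exfalso; have : x = u := by apply Fin.ext; simp [hu]; omega
              rw [this, hw] at hx3; simp at hx3
          · rintro ⟨hx1, hx2, hx3⟩; exact ⟨hx1, by omega, hx3⟩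
        have hnotmem : u ∉ ups w s t := by
          simp only [ups, Finset.mem_filter, Finset.mem_univ, true_and, hu]; omega
        rw [h1, h2, Finset.card_insert_of_notMem hnotmem, hstp, if_pos hw]
        push_cast
        omega
      | false =>
        have h1 : dns w s (t + 1) = insert u (dns w s t) := by
          ext x
          simp only [dns, Finset.mem_filter, Finset.mem_univ, true_and, Finset.mem_insert]
          constructor
          · rintro ⟨hx1, hx2, hx3⟩
            rcases Nat.lt_or_ge (x : ℕ) t with h' | h'
            · exact Or.inr ⟨hx1, h', hx3⟩
            · left; apply Fin.ext; simp [hu]; omega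
          · rintro (rfl | ⟨hx1, hx2, hx3⟩)
            · exact ⟨hst, by simp [hu], hw⟩
            · exact ⟨hx1, by omega, hx3⟩
        have h2 : ups w s (t + 1) = ups w s t := by
          ext x
          simp only [ups, Finset.mem_filter, Finset.mem_univ, true_and]
          constructor
          · rintro ⟨hx1, hx2, hx3⟩
            refine ⟨hx1, ?_, hx3⟩
            rcases Nat.lt_or_ge (x : ℕ) t with h' | h'
            · exact h'
            · exfalso; have : x = u := by apply Fin.ext; simp [hu]; omega
              rw [this, hw] at hx3; simp at hx3
          · rintro ⟨hx1, hx2, hx3⟩; exact ⟨hx1, by omega, hx3⟩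
        have hnotmem : u ∉ dns w s t := by
          simp only [dns, Finset.mem_filter, Finset.mem_univ, true_and, hu]; omega
        rw [h1, h2, Finset.card_insert_of_notMem hnotmem, hstp, if_neg (by simp [hw])]
        push_cast
        omega
    · have hstp : stp w t = 0 := by simp [stp]; omega
      have h1 : ups w s (t + 1) = ups w s t := by
        ext x
        simp only [ups, Finset.mem_filter, Finset.mem_univ, true_and]
        have := x.isLt; constructor <;> rintro ⟨hx1, hx2, hx3⟩ <;> exact ⟨hx1, by omega, hx3⟩
      have h2 : dns w s (t + 1) = dns w s t := by
        ext x
        simp only [dns, Finset.mem_filter, Finset.mem_univ, true_and]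
        have := x.isLt; constructor <;> rintro ⟨hx1, hx2, hx3⟩ <;> exact ⟨hx1, by omega, hx3⟩
      rw [h1, h2, hstp]; omega


/-- Dyck condition for a function `Fin n → Bool`. -/
def IsDyckFun (w : Fin n → Bool) : Prop := (∀ s, 0 ≤ ht w s) ∧ ht w n = 0

lemma ht_stable (w : Fin n → Bool) {s : ℕ} (hs : n ≤ s) : ht w s = ht w n := by
  induction s with
  | zero =>
    have h0 : n = 0 := Nat.le_zero.mp hs
    subst h0
    rfl
  | succ s ih =>
    rcases Nat.lt_or_ge s n with h | h
    · have : s + 1 = n := by omega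
      rw [this]
    · rw [ht_succ, ih h]
      have : stp w s = 0 := by simp [stp]; omega
      rw [this]; ring

instance (w : Fin n → Bool) : Decidable (IsDyckFun w) :=
  decidable_of_iff ((∀ s ≤ n, 0 ≤ ht w s) ∧ ht w n = 0) (by
    constructor
    · rintro ⟨h1, h2⟩
      refine ⟨fun s => ?_, h2⟩
      rcases le_or_gt s n with h | h
      · exact h1 s h
      · rw [ht_stable w h.le, h2]
    · rintro ⟨h1, h2⟩; exact ⟨fun s _ => h1 s, h2⟩)

/-- `i` and `j` are partners (matched parentheses). -/
def P (w : Fin n → Bool) (i j : Fin n) : Prop :=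
  i < j ∧ w i = true ∧ w j = false ∧ ht w i = ht w j - 1 ∧
    ∀ t : ℕ, t ≤ (j : ℕ) → (i : ℕ) < t → ht w i < ht w t

instance (w : Fin n → Bool) (i j : Fin n) : Decidable (P w i j) := by
  unfold P; infer_instance

lemma P_down_unique {w : Fin n → Bool} {i i' j : Fin n} (h : P w i j) (h' : P w i' j) :
    i = i' := by
  obtain ⟨h1, h2, h3, h4, h5⟩ := h
  obtain ⟨h1', h2', h3', h4', h5'⟩ := h'
  by_contra hne
  rcases Ne.lt_or_gt (fun hx : (i:ℕ) = (i':ℕ) => hne (Fin.ext hx)) with hlt | hlt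
  · have := h5 (i' : ℕ) (le_of_lt h1') hlt
    omega
  · have := h5' (i : ℕ) (le_of_lt h1) hlt
    omega

lemma P_up_unique {w : Fin n → Bool} {i j j' : Fin n} (h : P w i j) (h' : P w i j') :
    j = j' := by
  obtain ⟨h1, h2, h3, h4, h5⟩ := h
  obtain ⟨h1', h2', h3', h4', h5'⟩ := h'
  by_contra hne
  wlog hlt : (j : ℕ) < (j' : ℕ) generalizing j j'
  · exact this h1' h3' h4' h5' h1 h3 h4 h5 (fun hx => hne hx.symm)
      (by rcases Ne.lt_or_gt (fun hx : (j:ℕ) = (j':ℕ) => hne (Fin.ext hx)) with hl | hl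
          · exact absurd hl hlt
          · exact hl)
  have hjn : (j : ℕ) < n := j.isLt
  have hstep : stp w (j : ℕ) = -1 := by
    simp only [stp, dif_pos hjn, Fin.eta]
    rw [h3]; simp
  have hj1 : ht w ((j : ℕ) + 1) = ht w i := by rw [ht_succ, hstep]; omega
  have := h5' ((j : ℕ) + 1) (by omega) (by omega)
  omega

lemma exists_P_down {w : Fin n → Bool} (hd : IsDyckFun w) (j : Fin n) (hj : w j = false) :
    ∃ i, P w i j := by
  have hjn : (j : ℕ) < n := j.isLt
  have hstep : stp w (j : ℕ) = -1 := by
    simp only [stp, dif_pos hjn, Fin.eta]; rw [hj]; simp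
  have hj1 : ht w ((j : ℕ) + 1) = ht w j - 1 := by rw [ht_succ, hstep]; ring
  have hpos : 1 ≤ ht w j := by have := hd.1 ((j : ℕ) + 1); omega
  -- there is some t ≤ j with ht t = ht j - 1
  obtain ⟨t0, ht0a, ht0b, ht0c⟩ := ht_ivt_up w (Nat.zero_le (j : ℕ))
    (v := ht w j - 1) (by simpa using hpos) (by omega)
  -- take the greatest such
  set Q : ℕ → Prop := fun t => ht w t = ht w (j : ℕ) - 1 with hQ
  have hQd : DecidablePred Q := fun t => by rw [hQ]; infer_instance
  set i0 : ℕ := Nat.findGreatest Q (j : ℕ) with hi0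
  have hspec : Q i0 := Nat.findGreatest_spec (P := Q) ht0b (by rw [hQ]; exact ht0c)
  have hle : i0 ≤ (j : ℕ) := Nat.findGreatest_le _
  have hgr : ∀ t, i0 < t → t ≤ (j : ℕ) → ¬ Q t := fun t h1 h2 =>
    Nat.findGreatest_is_greatest h1 h2
  have hne : i0 ≠ (j : ℕ) := by
    intro hx; rw [hQ] at hspec; rw [hx] at hspec; omega
  have hilt : i0 < (j : ℕ) := lt_of_le_of_ne hle hne
  have hi0n : i0 < n := by omega
  set i : Fin n := ⟨i0, hi0n⟩ with hi
  -- all of (i0, j] have height > ht i0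
  have hgt : ∀ t, t ≤ (j : ℕ) → i0 < t → ht w i0 < ht w t := by
    intro t h1 h2
    rcases lt_trichotomy (ht w i0) (ht w t) with h | h | h
    · exact h
    · exact absurd (by rw [hQ]; rw [hQ] at hspec; omega) (hgr t h2 h1)
    · exfalso
      have hspec' : ht w i0 = ht w (j : ℕ) - 1 := hspec
      obtain ⟨t', h1', h2', h3'⟩ := ht_ivt_up w h1 (v := ht w i0) (le_of_lt h) (by omega)
      have : ¬ Q t' := hgr t' (by omega) h2'
      rw [hQ] at this; omega
  -- w i = true
  have hwi : w i = true := by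
    by_contra hwi
    have hwi' : w i = false := by simpa using hwi
    have hstep' : stp w i0 = -1 := by
      simp only [stp, dif_pos hi0n]
      rw [show (⟨i0, hi0n⟩ : Fin n) = i from rfl, hwi']; simp
    have hii : ht w (i0 + 1) = ht w i0 - 1 := by rw [ht_succ, hstep']; ring
    have := hgt (i0 + 1) (by omega) (by omega)
    omega
  refine ⟨i, hilt, hwi, hj, ?_, ?_⟩
  · rw [hQ] at hspec; exact hspec
  · exact fun t h1 h2 => hgt t h1 h2

lemma exists_P_up {w : Fin n → Bool} (hd : IsDyckFun w) (i : Fin n) (hi : w i = true) :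
    ∃ j, P w i j := by
  have hin : (i : ℕ) < n := i.isLt
  have hstep : stp w (i : ℕ) = 1 := by
    simp only [stp, dif_pos hin, Fin.eta]; rw [hi]; simp
  have hi1 : ht w ((i : ℕ) + 1) = ht w i + 1 := by rw [ht_succ, hstep]
  have hnn : 0 ≤ ht w i := hd.1 _
  -- some s ∈ [i+1, n] with ht s = ht i
  obtain ⟨s0, hs0a, hs0b, hs0c⟩ := ht_ivt_down w (show (i:ℕ)+1 ≤ n by omega)
    (v := ht w i) (by omega) (by rw [hd.2]; omega)
  set Q : ℕ → Prop := fun s => (i : ℕ) + 1 ≤ s ∧ ht w s = ht w i with hQ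
  have hQd : DecidablePred Q := fun t => by rw [hQ]; infer_instance
  have hex : ∃ s, Q s := ⟨s0, hs0a, hs0c⟩
  set s1 : ℕ := Nat.find hex with hs1
  obtain ⟨hs1a, hs1b⟩ : Q s1 := Nat.find_spec hex
  have hmin : ∀ t, t < s1 → ¬ Q t := fun t h => Nat.find_min hex h
  -- s1 ≥ i + 2
  have hs1i : (i : ℕ) + 1 < s1 := by
    rcases Nat.lt_or_ge ((i : ℕ) + 1) s1 with h | h
    · exact h
    · exfalso; have : s1 = (i:ℕ)+1 := by omega
      rw [this] at hs1b; omega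
  set j0 : ℕ := s1 - 1 with hj0
  -- heights in (i, j0] are > ht i
  have hgt : ∀ t, t ≤ j0 → (i : ℕ) < t → ht w i < ht w t := by
    intro t h1 h2
    rcases lt_trichotomy (ht w i) (ht w t) with h | h | h
    · exact h
    · exact absurd ⟨by omega, h.symm⟩ (hmin t (by omega))
    · exfalso
      obtain ⟨t', h1', h2', h3'⟩ := ht_ivt_down w (show (i:ℕ)+1 ≤ t by omega)
        (v := ht w i) (by omega) (le_of_lt h)
      exact hmin t' (by omega) ⟨h1', h3'⟩
  have hj0gt : ht w i < ht w j0 := hgt j0 (le_refl _) (by omega)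
  have hj0n : j0 < n := by
    by_contra hc
    have : ht w j0 = 0 := by
      rw [ht_stable w (by omega), hd.2]
    omega
  set j : Fin n := ⟨j0, hj0n⟩ with hj
  have hjc : ht w (j : ℕ) = ht w j0 := rfl
  have hsj : ht w (j0 + 1) = ht w i := by
    have : j0 + 1 = s1 := by omega
    rw [this, hs1b]
  have hstepj : stp w j0 = ht w i - ht w j0 := by
    have := ht_succ w j0; omega
  have hwj : w j = false := by
    by_contra hwj
    have hwj' : w j = true := by simpa using hwj
    have : stp w j0 = 1 := by
      simp only [stp, dif_pos hj0n]
      rw [show (⟨j0, hj0n⟩ : Fin n) = j from rfl, hwj']; simp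
    omega
  have hstepj' : stp w j0 = -1 := by
    simp only [stp, dif_pos hj0n]
    rw [show (⟨j0, hj0n⟩ : Fin n) = j from rfl, hwj]; simp
  refine ⟨j, ?_, hi, hwj, by omega, fun t h1 h2 => hgt t h1 h2⟩
  · have : (i : ℕ) < j0 := by omega
    exact this

/-- the matching extracted from a word -/
def toMatch (w : Fin n → Bool) : Finset (Fin n × Fin n) :=
  Finset.univ.filter (fun e => P w e.1 e.2)

lemma mem_toMatch {w : Fin n → Bool} {e : Fin n × Fin n} :
    e ∈ toMatch w ↔ P w e.1 e.2 := by simp [toMatch]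

/-- condition for membership in the counted set -/
def IsNCPM {n : ℕ} (E : Finset (Fin n × Fin n)) : Prop :=
  IsNoncrossingMatching E ∧ ∀ v : Fin n, ∃ e ∈ E, v = e.1 ∨ v = e.2

lemma toMatch_mem {w : Fin n → Bool} (hd : IsDyckFun w) : IsNCPM (toMatch w) := by
  constructor
  · refine ⟨?_, ?_, ?_⟩
    · intro e he
      exact (mem_toMatch.mp he).1
    · intro e he f hf hne
      have hP := mem_toMatch.mp he
      have hQ := mem_toMatch.mp hf
      have h11 : e.1 ≠ f.1 := by
        intro hx
        exact hne (Prod.ext hx (by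
          rw [hx] at hP
          exact P_up_unique hP hQ))
      have h22 : e.2 ≠ f.2 := by
        intro hx
        exact hne (Prod.ext (by
          rw [hx] at hP
          exact P_down_unique hP hQ) hx)
      have h12 : e.1 ≠ f.2 := by
        intro hx
        have := hP.2.1; have := hQ.2.2.1
        rw [hx] at *; simp_all
      have h21 : e.2 ≠ f.1 := by
        intro hx
        have := hP.2.2.1; have := hQ.2.1
        rw [hx] at *; simp_all
      exact ⟨h11, h12, h21, h22⟩
    · rintro e he f hf ⟨hab, hbc, hcd⟩
      have hP := mem_toMatch.mp he
      have hQ := mem_toMatch.mp hf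
      -- e.1 < f.1 < e.2 < f.2
      have h1 : ht w (f.1 : ℕ) > ht w (e.1 : ℕ) :=
        hP.2.2.2.2 (f.1 : ℕ) (le_of_lt hbc) hab
      have hjn : (e.2 : ℕ) < n := e.2.isLt
      have hstep : stp w (e.2 : ℕ) = -1 := by
        simp only [stp, dif_pos hjn, Fin.eta]
        rw [hP.2.2.1]; simp
      have hj1 : ht w ((e.2 : ℕ) + 1) = ht w (e.2 : ℕ) - 1 := by rw [ht_succ, hstep]; ring
      have h2 : ht w ((e.2 : ℕ) + 1) > ht w (f.1 : ℕ) :=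
        hQ.2.2.2.2 ((e.2 : ℕ) + 1) (by omega) (by omega)
      have h4 := hP.2.2.2.1
      omega
  · intro v
    cases hv : w v with
    | true =>
      obtain ⟨j, hj⟩ := exists_P_up hd v hv
      exact ⟨(v, j), mem_toMatch.mpr hj, Or.inl rfl⟩
    | false =>
      obtain ⟨i, hi⟩ := exists_P_down hd v hv
      exact ⟨(i, v), mem_toMatch.mpr hi, Or.inr rfl⟩

/-- the word of a matching: `true` at left endpoints -/
def toWord {n : ℕ} (E : Finset (Fin n × Fin n)) : Fin n → Bool :=
  fun v => decide (∃ e ∈ E, v = e.1)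

lemma toWord_eq_true {n : ℕ} {E : Finset (Fin n × Fin n)} {v : Fin n} :
    toWord E v = true ↔ ∃ e ∈ E, v = e.1 := by simp [toWord]

lemma toWord_eq_false {n : ℕ} {E : Finset (Fin n × Fin n)} {v : Fin n} :
    toWord E v = false ↔ ¬ ∃ e ∈ E, v = e.1 := by simp [toWord]

lemma toWord_toMatch {w : Fin n → Bool} (hd : IsDyckFun w) : toWord (toMatch w) = w := by
  funext v
  cases hv : w v with
  | true =>
    obtain ⟨j, hj⟩ := exists_P_up hd v hv
    exact toWord_eq_true.mpr ⟨(v, j), mem_toMatch.mpr hj, rfl⟩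
  | false =>
    refine toWord_eq_false.mpr ?_
    rintro ⟨e, he, rfl⟩
    have := (mem_toMatch.mp he).2.1
    rw [hv] at this; simp at this

section MatchingSide

variable {E : Finset (Fin n × Fin n)} (hE : IsNCPM E)
include hE

lemma right_not_left {e : Fin n × Fin n} (he : e ∈ E) : toWord E e.2 = false := by
  rw [toWord_eq_false]
  rintro ⟨f, hf, hvf⟩
  have hef : e ≠ f := by
    intro h
    have h2 := hE.1.1 e he
    subst h
    exact absurd hvf (ne_of_gt h2)
  exact (hE.1.2.1 e he f hf hef).2.2.1 hvf

omit hE in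
lemma left_is_up {e : Fin n × Fin n} (he : e ∈ E) : toWord E e.1 = true :=
  toWord_eq_true.mpr ⟨e, he, rfl⟩

lemma word_false_iff {v : Fin n} : toWord E v = false ↔ ∃ e ∈ E, v = e.2 := by
  constructor
  · intro hv
    obtain ⟨e, he, hor⟩ := hE.2 v
    rcases hor with h | h
    · rw [h] at hv
      rw [left_is_up he] at hv; simp at hv
    · exact ⟨e, he, h⟩
  · rintro ⟨e, he, rfl⟩
    exact right_not_left hE he

end MatchingSide

section MatchingSide2

variable {E : Finset (Fin n × Fin n)} (hE : IsNCPM E)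
include hE

lemma exists_fR : ∀ u : Fin n, ∃ e : Fin n × Fin n, toWord E u = false → e ∈ E ∧ u = e.2 := by
  intro u
  by_cases h : toWord E u = false
  · obtain ⟨e, he, hu⟩ := (word_false_iff hE).mp h
    exact ⟨e, fun _ => ⟨he, hu⟩⟩
  · exact ⟨(u, u), fun hx => absurd hx h⟩

omit hE in
lemma exists_fL : ∀ u : Fin n, ∃ e : Fin n × Fin n, toWord E u = true → e ∈ E ∧ u = e.1 := by
  intro u
  by_cases h : toWord E u = true
  · obtain ⟨e, he, hu⟩ := toWord_eq_true.mp h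
    exact ⟨e, fun _ => ⟨he, hu⟩⟩
  · exact ⟨(u, u), fun hx => absurd hx h⟩

lemma dns_card_le (s : ℕ) :
    (dns (toWord E) 0 s).card ≤ (ups (toWord E) 0 s).card := by
  choose fR hfR using exists_fR hE
  apply Finset.card_le_card_of_injOn (fun u => (fR u).1)
  · intro u hu
    simp only [dns, Finset.mem_coe, Finset.mem_filter, Finset.mem_univ, true_and] at hu
    obtain ⟨he, hu2⟩ := hfR u hu.2.2
    have hlt := hE.1.1 _ he
    simp only [ups, Finset.mem_coe, Finset.mem_filter, Finset.mem_univ, true_and]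
    refine ⟨Nat.zero_le _, ?_, left_is_up he⟩
    have h' := Fin.lt_def.mp hlt
    have hval : (u : ℕ) = ((fR u).2 : ℕ) := congrArg Fin.val hu2
    omega
  · intro u hu u' hu' h
    simp only at h
    simp only [dns, Finset.coe_filter, Set.mem_setOf_eq] at hu hu'
    obtain ⟨he, hu2⟩ := hfR u hu.2.2.2
    obtain ⟨he', hu2'⟩ := hfR u' hu'.2.2.2
    have : fR u = fR u' := by
      by_contra hne
      exact (hE.1.2.1 _ he _ he' hne).1 h
    rw [hu2, hu2', this]

lemma updn_card_eq :
    (ups (toWord E) 0 n).card = (dns (toWord E) 0 n).card := by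
  apply le_antisymm
  · choose fL hfL using exists_fL (E := E)
    apply Finset.card_le_card_of_injOn (fun u => (fL u).2)
    · intro u hu
      simp only [ups, Finset.mem_coe, Finset.mem_filter, Finset.mem_univ, true_and] at hu
      obtain ⟨he, hu2⟩ := hfL u hu.2.2
      simp only [dns, Finset.mem_coe, Finset.mem_filter, Finset.mem_univ, true_and]
      exact ⟨Nat.zero_le _, (fL u).2.isLt, right_not_left hE he⟩
    · intro u hu u' hu' h
      simp only at h
      simp only [ups, Finset.coe_filter, Set.mem_setOf_eq] at hu hu'
      obtain ⟨he, hu2⟩ := hfL u hu.2.2.2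
      obtain ⟨he', hu2'⟩ := hfL u' hu'.2.2.2
      have : fL u = fL u' := by
        by_contra hne
        exact (hE.1.2.1 _ he _ he' hne).2.2.2 h
      rw [hu2, hu2', this]
  · exact dns_card_le hE n

lemma edge_lt {e : Fin n × Fin n} (he : e ∈ E) {t : ℕ} (h1 : (e.1 : ℕ) < t)
    (h2 : t ≤ (e.2 : ℕ)) :
    (dns (toWord E) (e.1 : ℕ) t).card + 1 ≤ (ups (toWord E) (e.1 : ℕ) t).card := by
  have hmem : e.1 ∈ ups (toWord E) (e.1 : ℕ) t := by
    simp only [ups, Finset.mem_filter, Finset.mem_univ, true_and]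
    exact ⟨le_refl _, h1, left_is_up he⟩
  have hcard : (dns (toWord E) (e.1 : ℕ) t).card ≤
      ((ups (toWord E) (e.1 : ℕ) t).erase e.1).card := by
    choose fR hfR using exists_fR hE
    apply Finset.card_le_card_of_injOn (fun u => (fR u).1)
    · intro u hu
      simp only [dns, Finset.mem_coe, Finset.mem_filter, Finset.mem_univ, true_and] at hu
      obtain ⟨hu1, hu2, hu3⟩ := hu
      obtain ⟨hf, huf⟩ := hfR u hu3
      set f := fR u with hfdef
      have hune : u ≠ e.1 := by
        intro hx
        rw [hx, left_is_up he] at hu3; simp at hu3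
      have hultj : (u : ℕ) < (e.2 : ℕ) := by omega
      have hfne : f ≠ e := by
        intro hx
        have : (u : ℕ) = (e.2 : ℕ) := by rw [huf, hx]
        omega
      have hfe1 : f.1 ≠ e.1 := (hE.1.2.1 _ hf _ he hfne).1
      have hnc := hE.1.2.2 _ hf _ he
      have hf12 := hE.1.1 _ hf
      -- f.2 = u, need e.1 < f.1
      have hne1u : (e.1 : ℕ) < (u : ℕ) := by
        rcases Nat.lt_or_ge (e.1 : ℕ) (u : ℕ) with h | h
        · exact h
        · exfalso; apply hune; apply Fin.ext; omega
      have hgt : (e.1 : ℕ) < (f.1 : ℕ) := by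
        by_contra hc
        apply hnc
        refine ⟨?_, ?_, ?_⟩
        · have : (f.1 : ℕ) ≠ (e.1 : ℕ) := fun hx => hfe1 (Fin.ext hx)
          exact Fin.lt_def.mpr (by omega)
        · rw [← huf]; exact Fin.lt_def.mpr hne1u
        · rw [← huf]; exact Fin.lt_def.mpr hultj
      have hf1u : (f.1 : ℕ) < (u : ℕ) := by
        rw [huf]; exact Fin.lt_def.mp hf12
      rw [Finset.mem_coe, Finset.mem_erase]
      constructor
      · exact fun hx => hfe1 hx
      · simp only [ups, Finset.mem_filter, Finset.mem_univ, true_and, ← hfdef]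
        exact ⟨by omega, by omega, left_is_up hf⟩
    · intro u hu u' hu' h
      simp only at h
      simp only [dns, Finset.coe_filter, Set.mem_setOf_eq] at hu hu'
      obtain ⟨hf, huf⟩ := hfR u hu.2.2.2
      obtain ⟨hf', huf'⟩ := hfR u' hu'.2.2.2
      have : fR u = fR u' := by
        by_contra hne
        exact (hE.1.2.1 _ hf _ hf' hne).1 h
      rw [huf, huf', this]
  rw [Finset.card_erase_of_mem hmem] at hcard
  have : 0 < (ups (toWord E) (e.1 : ℕ) t).card := Finset.card_pos.mpr ⟨e.1, hmem⟩
  omega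

lemma edge_eq {e : Fin n × Fin n} (he : e ∈ E) :
    (ups (toWord E) (e.1 : ℕ) (e.2 : ℕ)).card =
      (dns (toWord E) (e.1 : ℕ) (e.2 : ℕ)).card + 1 := by
  have h12 := Fin.lt_def.mp (hE.1.1 _ he)
  apply le_antisymm
  · have hmem : e.1 ∈ ups (toWord E) (e.1 : ℕ) (e.2 : ℕ) := by
      simp only [ups, Finset.mem_filter, Finset.mem_univ, true_and]
      exact ⟨le_refl _, h12, left_is_up he⟩
    have hcard : ((ups (toWord E) (e.1 : ℕ) (e.2 : ℕ)).erase e.1).card ≤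
        (dns (toWord E) (e.1 : ℕ) (e.2 : ℕ)).card := by
      choose fL hfL using exists_fL (E := E)
      apply Finset.card_le_card_of_injOn (fun u => (fL u).2)
      · intro u hu
        rw [Finset.mem_coe, Finset.mem_erase] at hu
        obtain ⟨hune, hu⟩ := hu
        simp only [ups, Finset.mem_filter, Finset.mem_univ, true_and] at hu
        obtain ⟨hu1, hu2, hu3⟩ := hu
        obtain ⟨hf, huf⟩ := hfL u hu3
        set f := fL u with hfdef
        have hfne : f ≠ e := by
          intro hx
          apply hune
          rw [huf, hx]
        have hf22 : f.2 ≠ e.2 := (hE.1.2.1 _ hf _ he hfne).2.2.2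
        have hf12 := Fin.lt_def.mp (hE.1.1 _ hf)
        have hne1u : (e.1 : ℕ) < (u : ℕ) := by
          rcases Nat.lt_or_ge (e.1 : ℕ) (u : ℕ) with h | h
          · exact h
          · exfalso; apply hune; apply Fin.ext; omega
        have hnc := hE.1.2.2 _ he _ hf
        have hlt : (f.2 : ℕ) < (e.2 : ℕ) := by
          by_contra hc
          apply hnc
          refine ⟨?_, ?_, ?_⟩
          · rw [← huf]; exact Fin.lt_def.mpr hne1u
          · rw [← huf]; exact Fin.lt_def.mpr hu2
          · have : (f.2 : ℕ) ≠ (e.2 : ℕ) := fun hx => hf22 (Fin.ext hx)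
            exact Fin.lt_def.mpr (by omega)
        simp only [dns, Finset.mem_coe, Finset.mem_filter, Finset.mem_univ, true_and, ← hfdef]
        refine ⟨?_, hlt, right_not_left hE hf⟩
        rw [← huf] at hf12; omega
      · intro u hu u' hu' h
        simp only at h
        rw [Finset.coe_erase] at hu hu'
        obtain ⟨hu, -⟩ := Set.mem_diff _ |>.mp hu
        obtain ⟨hu', -⟩ := Set.mem_diff _ |>.mp hu'
        simp only [ups, Finset.coe_filter, Set.mem_setOf_eq] at hu hu'
        obtain ⟨hf, huf⟩ := hfL u hu.2.2.2
        obtain ⟨hf', huf'⟩ := hfL u' hu'.2.2.2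
        have : fL u = fL u' := by
          by_contra hne
          exact (hE.1.2.1 _ hf _ hf' hne).2.2.2 h
        rw [huf, huf', this]
    rw [Finset.card_erase_of_mem hmem] at hcard
    have h1 : 1 ≤ (ups (toWord E) (e.1 : ℕ) (e.2 : ℕ)).card :=
      Finset.card_pos.mpr ⟨e.1, hmem⟩
    omega
  · exact edge_lt hE he h12 (le_refl _)

lemma dyck_toWord : IsDyckFun (toWord E) := by
  constructor
  · intro s
    have := ht_sub (toWord E) (Nat.zero_le s)
    have hle := dns_card_le hE s
    rw [ht_zero] at this
    omega
  · have := ht_sub (toWord E) (Nat.zero_le n)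
    have heq := updn_card_eq hE
    rw [ht_zero] at this
    omega

lemma mem_E_P {e : Fin n × Fin n} (he : e ∈ E) : P (toWord E) e.1 e.2 := by
  have h12 := Fin.lt_def.mp (hE.1.1 _ he)
  refine ⟨hE.1.1 _ he, left_is_up he, right_not_left hE he, ?_, ?_⟩
  · have := ht_sub (toWord E) (le_of_lt h12)
    have heq := edge_eq hE he
    omega
  · intro t h1 h2
    have := ht_sub (toWord E) (le_of_lt h2)
    have hlt := edge_lt hE he h2 h1
    omega

lemma toMatch_toWord : toMatch (toWord E) = E := by
  apply Finset.Subset.antisymm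
  · intro e he
    have hP := mem_toMatch.mp he
    obtain ⟨f, hf, hef⟩ := (word_false_iff hE).mp hP.2.2.1
    have hPf := mem_E_P hE hf
    rw [← hef] at hPf
    have h1 : e.1 = f.1 := P_down_unique hP hPf
    have : e = f := Prod.ext h1 hef
    rw [this]; exact hf
  · intro e he
    exact mem_toMatch.mpr (mem_E_P hE he)

end MatchingSide2

section ListSide

open DyckStep

/-- the list of a word -/
def L (w : Fin n → Bool) : List DyckStep :=
  List.ofFn (fun i => if w i then U else D)

lemma L_length (w : Fin n → Bool) : (L w).length = n := by simp [L]

lemma take_counts (w : Fin n → Bool) (s : ℕ) :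
    (((L w).take s).count U : ℤ) - ((L w).take s).count D = ht w s := by
  induction s with
  | zero => simp
  | succ s ih =>
    rcases Nat.lt_or_ge s n with h | h
    · have hlen : s < (L w).length := by rw [L_length]; exact h
      have htake : (L w).take (s + 1) = (L w).take s ++ [(L w).get ⟨s, hlen⟩] := by
        rw [List.take_succ]
        congr 1
        rw [List.getElem?_eq_getElem hlen]
        rfl
      have hget : (L w).get ⟨s, hlen⟩ = if w ⟨s, h⟩ then U else D := by
        simp [L]
      have hstp : stp w s = if w ⟨s, h⟩ then 1 else -1 := by simp [stp, h]
      rw [htake, ht_succ, ← ih, hstp, hget]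
      cases hw : w ⟨s, h⟩ <;>
        simp [List.count_append, hw] <;> push_cast <;> ring
    · have htake1 : (L w).take (s + 1) = L w := by
        apply List.take_of_length_le; rw [L_length]; omega
      have htake2 : (L w).take s = L w := by
        apply List.take_of_length_le; rw [L_length]; omega
      have hstp : stp w s = 0 := by simp [stp]; omega
      rw [htake1, ht_succ, ← ih, htake2, hstp]
      ring

lemma count_UD (l : List DyckStep) : l.count U + l.count D = l.length := by
  induction l with
  | nil => simp
  | cons a t ih => cases a <;> simp [List.count_cons] <;> omega

lemma isDyckFun_iff (w : Fin n → Bool) :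
    IsDyckFun w ↔ ((L w).count U = (L w).count D ∧
      ∀ s, ((L w).take s).count D ≤ ((L w).take s).count U) := by
  have hfull : (L w).take n = L w := by
    apply List.take_of_length_le; rw [L_length]
  constructor
  · intro hd
    constructor
    · have := take_counts w n
      rw [hfull, hd.2] at this
      omega
    · intro s
      have := take_counts w s
      have h2 := hd.1 s
      omega
  · intro ⟨h1, h2⟩
    constructor
    · intro s
      have := take_counts w s
      have h3 := h2 s
      omega
    · have := take_counts w n
      rw [hfull] at this
      omega

lemma card_dyckFun (k : ℕ) :
    (Finset.univ.filter (fun w : Fin (2 * k) → Bool =>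
      IsDyckFun w)).card = catalan k := by
  classical
  rw [← DyckWord.card_dyckWord_semilength_eq_catalan k, ← Fintype.card_subtype]
  apply Fintype.card_congr
  refine ⟨fun x => ⟨⟨L x.1, ?_, ?_⟩, ?_⟩, fun p => ⟨fun i =>
    decide (p.1.toList.get ⟨(i : ℕ), by
      rw [← DyckWord.two_mul_semilength_eq_length, p.2]; exact i.isLt⟩ = U), ?_⟩, ?_, ?_⟩
  · exact ((isDyckFun_iff x.1).mp x.2).1
  · exact fun i => ((isDyckFun_iff x.1).mp x.2).2 i
  · -- semilength = k
    have h1 := ((isDyckFun_iff x.1).mp x.2).1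
    have h2 := count_UD (L x.1)
    rw [L_length] at h2
    show (L x.1).count U = k
    omega
  · -- IsDyckFun of the inverse word
    rcases p with ⟨p, hp⟩
    set w : Fin (2 * k) → Bool := fun i =>
      decide (p.toList.get ⟨(i : ℕ), by
        rw [← DyckWord.two_mul_semilength_eq_length, hp]; exact i.isLt⟩ = U) with hw
    have hLw : L w = p.toList := by
      apply List.ext_get
      · rw [L_length, ← DyckWord.two_mul_semilength_eq_length, hp]
      · intro i hi1 hi2
        have hi : i < 2 * k := by rwa [L_length] at hi1
        show (L w).get ⟨i, hi1⟩ = p.toList.get ⟨i, hi2⟩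
        have : (L w).get ⟨i, hi1⟩ = if w ⟨i, hi⟩ then U else D := by simp [L]
        rw [this, hw]
        rcases (p.toList.get ⟨i, hi2⟩).dichotomy with h | h <;> rw [List.get_eq_getElem] at h <;> simp [h]
    rw [isDyckFun_iff, hLw]
    exact ⟨p.count_U_eq_count_D, p.count_D_le_count_U⟩
  · -- left inverse
    intro x
    apply Subtype.ext
    funext i
    simp only
    have hlt : (i : ℕ) < (L x.1).length := by rw [L_length]; exact i.isLt
    have : (L x.1).get ⟨(i : ℕ), hlt⟩ = if x.1 i then U else D := by
      simp [L]
    rw [this]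
    cases hxi : x.1 i <;> simp [hxi]
  · -- right inverse
    intro p
    apply Subtype.ext
    apply DyckWord.ext
    show L _ = p.1.toList
    apply List.ext_get
    · rw [L_length, ← DyckWord.two_mul_semilength_eq_length, p.2]
    · intro i hi1 hi2
      have hi : i < 2 * k := by rwa [L_length] at hi1
      have : (L _).get ⟨i, hi1⟩ = if (decide (p.1.toList.get ⟨i, hi2⟩ = U)) then U else D := by
        simp [L]
      rw [this]
      rcases (p.1.toList.get ⟨i, hi2⟩).dichotomy with h | h <;> rw [List.get_eq_getElem] at h <;> simp [h]

end ListSide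

end NCM

theorem card_noncrossingPerfectMatchings_eq_catalan (k : ℕ) :
    (Finset.univ.filter
        (fun E : Finset (Fin (2 * k) × Fin (2 * k)) =>
          IsNoncrossingMatching E ∧
            ∀ v : Fin (2 * k), ∃ e ∈ E, v = e.1 ∨ v = e.2)).card =
      catalan k := by
  rw [← NCM.card_dyckFun k]
  apply Finset.card_bij' (i := fun E _ => NCM.toWord E) (j := fun w _ => NCM.toMatch w)
  · intro E hE
    rw [Finset.mem_filter] at hE ⊢
    exact ⟨Finset.mem_univ _, NCM.dyck_toWord hE.2⟩
  · intro w hw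
    rw [Finset.mem_filter] at hw ⊢
    exact ⟨Finset.mem_univ _, NCM.toMatch_mem hw.2⟩
  · intro E hE
    rw [Finset.mem_filter] at hE
    exact NCM.toMatch_toWord hE.2
  · intro w hw
    rw [Finset.mem_filter] at hw
    exact NCM.toWord_toMatch hw.2
end

section
/- For all natural numbers k and r, the number of Motzkin 1-factors of length k and rank r equals m_{k,r}, the number of Motzkin paths of length k and rank r. -/
/-- A Motzkin 1-factor of length `k` and rank `r`: a noncrossing partial matching `E`
on `Fin k` together with a set `W` of `r` white vertices, disjoint from the vertices
covered by `E`, with no white vertex strictly between the endpoints of an edge of `E`. -/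
def IsMotzkinOneFactor {k : ℕ} (E : Finset (Fin k × Fin k)) (W : Finset (Fin k))
    (r : ℕ) : Prop :=
  IsNoncrossingMatching E ∧ W.card = r ∧
    (∀ w ∈ W, ∀ e ∈ E, w ≠ e.1 ∧ w ≠ e.2) ∧
    (∀ w ∈ W, ∀ e ∈ E, ¬ (e.1 < w ∧ w < e.2))

instance {k : ℕ} (E : Finset (Fin k × Fin k)) (W : Finset (Fin k)) (r : ℕ) :
    Decidable (IsMotzkinOneFactor E W r) := by
  unfold IsMotzkinOneFactor; infer_instance


namespace MotzkinAux


variable {k : ℕ}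

def hgt (a : Fin k → Fin 3) (s : ℕ) : ℤ :=
  ∑ i : Fin k, if (i : ℕ) < s then ((a i : ℤ) - 1) else 0

lemma hgt_zero (a : Fin k → Fin 3) : hgt a 0 = 0 := by simp [hgt]

lemma fin3_coe_nonneg (x : Fin 3) : (0:ℤ) ≤ (x:ℤ) := by positivity

lemma fin3_coe_le (x : Fin 3) : (x:ℤ) ≤ 2 := by
  have := x.isLt; omega

lemma fin3_eq_two_of_coe (x : Fin 3) (h : (x:ℤ) = 2) : x = 2 := by
  apply Fin.ext
  show (x:ℕ) = 2
  omega

lemma fin3_eq_zero_of_coe (x : Fin 3) (h : (x:ℤ) = 0) : x = 0 := by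
  apply Fin.ext
  show (x:ℕ) = 0
  omega

lemma fin3_coe_of_eq_two (x : Fin 3) (h : x = 2) : (x:ℤ) = 2 := by subst h; rfl

lemma fin3_coe_of_eq_zero (x : Fin 3) (h : x = 0) : (x:ℤ) = 0 := by subst h; rfl

lemma fin3_coe_of_eq_one (x : Fin 3) (h : x = 1) : (x:ℤ) = 1 := by subst h; rfl

lemma hgt_succ (a : Fin k → Fin 3) (s : ℕ) (hs : s < k) :
    hgt a (s+1) = hgt a s + ((a ⟨s, hs⟩ : ℤ) - 1) := by
  unfold hgt
  have h : ∀ i : Fin k, (if (i:ℕ) < s+1 then ((a i:ℤ)-1) else 0)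
      = (if (i:ℕ) < s then ((a i:ℤ)-1) else 0)
        + (if i = ⟨s,hs⟩ then ((a i:ℤ)-1) else 0) := by
    intro i
    have hiff : i = (⟨s,hs⟩ : Fin k) ↔ (i:ℕ) = s := by
      constructor
      · intro h; subst h; rfl
      · intro h; exact Fin.ext h
    rcases lt_trichotomy (i:ℕ) s with h1|h1|h1
    · rw [if_pos (by omega), if_pos h1, if_neg (by rw [hiff]; omega)]; ring
    · rw [if_pos (by omega), if_neg (by omega), if_pos (hiff.mpr h1), hiff.mpr h1]
      simp
    · rw [if_neg (by omega), if_neg (by omega), if_neg (by rw [hiff]; omega)]; ring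
  rw [Finset.sum_congr rfl (fun i _ => h i), Finset.sum_add_distrib,
    Finset.sum_ite_eq' Finset.univ (⟨s,hs⟩ : Fin k), if_pos (Finset.mem_univ _)]

lemma hgt_succ' (a : Fin k → Fin 3) (i : Fin k) :
    hgt a ((i:ℕ)+1) = hgt a (i:ℕ) + ((a i : ℤ) - 1) := by
  have := hgt_succ a (i:ℕ) i.isLt
  simpa using this

lemma hgt_of_ge (a : Fin k → Fin 3) {s : ℕ} (h : k ≤ s) : hgt a s = hgt a k := by
  unfold hgt
  refine Finset.sum_congr rfl (fun i _ => ?_)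
  rw [if_pos (by omega), if_pos i.isLt]

/-- `i` and `j` are matched in the noncrossing matching determined by the path `a`. -/
def MP (a : Fin k → Fin 3) (i j : Fin k) : Prop :=
  i < j ∧ a i = 2 ∧ a j = 0 ∧ hgt a ((j:ℕ)+1) = hgt a (i:ℕ) ∧
    ∀ t : ℕ, t ≤ (j:ℕ) → (i:ℕ) < t → hgt a (i:ℕ) < hgt a t

instance (a : Fin k → Fin 3) (i j : Fin k) : Decidable (MP a i j) := by
  unfold MP; infer_instance

lemma MP.opener_unique {a : Fin k → Fin 3} {i i' j : Fin k}
    (h : MP a i j) (h' : MP a i' j) : i = i' := by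
  by_contra hne
  have key : ∀ p q : Fin k, MP a p j → MP a q j → p < q → False := by
    intro p q hp hq hpq
    have h1 : hgt a (p:ℕ) < hgt a (q:ℕ) :=
      hp.2.2.2.2 (q:ℕ) (le_of_lt hq.1) hpq
    have h2 := hp.2.2.2.1
    have h3 := hq.2.2.2.1
    omega
  rcases Ne.lt_or_gt hne with hlt | hlt
  · exact key i i' h h' hlt
  · exact key i' i h' h hlt

lemma MP.closer_unique {a : Fin k → Fin 3} {i j j' : Fin k}
    (h : MP a i j) (h' : MP a i j') : j = j' := by
  by_contra hne
  have key : ∀ p q : Fin k, MP a i p → MP a i q → p < q → False := by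
    intro p q hp hq hpq
    have h1 : hgt a (i:ℕ) < hgt a ((p:ℕ)+1) :=
      hq.2.2.2.2 ((p:ℕ)+1) (by omega) (by have := hp.1; omega)
    have h2 := hp.2.2.2.1
    omega
  rcases Ne.lt_or_gt hne with hlt | hlt
  · exact key j j' h h' hlt
  · exact key j' j h' h hlt

lemma MP.noncross {a : Fin k → Fin 3} {i j i' j' : Fin k}
    (h : MP a i j) (h' : MP a i' j') : ¬ (i < i' ∧ i' < j ∧ j < j') := by
  rintro ⟨h1, h2, h3⟩
  have ha : hgt a (i:ℕ) < hgt a (i':ℕ) :=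
    h.2.2.2.2 (i':ℕ) (le_of_lt h2) h1
  have hb : hgt a (i':ℕ) < hgt a ((j:ℕ)+1) :=
    h'.2.2.2.2 ((j:ℕ)+1) (by omega) (by omega)
  have hc := h.2.2.2.1
  omega



lemma exists_opener {a : Fin k → Fin 3} (h0 : ∀ s : ℕ, s ≤ k → 0 ≤ hgt a s)
    {j : Fin k} (hj : a j = 0) : ∃ i, MP a i j := by
  have hjk : (j:ℕ) < k := j.isLt
  have hstep : hgt a ((j:ℕ)+1) = hgt a (j:ℕ) - 1 := by
    have := hgt_succ' a j
    rw [fin3_coe_of_eq_zero _ hj] at this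
    omega
  have hj1 : 1 ≤ hgt a (j:ℕ) := by
    have := h0 ((j:ℕ)+1) (by omega)
    omega
  set S : Finset ℕ := (Finset.range (j:ℕ)).filter (fun t => hgt a t < hgt a (j:ℕ)) with hS
  have hmemS : ∀ t, t ∈ S ↔ (t < (j:ℕ) ∧ hgt a t < hgt a (j:ℕ)) := by
    intro t; simp [hS]
  have hne : S.Nonempty := by
    refine ⟨0, (hmemS 0).mpr ⟨?_, ?_⟩⟩
    · by_contra h
      have hj0 : (j:ℕ) = 0 := by omega
      rw [hj0] at hj1
      rw [hgt_zero] at hj1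
      omega
    · rw [hgt_zero]; omega
  set i0 := S.max' hne with hi0def
  have hi0 : i0 < (j:ℕ) ∧ hgt a i0 < hgt a (j:ℕ) := (hmemS i0).mp (S.max'_mem hne)
  have hmax : ∀ t, i0 < t → t < (j:ℕ) → hgt a (j:ℕ) ≤ hgt a t := by
    intro t ht htj
    by_contra h
    have : t ∈ S := (hmemS t).mpr ⟨htj, by omega⟩
    have := S.le_max' t this
    omega
  have hclaim : ∀ t, i0 < t → t ≤ (j:ℕ) → hgt a (j:ℕ) ≤ hgt a t := by
    intro t ht htj
    rcases eq_or_lt_of_le htj with h|h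
    · rw [h]
    · exact hmax t ht h
  have hi0k : i0 < k := by omega
  have hsucc : hgt a (i0+1) = hgt a i0 + ((a ⟨i0, hi0k⟩ : ℤ) - 1) := hgt_succ a i0 hi0k
  have hle2 := fin3_coe_le (a ⟨i0, hi0k⟩)
  have hge0 := fin3_coe_nonneg (a ⟨i0, hi0k⟩)
  have hup : hgt a (j:ℕ) ≤ hgt a (i0+1) := hclaim (i0+1) (by omega) (by omega)
  have heq1 : hgt a (i0+1) = hgt a (j:ℕ) ∧ hgt a i0 = hgt a (j:ℕ) - 1 := by
    constructor <;> omega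
  have ha2 : a ⟨i0, hi0k⟩ = 2 := by
    apply fin3_eq_two_of_coe
    omega
  refine ⟨⟨i0, hi0k⟩, ?_, ha2, hj, ?_, ?_⟩
  · exact hi0.1
  · show hgt a ((j:ℕ)+1) = hgt a i0
    omega
  · intro t htj hit
    show hgt a i0 < hgt a t
    have := hclaim t hit htj
    omega

lemma exists_closer {a : Fin k → Fin 3} {w : Fin k} (hw : a w = 2)
    {s : ℕ} (hws : (w:ℕ) < s) (hsk : s ≤ k) (hHs : hgt a s ≤ hgt a (w:ℕ)) :
    ∃ t, MP a w t := by
  set S : Finset ℕ := (Finset.range (s+1)).filter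
    (fun t => (w:ℕ) < t ∧ hgt a t ≤ hgt a (w:ℕ)) with hS
  have hmemS : ∀ t, t ∈ S ↔ (t < s + 1 ∧ (w:ℕ) < t ∧ hgt a t ≤ hgt a (w:ℕ)) := by
    intro t; simp [hS]
  have hne : S.Nonempty := ⟨s, (hmemS s).mpr ⟨by omega, hws, hHs⟩⟩
  set t1 := S.min' hne with ht1def
  have ht1 : t1 < s + 1 ∧ (w:ℕ) < t1 ∧ hgt a t1 ≤ hgt a (w:ℕ) := (hmemS t1).mp (S.min'_mem hne)
  have hmin : ∀ t, (w:ℕ) < t → t < t1 → hgt a (w:ℕ) < hgt a t := by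
    intro t hwt htt
    by_contra h
    have : t ∈ S := (hmemS t).mpr ⟨by omega, hwt, by omega⟩
    have := S.min'_le t this
    omega
  have hwstep : hgt a ((w:ℕ)+1) = hgt a (w:ℕ) + 1 := by
    have := hgt_succ' a w
    rw [fin3_coe_of_eq_two _ hw] at this
    omega
  have ht1w : (w:ℕ) + 2 ≤ t1 := by
    rcases Nat.lt_or_ge t1 ((w:ℕ)+2) with h|h
    · have : t1 = (w:ℕ)+1 := by omega
      rw [this] at ht1
      omega
    · exact h
  have hjk : t1 - 1 < k := by omega
  set j : Fin k := ⟨t1 - 1, hjk⟩ with hjdef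
  have hjc : (j:ℕ) = t1 - 1 := rfl
  have hHj : hgt a (w:ℕ) < hgt a (t1-1) := hmin (t1-1) (by omega) (by omega)
  have hsucc : hgt a (t1-1+1) = hgt a (t1-1) + ((a j : ℤ) - 1) := hgt_succ a (t1-1) hjk
  have ht1e : t1 - 1 + 1 = t1 := by omega
  rw [ht1e] at hsucc
  have hge0 := fin3_coe_nonneg (a j)
  have haj : a j = 0 := by
    apply fin3_eq_zero_of_coe
    omega
  have hHt1 : hgt a t1 = hgt a (w:ℕ) := by omega
  refine ⟨j, ?_, hw, haj, ?_, ?_⟩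
  · show w < j
    exact Fin.lt_def.mpr (by omega)
  · show hgt a ((j:ℕ)+1) = hgt a (w:ℕ)
    rw [hjc, ht1e]
    exact hHt1
  · intro t htj hwt
    exact hmin t hwt (by omega)



variable {E : Finset (Fin k × Fin k)} {W : Finset (Fin k)} {r : ℕ}

/-- The step sequence associated with a Motzkin 1-factor. -/
def steps (E : Finset (Fin k × Fin k)) (W : Finset (Fin k)) : Fin k → Fin 3 :=
  fun p => if ∃ e ∈ E, e.2 = p then 0 else if p ∈ W ∨ ∃ e ∈ E, e.1 = p then 2 else 1

lemma op_ne_cl (hf : IsMotzkinOneFactor E W r) {e f : Fin k × Fin k}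
    (he : e ∈ E) (hfE : f ∈ E) : e.2 ≠ f.1 := by
  by_cases hef : e = f
  · subst hef
    have := hf.1.1 e he
    exact fun h => absurd (h ▸ this) (lt_irrefl _)
  · exact (hf.1.2.1 e he f hfE hef).2.2.1

lemma not_white_of_closer (hf : IsMotzkinOneFactor E W r) {p : Fin k}
    (hc : ∃ e ∈ E, e.2 = p) : p ∉ W := by
  rintro hw
  obtain ⟨e, he, rfl⟩ := hc
  exact (hf.2.2.1 _ hw e he).2 rfl

lemma not_white_of_opener (hf : IsMotzkinOneFactor E W r) {p : Fin k}
    (ho : ∃ e ∈ E, e.1 = p) : p ∉ W := by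
  rintro hw
  obtain ⟨e, he, rfl⟩ := ho
  exact (hf.2.2.1 _ hw e he).1 rfl

lemma not_opener_of_closer (hf : IsMotzkinOneFactor E W r) {p : Fin k}
    (hc : ∃ e ∈ E, e.2 = p) : ¬ ∃ e ∈ E, e.1 = p := by
  rintro ⟨f, hfE, hfp⟩
  obtain ⟨e, he, hep⟩ := hc
  exact op_ne_cl hf he hfE (hep.trans hfp.symm)

lemma steps_closer {p : Fin k} (hc : ∃ e ∈ E, e.2 = p) : steps E W p = 0 := by
  unfold steps; rw [if_pos hc]

lemma steps_two (hf : IsMotzkinOneFactor E W r) {p : Fin k}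
    (h : p ∈ W ∨ ∃ e ∈ E, e.1 = p) : steps E W p = 2 := by
  unfold steps
  rw [if_neg, if_pos h]
  intro hc
  rcases h with hw | ho
  · exact not_white_of_closer hf hc hw
  · exact not_opener_of_closer hf hc ho

lemma steps_flat {p : Fin k} (hc : ¬ ∃ e ∈ E, e.2 = p)
    (h : ¬ (p ∈ W ∨ ∃ e ∈ E, e.1 = p)) : steps E W p = 1 := by
  unfold steps; rw [if_neg hc, if_neg h]

lemma card_split {α : Type*} (F : Finset α) (f : α → ℕ) (s1 s2 : ℕ) (h : s1 ≤ s2) :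
    (F.filter (fun x => f x < s2)).card
      = (F.filter (fun x => f x < s1)).card
        + (F.filter (fun x => s1 ≤ f x ∧ f x < s2)).card := by
  classical
  rw [← Finset.card_union_of_disjoint]
  · congr 1
    ext x
    simp only [Finset.mem_union, Finset.mem_filter]
    constructor
    · rintro ⟨hx, h2⟩
      by_cases h1 : f x < s1
      · exact Or.inl ⟨hx, h1⟩
      · exact Or.inr ⟨hx, by omega, h2⟩
    · rintro (⟨hx, h1⟩ | ⟨hx, h1, h2⟩)
      · exact ⟨hx, by omega⟩
      · exact ⟨hx, h2⟩
  · rw [Finset.disjoint_left]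
    intro x hx hx'
    simp only [Finset.mem_filter] at hx hx'
    omega

lemma hgt_steps (hf : IsMotzkinOneFactor E W r) (s : ℕ) :
    hgt (steps E W) s = ((W.filter (fun w : Fin k => (w:ℕ) < s)).card : ℤ)
      + ((E.filter (fun e : Fin k × Fin k => (e.1:ℕ) < s)).card : ℤ)
      - ((E.filter (fun e : Fin k × Fin k => (e.2:ℕ) < s)).card : ℤ) := by
  classical
  have hpoint : ∀ p : Fin k, (if (p:ℕ) < s then ((steps E W p:ℤ)-1) else 0)
      = ((if (p:ℕ) < s ∧ p ∈ W then (1:ℤ) else 0)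
        + (if (p:ℕ) < s ∧ (∃ e ∈ E, e.1 = p) then (1:ℤ) else 0))
        - (if (p:ℕ) < s ∧ (∃ e ∈ E, e.2 = p) then (1:ℤ) else 0) := by
    intro p
    by_cases hps : (p:ℕ) < s
    · rw [if_pos hps]
      by_cases hc : ∃ e ∈ E, e.2 = p
      · rw [if_neg (fun h => not_white_of_closer hf hc h.2),
          if_neg (fun h => not_opener_of_closer hf hc h.2), if_pos ⟨hps, hc⟩,
          fin3_coe_of_eq_zero _ (steps_closer hc)]
        ring
      · by_cases hw : p ∈ W
        · rw [if_pos ⟨hps, hw⟩, if_neg (fun h => not_white_of_opener hf h.2 hw),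
            if_neg (fun h => hc h.2),
            fin3_coe_of_eq_two _ (steps_two hf (Or.inl hw))]
          ring
        · by_cases ho : ∃ e ∈ E, e.1 = p
          · rw [if_neg (fun h => hw h.2), if_pos ⟨hps, ho⟩, if_neg (fun h => hc h.2),
              fin3_coe_of_eq_two _ (steps_two hf (Or.inr ho))]
            ring
          · rw [if_neg (fun h => hw h.2), if_neg (fun h => ho h.2), if_neg (fun h => hc h.2),
              fin3_coe_of_eq_one _ (steps_flat hc (fun h => h.elim hw ho))]
            ring
    · rw [if_neg hps, if_neg (fun h => hps h.1), if_neg (fun h => hps h.1),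
        if_neg (fun h => hps h.1)]
      ring
  unfold hgt
  rw [Finset.sum_congr rfl (fun p _ => hpoint p), Finset.sum_sub_distrib,
    Finset.sum_add_distrib, Finset.sum_boole, Finset.sum_boole, Finset.sum_boole]
  have e1 : Finset.univ.filter (fun p : Fin k => (p:ℕ) < s ∧ p ∈ W)
      = W.filter (fun w : Fin k => (w:ℕ) < s) := by
    ext p; simp [and_comm]
  have e2 : (E.filter (fun e : Fin k × Fin k => (e.1:ℕ) < s)).card
      = (Finset.univ.filter (fun p : Fin k => (p:ℕ) < s ∧ ∃ e ∈ E, e.1 = p)).card := by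
    apply Finset.card_bij (fun e _ => e.1)
    · intro e hemem
      rw [Finset.mem_filter] at hemem
      exact Finset.mem_filter.mpr ⟨Finset.mem_univ _, hemem.2, e, hemem.1, rfl⟩
    · intro e hemem f hfmem hef
      rw [Finset.mem_filter] at hemem hfmem
      by_contra hne
      exact (hf.1.2.1 e hemem.1 f hfmem.1 hne).1 hef
    · intro p hp
      rw [Finset.mem_filter] at hp
      obtain ⟨-, hps, e, he, hep⟩ := hp
      exact ⟨e, Finset.mem_filter.mpr ⟨he, by rw [hep]; exact hps⟩, hep⟩
  have e3 : (E.filter (fun e : Fin k × Fin k => (e.2:ℕ) < s)).card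
      = (Finset.univ.filter (fun p : Fin k => (p:ℕ) < s ∧ ∃ e ∈ E, e.2 = p)).card := by
    apply Finset.card_bij (fun e _ => e.2)
    · intro e hemem
      rw [Finset.mem_filter] at hemem
      exact Finset.mem_filter.mpr ⟨Finset.mem_univ _, hemem.2, e, hemem.1, rfl⟩
    · intro e hemem f hfmem hef
      rw [Finset.mem_filter] at hemem hfmem
      by_contra hne
      exact (hf.1.2.1 e hemem.1 f hfmem.1 hne).2.2.2 hef
    · intro p hp
      rw [Finset.mem_filter] at hp
      obtain ⟨-, hps, e, he, hep⟩ := hp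
      exact ⟨e, Finset.mem_filter.mpr ⟨he, by rw [hep]; exact hps⟩, hep⟩
  rw [e1, ← e2, ← e3]

lemma steps_nonneg (hf : IsMotzkinOneFactor E W r) (s : ℕ) :
    0 ≤ hgt (steps E W) s := by
  rw [hgt_steps hf s]
  have hsub : E.filter (fun e : Fin k × Fin k => (e.2:ℕ) < s)
      ⊆ E.filter (fun e : Fin k × Fin k => (e.1:ℕ) < s) := by
    intro e hemem
    rw [Finset.mem_filter] at hemem ⊢
    have := hf.1.1 e hemem.1
    rw [Fin.lt_def] at this
    exact ⟨hemem.1, by omega⟩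
  have h1 := Finset.card_le_card hsub
  have h2 : (0:ℤ) ≤ ((W.filter (fun w : Fin k => (w:ℕ) < s)).card : ℤ) := Int.natCast_nonneg _
  omega

lemma steps_total (hf : IsMotzkinOneFactor E W r) :
    hgt (steps E W) k = (W.card : ℤ) := by
  rw [hgt_steps hf k, Finset.filter_true_of_mem (fun w _ => w.isLt),
    Finset.filter_true_of_mem (fun e _ => (e.1).isLt),
    Finset.filter_true_of_mem (fun e _ => (e.2).isLt)]
  ring

lemma hgt_steps_diff (hf : IsMotzkinOneFactor E W r) {s1 s2 : ℕ} (h : s1 ≤ s2) :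
    hgt (steps E W) s2 - hgt (steps E W) s1
      = ((W.filter (fun w : Fin k => s1 ≤ (w:ℕ) ∧ (w:ℕ) < s2)).card : ℤ)
        + ((E.filter (fun e : Fin k × Fin k => s1 ≤ (e.1:ℕ) ∧ (e.1:ℕ) < s2)).card : ℤ)
        - ((E.filter (fun e : Fin k × Fin k => s1 ≤ (e.2:ℕ) ∧ (e.2:ℕ) < s2)).card : ℤ) := by
  rw [hgt_steps hf s1, hgt_steps hf s2,
    card_split W (fun w : Fin k => (w:ℕ)) s1 s2 h,
    card_split E (fun e : Fin k × Fin k => (e.1:ℕ)) s1 s2 h,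
    card_split E (fun e : Fin k × Fin k => (e.2:ℕ)) s1 s2 h]
  push_cast
  ring

lemma MP_of_mem (hf : IsMotzkinOneFactor E W r) {e : Fin k × Fin k} (he : e ∈ E) :
    MP (steps E W) e.1 e.2 := by
  obtain ⟨i, j⟩ := e
  simp only at he ⊢
  have hij : (i:ℕ) < (j:ℕ) := by
    have := hf.1.1 _ he
    rwa [Fin.lt_def] at this
  have hWempty : ∀ t : ℕ, t ≤ (j:ℕ)+1 →
      W.filter (fun w : Fin k => (i:ℕ) ≤ (w:ℕ) ∧ (w:ℕ) < t) = ∅ := by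
    intro t ht
    rw [Finset.filter_eq_empty_iff]
    rintro w hw ⟨h1, h2⟩
    have hne := hf.2.2.1 w hw _ he
    have hnb := hf.2.2.2 w hw _ he
    simp only [Fin.lt_def] at hnb
    have hni : (w:ℕ) ≠ (i:ℕ) := fun hh => hne.1 (Fin.ext hh)
    have hnj : (w:ℕ) ≠ (j:ℕ) := fun hh => hne.2 (Fin.ext hh)
    apply hnb
    omega
  have hijmem : ∀ t : ℕ, (i:ℕ) < t →
      (i,j) ∈ E.filter (fun f : Fin k × Fin k => (i:ℕ) ≤ (f.1:ℕ) ∧ (f.1:ℕ) < t) :=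
    fun t ht => Finset.mem_filter.mpr ⟨he, le_refl _, ht⟩
  have hsub : ∀ t : ℕ, t ≤ (j:ℕ) →
      E.filter (fun f : Fin k × Fin k => (i:ℕ) ≤ (f.2:ℕ) ∧ (f.2:ℕ) < t)
        ⊆ (E.filter (fun f : Fin k × Fin k => (i:ℕ) ≤ (f.1:ℕ) ∧ (f.1:ℕ) < t)).erase (i,j) := by
    intro t ht f hfm
    rw [Finset.mem_filter] at hfm
    obtain ⟨hfE, h1, h2⟩ := hfm
    have hflt : (f.1:ℕ) < (f.2:ℕ) := by
      have := hf.1.1 f hfE; rwa [Fin.lt_def] at this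
    have hne2 : f ≠ (i,j) := by
      rintro rfl
      simp only at h2
      omega
    have hd := hf.1.2.1 f hfE (i,j) he hne2
    have hcr := hf.1.2.2 f hfE (i,j) he
    simp only [Fin.lt_def] at hcr
    have hd1 : (f.1:ℕ) ≠ (i:ℕ) := fun hh => hd.1 (Fin.ext hh)
    have hd3 : (f.2:ℕ) ≠ (i:ℕ) := fun hh => hd.2.2.1 (Fin.ext hh)
    have hd4 : (f.2:ℕ) ≠ (j:ℕ) := fun hh => hd.2.2.2 (Fin.ext hh)
    refine Finset.mem_erase.mpr ⟨hne2, Finset.mem_filter.mpr ⟨hfE, ?_, ?_⟩⟩ <;> omega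
  have heqend : E.filter (fun f : Fin k × Fin k => (i:ℕ) ≤ (f.1:ℕ) ∧ (f.1:ℕ) < (j:ℕ)+1)
      = E.filter (fun f : Fin k × Fin k => (i:ℕ) ≤ (f.2:ℕ) ∧ (f.2:ℕ) < (j:ℕ)+1) := by
    ext f
    simp only [Finset.mem_filter]
    constructor
    · rintro ⟨hfE, h1, h2⟩
      refine ⟨hfE, ?_⟩
      by_cases hfij : f = (i,j)
      · subst hfij
        simp only
        omega
      · have hd := hf.1.2.1 f hfE (i,j) he hfij
        have hcr := hf.1.2.2 (i,j) he f hfE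
        simp only [Fin.lt_def] at hcr
        have hflt : (f.1:ℕ) < (f.2:ℕ) := by
          have := hf.1.1 f hfE; rwa [Fin.lt_def] at this
        have hd1 : (f.1:ℕ) ≠ (i:ℕ) := fun hh => hd.1 (Fin.ext hh)
        have hd2 : (f.1:ℕ) ≠ (j:ℕ) := fun hh => hd.2.1 (Fin.ext hh)
        have hd4 : (f.2:ℕ) ≠ (j:ℕ) := fun hh => hd.2.2.2 (Fin.ext hh)
        omega
    · rintro ⟨hfE, h1, h2⟩
      refine ⟨hfE, ?_⟩
      by_cases hfij : f = (i,j)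
      · subst hfij
        simp only
        omega
      · have hd := hf.1.2.1 f hfE (i,j) he hfij
        have hcr := hf.1.2.2 f hfE (i,j) he
        simp only [Fin.lt_def] at hcr
        have hflt : (f.1:ℕ) < (f.2:ℕ) := by
          have := hf.1.1 f hfE; rwa [Fin.lt_def] at this
        have hd1 : (f.1:ℕ) ≠ (i:ℕ) := fun hh => hd.1 (Fin.ext hh)
        have hd3 : (f.2:ℕ) ≠ (i:ℕ) := fun hh => hd.2.2.1 (Fin.ext hh)
        have hd4 : (f.2:ℕ) ≠ (j:ℕ) := fun hh => hd.2.2.2 (Fin.ext hh)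
        omega
  have hdiffpos : ∀ t : ℕ, (i:ℕ) < t → t ≤ (j:ℕ) →
      hgt (steps E W) (i:ℕ) < hgt (steps E W) t := by
    intro t hit htj
    have hd := hgt_steps_diff hf (le_of_lt hit)
    rw [hWempty t (by omega)] at hd
    have hcle := Finset.card_le_card (hsub t htj)
    have hmem := hijmem t hit
    have hcerase := Finset.card_erase_of_mem hmem
    have hpos : 0 < (E.filter (fun f : Fin k × Fin k =>
        (i:ℕ) ≤ (f.1:ℕ) ∧ (f.1:ℕ) < t)).card := Finset.card_pos.mpr ⟨(i,j), hmem⟩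
    simp only [Finset.card_empty] at hd
    omega
  have hdiffzero : hgt (steps E W) ((j:ℕ)+1) = hgt (steps E W) (i:ℕ) := by
    have hd := hgt_steps_diff hf (show (i:ℕ) ≤ (j:ℕ)+1 by omega)
    rw [hWempty ((j:ℕ)+1) (le_refl _), heqend] at hd
    simp only [Finset.card_empty] at hd
    omega
  exact ⟨hf.1.1 _ he, steps_two hf (Or.inr ⟨(i,j), he, rfl⟩),
    steps_closer ⟨(i,j), he, rfl⟩, hdiffzero, fun t htj hit => hdiffpos t hit htj⟩



lemma closer_of_steps_zero {p : Fin k} (h : steps E W p = 0) : ∃ e ∈ E, e.2 = p := by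
  by_contra hno
  unfold steps at h
  rw [if_neg hno] at h
  split_ifs at h with h2
  · exact absurd h (by decide)
  · exact absurd h (by decide)

lemma of_steps_two {p : Fin k} (h : steps E W p = 2) : p ∈ W ∨ ∃ e ∈ E, e.1 = p := by
  unfold steps at h
  split_ifs at h with h1 h2
  · exact absurd h (by decide)
  · exact h2
  · exact absurd h (by decide)

def mEdges (a : Fin k → Fin 3) : Finset (Fin k × Fin k) :=
  Finset.univ.filter (fun e => MP a e.1 e.2)

def mWhites (a : Fin k → Fin 3) : Finset (Fin k) :=
  Finset.univ.filter (fun w => a w = 2 ∧ ∀ j, ¬ MP a w j)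

lemma mem_mEdges {a : Fin k → Fin 3} {e : Fin k × Fin k} :
    e ∈ mEdges a ↔ MP a e.1 e.2 := by simp [mEdges]

lemma mem_mWhites {a : Fin k → Fin 3} {w : Fin k} :
    w ∈ mWhites a ↔ (a w = 2 ∧ ∀ j, ¬ MP a w j) := by simp [mWhites]

lemma hgt_top (a : Fin k → Fin 3) : hgt a k = ∑ i : Fin k, ((a i : ℤ) - 1) := by
  unfold hgt
  exact Finset.sum_congr rfl (fun i _ => if_pos i.isLt)

lemma fin3_cases (x : Fin 3) : x = 0 ∨ x = 1 ∨ x = 2 := by fin_cases x <;> simp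

lemma hgt_count (a : Fin k → Fin 3) :
    hgt a k = ((Finset.univ.filter (fun p : Fin k => a p = 2)).card : ℤ)
      - ((Finset.univ.filter (fun p : Fin k => a p = 0)).card : ℤ) := by
  have hpoint : ∀ p : Fin k, (if (p:ℕ) < k then ((a p:ℤ)-1) else 0)
      = (if a p = 2 then (1:ℤ) else 0) - (if a p = 0 then (1:ℤ) else 0) := by
    intro p
    rw [if_pos p.isLt]
    rcases fin3_cases (a p) with h | h | h <;> rw [h] <;> decide
  unfold hgt
  rw [Finset.sum_congr rfl (fun p _ => hpoint p), Finset.sum_sub_distrib,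
    Finset.sum_boole, Finset.sum_boole]

lemma mWhites_card {a : Fin k → Fin 3} (h0 : ∀ s : ℕ, s ≤ k → 0 ≤ hgt a s) :
    ((mWhites a).card : ℤ) = hgt a k := by
  classical
  have hsplit : ((Finset.univ.filter (fun p : Fin k => a p = 2)).filter
        (fun p => ∃ j, MP a p j)).card
      + ((Finset.univ.filter (fun p : Fin k => a p = 2)).filter
        (fun p => ¬ ∃ j, MP a p j)).card
      = (Finset.univ.filter (fun p : Fin k => a p = 2)).card :=
    Finset.card_filter_add_card_filter_not _
  have hw : (Finset.univ.filter (fun p : Fin k => a p = 2)).filter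
      (fun p => ¬ ∃ j, MP a p j) = mWhites a := by
    ext w
    simp only [Finset.mem_filter, mem_mWhites, Finset.mem_univ, true_and, not_exists]
  have hbij : ((Finset.univ.filter (fun p : Fin k => a p = 2)).filter
        (fun p => ∃ j, MP a p j)).card
      = (Finset.univ.filter (fun p : Fin k => a p = 0)).card := by
    apply Finset.card_bij
      (fun p hp => (Finset.mem_filter.mp hp).2.choose)
    · intro p hp
      have hspec := (Finset.mem_filter.mp hp).2.choose_spec
      exact Finset.mem_filter.mpr ⟨Finset.mem_univ _, hspec.2.2.1⟩
    · intro p hp q hq heq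
      have hp' := (Finset.mem_filter.mp hp).2.choose_spec
      have hq' := (Finset.mem_filter.mp hq).2.choose_spec
      rw [heq] at hp'
      exact MP.opener_unique hp' hq'
    · intro j hj
      have hj0 : a j = 0 := (Finset.mem_filter.mp hj).2
      obtain ⟨i, hi⟩ := exists_opener h0 hj0
      have himem : i ∈ (Finset.univ.filter (fun p : Fin k => a p = 2)).filter
          (fun p => ∃ j, MP a p j) :=
        Finset.mem_filter.mpr ⟨Finset.mem_filter.mpr ⟨Finset.mem_univ _, hi.2.1⟩, j, hi⟩
      refine ⟨i, himem, ?_⟩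
      have hspec := (Finset.mem_filter.mp himem).2.choose_spec
      exact MP.closer_unique hspec hi
  rw [hgt_count a]
  rw [hw] at hsplit
  rw [hbij] at hsplit
  push_cast
  omega

lemma oneFactor_of_path {a : Fin k → Fin 3} (h0 : ∀ s : ℕ, s ≤ k → 0 ≤ hgt a s) :
    IsMotzkinOneFactor (mEdges a) (mWhites a) (mWhites a).card := by
  refine ⟨⟨?_, ?_, ?_⟩, rfl, ?_, ?_⟩
  · intro e he
    exact (mem_mEdges.mp he).1
  · intro e he f hfE hne
    have he' := mem_mEdges.mp he
    have hf' := mem_mEdges.mp hfE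
    refine ⟨?_, ?_, ?_, ?_⟩
    · intro h
      apply hne
      rw [h] at he'
      exact Prod.ext_iff.mpr ⟨h, MP.closer_unique he' hf'⟩
    · intro h
      have h1 : a f.2 = 2 := h ▸ he'.2.1
      rw [hf'.2.2.1] at h1
      exact absurd h1 (by decide)
    · intro h
      have h1 : a f.1 = 0 := h ▸ he'.2.2.1
      rw [hf'.2.1] at h1
      exact absurd h1 (by decide)
    · intro h
      apply hne
      rw [h] at he'
      exact Prod.ext_iff.mpr ⟨MP.opener_unique he' hf', h⟩
  · intro e he f hfE
    exact MP.noncross (mem_mEdges.mp he) (mem_mEdges.mp hfE)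
  · intro w hw e he
    have hw' := mem_mWhites.mp hw
    have he' := mem_mEdges.mp he
    constructor
    · intro h
      rw [h] at hw'
      exact hw'.2 e.2 he'
    · intro h
      have h1 : a w = 0 := h ▸ he'.2.2.1
      rw [hw'.1] at h1
      exact absurd h1 (by decide)
  · intro w hw e he
    rintro ⟨h1, h2⟩
    have hw' := mem_mWhites.mp hw
    have he' := mem_mEdges.mp he
    have hlt : hgt a ((e.1:ℕ)) < hgt a ((w:ℕ)) := by
      apply he'.2.2.2.2
      · exact le_of_lt (Fin.lt_def.mp h2)
      · exact Fin.lt_def.mp h1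
    obtain ⟨t, ht⟩ := exists_closer hw'.1
      (show (w:ℕ) < (e.2:ℕ)+1 by have := Fin.lt_def.mp h2; omega)
      (show (e.2:ℕ)+1 ≤ k from (e.2).isLt)
      (by rw [he'.2.2.2.1]; omega)
    exact hw'.2 t ht

lemma mEdges_steps (hf : IsMotzkinOneFactor E W r) : mEdges (steps E W) = E := by
  ext e
  rw [mem_mEdges]
  constructor
  · intro hMP
    obtain ⟨f, hfE, hfe⟩ := closer_of_steps_zero (hMP.2.2.1 : steps E W e.2 = 0)
    have hMPf := MP_of_mem hf hfE
    rw [hfe] at hMPf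
    have h1 : e.1 = f.1 := MP.opener_unique hMP hMPf
    have : e = f := Prod.ext_iff.mpr ⟨h1, hfe.symm⟩
    rw [this]
    exact hfE
  · intro he
    exact MP_of_mem hf he

lemma mWhites_steps (hf : IsMotzkinOneFactor E W r) : mWhites (steps E W) = W := by
  ext w
  rw [mem_mWhites]
  constructor
  · rintro ⟨h2, hnp⟩
    rcases of_steps_two h2 with hw | ⟨f, hfE, hfw⟩
    · exact hw
    · exfalso
      have := MP_of_mem hf hfE
      rw [hfw] at this
      exact hnp f.2 this
  · intro hw
    refine ⟨steps_two hf (Or.inl hw), ?_⟩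
    intro j hMP
    obtain ⟨f, hfE, hfj⟩ := closer_of_steps_zero (hMP.2.2.1 : steps E W j = 0)
    have hMPf := MP_of_mem hf hfE
    rw [hfj] at hMPf
    have h1 : w = f.1 := MP.opener_unique hMP hMPf
    exact (hf.2.2.1 w hw f hfE).1 h1

lemma steps_back {a : Fin k → Fin 3} (h0 : ∀ s : ℕ, s ≤ k → 0 ≤ hgt a s) :
    steps (mEdges a) (mWhites a) = a := by
  classical
  funext p
  by_cases hc : ∃ e ∈ mEdges a, e.2 = p
  · have h1 : steps (mEdges a) (mWhites a) p = 0 := steps_closer hc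
    obtain ⟨e, he, hep⟩ := hc
    have := (mem_mEdges.mp he).2.2.1
    rw [hep] at this
    rw [h1, this]
  · have hap : a p ≠ 0 := by
      intro h
      obtain ⟨i, hi⟩ := exists_opener h0 h
      exact hc ⟨(i, p), mem_mEdges.mpr hi, rfl⟩
    by_cases hwo : p ∈ mWhites a ∨ ∃ e ∈ mEdges a, e.1 = p
    · have h1 : steps (mEdges a) (mWhites a) p = 2 := by
        unfold steps
        rw [if_neg hc, if_pos hwo]
      rw [h1]
      rcases hwo with hw | ⟨e, he, hep⟩
      · exact (mem_mWhites.mp hw).1.symm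
      · have := (mem_mEdges.mp he).2.1
        rw [hep] at this
        exact this.symm
    · have h1 : steps (mEdges a) (mWhites a) p = 1 := by
        unfold steps
        rw [if_neg hc, if_neg hwo]
      have hap2 : a p ≠ 2 := by
        intro h
        by_cases hex : ∃ j, MP a p j
        · obtain ⟨j, hj⟩ := hex
          exact hwo (Or.inr ⟨(p, j), mem_mEdges.mpr hj, rfl⟩)
        · exact hwo (Or.inl (mem_mWhites.mpr ⟨h, fun j hj => hex ⟨j, hj⟩⟩))
      rcases fin3_cases (a p) with h | h | h
      · exact absurd h hap
      · rw [h1, h]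
      · exact absurd h hap2


end MotzkinAux

theorem card_motzkinOneFactors_eq_motzkin (k r : ℕ) :
    (Finset.univ.filter
        (fun p : Finset (Fin k × Fin k) × Finset (Fin k) =>
          IsMotzkinOneFactor p.1 p.2 r)).card =
      motzkinCount k r := by
  classical
  unfold motzkinCount
  set s := Finset.univ.filter
    (fun p : Finset (Fin k × Fin k) × Finset (Fin k) => IsMotzkinOneFactor p.1 p.2 r) with hs
  set t := Finset.univ.filter (fun a : Fin k → Fin 3 =>
    (∀ s : ℕ, s ≤ k → 0 ≤ ∑ i : Fin k, if (i : ℕ) < s then ((a i : ℤ) - 1) else 0) ∧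
    (∑ i : Fin k, ((a i : ℤ) - 1)) = (r:ℤ)) with ht
  have Hi : ∀ p (hp : p ∈ s), MotzkinAux.steps p.1 p.2 ∈ t := by
    intro p hp
    have hf : IsMotzkinOneFactor p.1 p.2 r := (Finset.mem_filter.mp hp).2
    refine Finset.mem_filter.mpr ⟨Finset.mem_univ _, ?_, ?_⟩
    · intro u hu
      exact MotzkinAux.steps_nonneg hf u
    · have h1 := MotzkinAux.steps_total hf
      rw [MotzkinAux.hgt_top] at h1
      rw [h1, hf.2.1]
  have Hj : ∀ a (ha : a ∈ t), (MotzkinAux.mEdges a, MotzkinAux.mWhites a) ∈ s := by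
    intro a ha
    have ha' := (Finset.mem_filter.mp ha).2
    have h0 : ∀ u : ℕ, u ≤ k → 0 ≤ MotzkinAux.hgt a u := ha'.1
    have hOF := MotzkinAux.oneFactor_of_path h0
    have hc : (MotzkinAux.mWhites a).card = r := by
      have h1 := MotzkinAux.mWhites_card h0
      rw [MotzkinAux.hgt_top] at h1
      rw [ha'.2] at h1
      exact_mod_cast h1
    exact Finset.mem_filter.mpr ⟨Finset.mem_univ _, hOF.1, hc, hOF.2.2.1, hOF.2.2.2⟩
  have Hli : ∀ p (hp : p ∈ s),
      (MotzkinAux.mEdges (MotzkinAux.steps p.1 p.2),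
        MotzkinAux.mWhites (MotzkinAux.steps p.1 p.2)) = p := by
    intro p hp
    have hf : IsMotzkinOneFactor p.1 p.2 r := (Finset.mem_filter.mp hp).2
    exact Prod.ext_iff.mpr ⟨MotzkinAux.mEdges_steps hf, MotzkinAux.mWhites_steps hf⟩
  have Hri : ∀ a (ha : a ∈ t),
      MotzkinAux.steps (MotzkinAux.mEdges a) (MotzkinAux.mWhites a) = a := by
    intro a ha
    have ha' := (Finset.mem_filter.mp ha).2
    exact MotzkinAux.steps_back ha'.1
  exact Finset.card_bij' (fun p _ => MotzkinAux.steps p.1 p.2)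
    (fun a _ => (MotzkinAux.mEdges a, MotzkinAux.mWhites a)) Hi Hj Hli Hri
end

section
/- For all natural numbers k and ℓ with 0 ≤ ℓ ≤ \lfloor k/2 \rfloor, the number of sequences (a_1, …, a_k) with each a_i ∈ {-1, 1}, all partial sums a_1 + ⋯ + a_s ≥ 0 for 1 ≤ s ≤ k, and total sum a_1 + ⋯ + a_k = k - 2ℓ, equals \binom{k}{\ell} - \binom{k}{\ell - 1}, where by convention \binom{k}{-1} = 0. -/
def mS (k ℓ : ℕ) : Finset (Fin k → Fin 2) :=
  Finset.univ.filter (fun a : Fin k → Fin 2 =>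
        (∀ s : ℕ, s ≤ k →
          0 ≤ ∑ i : Fin k, if (i : ℕ) < s then (2 * (a i : ℤ) - 1) else 0) ∧
        (∑ i : Fin k, (2 * (a i : ℤ) - 1)) = (k : ℤ) - 2 * ℓ)

lemma mem_mS {k ℓ : ℕ} {a : Fin k → Fin 2} : a ∈ mS k ℓ ↔
    (∀ s : ℕ, s ≤ k →
          0 ≤ ∑ i : Fin k, if (i : ℕ) < s then (2 * (a i : ℤ) - 1) else 0) ∧
        (∑ i : Fin k, (2 * (a i : ℤ) - 1)) = (k : ℤ) - 2 * ℓ := by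
  simp [mS]

lemma prefix_full (k : ℕ) (f : Fin k → ℤ) :
    (∑ i : Fin k, if (i : ℕ) < k then f i else 0) = ∑ i : Fin k, f i := by
  apply Finset.sum_congr rfl
  intro i _
  exact if_pos i.isLt

lemma mS_empty {k ℓ : ℕ} (h : k < 2 * ℓ) : mS k ℓ = ∅ := by
  ext a
  simp only [Finset.notMem_empty, iff_false, mem_mS, not_and]
  intro h1 h2
  have := h1 k le_rfl
  rw [prefix_full, h2] at this
  omega

lemma mS_zero (k : ℕ) : mS k 0 = {fun _ => 1} := by
  ext a
  simp only [mem_mS, Finset.mem_singleton]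
  constructor
  · rintro ⟨-, h2⟩
    have hle : ∀ i ∈ Finset.univ, (2 * (a i : ℤ) - 1) ≤ 1 := by
      intro i _
      have : (a i : ℕ) < 2 := (a i).isLt
      omega
    have hsum : ∑ i : Fin k, (2 * (a i : ℤ) - 1) = ∑ _i : Fin k, (1 : ℤ) := by
      rw [h2]; simp
    have := (Finset.sum_eq_sum_iff_of_le hle).1 hsum
    funext i
    have hi := (this i (Finset.mem_univ i)).symm
    have : (a i : ℕ) = 1 := by omega
    exact Fin.ext this
  · rintro rfl
    constructor
    · intro s hs
      apply Finset.sum_nonneg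
      intro i _
      split <;> norm_num
    · simp

lemma sum_snoc (k : ℕ) (b : Fin k → Fin 2) (c : Fin 2) :
    (∑ i : Fin (k+1), (2 * ((Fin.snoc b c : Fin (k+1) → Fin 2) i : ℤ) - 1)) =
      (∑ i : Fin k, (2 * (b i : ℤ) - 1)) + (2 * (c : ℤ) - 1) := by
  rw [Fin.sum_univ_castSucc]
  simp

lemma prefix_snoc (k : ℕ) (b : Fin k → Fin 2) (c : Fin 2) (s : ℕ) (hs : s ≤ k) :
    (∑ i : Fin (k+1), if (i : ℕ) < s then (2 * ((Fin.snoc b c : Fin (k+1) → Fin 2) i : ℤ) - 1) else 0) =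
      ∑ i : Fin k, if (i : ℕ) < s then (2 * (b i : ℤ) - 1) else 0 := by
  rw [Fin.sum_univ_castSucc]
  have h2 : ¬ (k < s) := by omega
  simp [h2]

lemma snoc_inj (k : ℕ) (c : Fin 2) :
    Function.Injective (fun b : Fin k → Fin 2 => (Fin.snoc b c : Fin (k+1) → Fin 2)) := by
  intro b b' hbb
  have := congrArg Fin.init hbb
  simpa [Fin.init_snoc] using this

lemma snoc_mem_back (k m : ℕ) (c : Fin 2) (b : Fin k → Fin 2)
    (hb : b ∈ mS k (m + (c : ℕ))) (h : 2 * m + 2 ≤ k + 1) :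
    (Fin.snoc b c : Fin (k+1) → Fin 2) ∈ mS (k+1) (m+1) := by
  obtain ⟨h1, h2⟩ := mem_mS.1 hb
  have hc : (c : ℕ) < 2 := c.isLt
  have htot : (∑ i : Fin (k+1), (2 * ((Fin.snoc b c : Fin (k+1) → Fin 2) i : ℤ) - 1))
      = ((k:ℤ)+1) - 2 * (m+1) := by
    rw [sum_snoc, h2]
    push_cast
    ring
  refine mem_mS.2 ⟨?_, by rw [htot]; push_cast; ring⟩
  intro s hs
  rcases Nat.lt_or_ge s (k+1) with hsk | hsk
  · rw [prefix_snoc k b c s (by omega)]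
    exact h1 s (by omega)
  · have hse : s = k + 1 := by omega
    subst hse
    rw [prefix_full, htot]
    omega

lemma mS_rec (k m : ℕ) (h : 2 * m + 2 ≤ k + 1) :
    (mS (k+1) (m+1)).card = (mS k (m+1)).card + (mS k m).card := by
  have hset : mS (k+1) (m+1) =
      (mS k (m+1)).image (fun b => (Fin.snoc b 1 : Fin (k+1) → Fin 2)) ∪
      (mS k m).image (fun b => (Fin.snoc b 0 : Fin (k+1) → Fin 2)) := by
    ext a
    simp only [Finset.mem_union, Finset.mem_image]
    constructor
    · intro ha
      obtain ⟨h1, h2⟩ := mem_mS.1 ha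
      have hself : (Fin.snoc (Fin.init a) (a (Fin.last k)) : Fin (k+1) → Fin 2) = a :=
        Fin.snoc_init_self a
      have hpre : ∀ s ≤ k,
          0 ≤ ∑ i : Fin k, if (i : ℕ) < s then (2 * ((Fin.init a) i : ℤ) - 1) else 0 := by
        intro s hs
        rw [← prefix_snoc k (Fin.init a) (a (Fin.last k)) s hs, hself]
        exact h1 s (by omega)
      have hsum : (∑ i : Fin k, (2 * ((Fin.init a) i : ℤ) - 1))
          = ((k:ℤ)+1) - 2 * (m+1) - (2 * ((a (Fin.last k)) : ℤ) - 1) := by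
        have hss := sum_snoc k (Fin.init a) (a (Fin.last k))
        rw [hself] at hss
        rw [hss] at h2
        push_cast at h2 ⊢
        linarith
      have hcv : ((a (Fin.last k)) : ℕ) = 0 ∨ ((a (Fin.last k)) : ℕ) = 1 := by
        have := (a (Fin.last k)).isLt; omega
      rcases hcv with hcv | hcv
      · right
        refine ⟨Fin.init a, mem_mS.2 ⟨hpre, ?_⟩, ?_⟩
        · rw [hsum, hcv]
          push_cast
          ring
        · have hce : a (Fin.last k) = 0 := Fin.ext (by simp [hcv])
          rw [← hce]
          exact hself
      · left
        refine ⟨Fin.init a, mem_mS.2 ⟨hpre, ?_⟩, ?_⟩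
        · rw [hsum, hcv]
          push_cast
          ring
        · have hce : a (Fin.last k) = 1 := Fin.ext (by simp [hcv])
          rw [← hce]
          exact hself
    · rintro (⟨b, hb, rfl⟩ | ⟨b, hb, rfl⟩)
      · exact snoc_mem_back k m 1 b (by simpa using hb) h
      · exact snoc_mem_back k m 0 b (by simpa using hb) h
  have hdisj : Disjoint
      ((mS k (m+1)).image (fun b => (Fin.snoc b 1 : Fin (k+1) → Fin 2)))
      ((mS k m).image (fun b => (Fin.snoc b 0 : Fin (k+1) → Fin 2))) := by
    rw [Finset.disjoint_left]
    intro a ha hb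
    simp only [Finset.mem_image] at ha hb
    obtain ⟨b, -, rfl⟩ := ha
    obtain ⟨b', -, hbb⟩ := hb
    have h01 := congrFun hbb (Fin.last k)
    rw [Fin.snoc_last, Fin.snoc_last] at h01
    exact absurd h01 (by decide)
  rw [hset, Finset.card_union_of_disjoint hdisj,
    Finset.card_image_of_injective _ (snoc_inj k 1),
    Finset.card_image_of_injective _ (snoc_inj k 0)]

lemma main_lemma : ∀ k ℓ : ℕ, 2 * ℓ ≤ k + 1 →
    (mS k ℓ).card + (if ℓ = 0 then 0 else Nat.choose k (ℓ - 1)) = Nat.choose k ℓ := by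
  intro k
  induction k with
  | zero =>
    intro ℓ hℓ
    have : ℓ = 0 := by omega
    subst this
    simp [mS_zero]
  | succ k ih =>
    intro ℓ hℓ
    match ℓ with
    | 0 => simp [mS_zero]
    | (m+1) =>
      simp only [if_neg (Nat.succ_ne_zero m), Nat.succ_sub_one]
      rcases Nat.lt_or_ge (2 * (m+1)) (k+2) with hc | hc
      · -- 2(m+1) ≤ k+1 : use recurrence
        rw [mS_rec k m (by omega)]
        have h1 := ih (m+1) (by omega)
        simp only [Nat.succ_ne_zero, if_false, Nat.succ_sub_one] at h1
        have h2 := ih m (by omega)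
        have hp : Nat.choose (k+1) (m+1) = Nat.choose k m + Nat.choose k (m+1) :=
          Nat.choose_succ_succ k m
        have hp2 : Nat.choose (k+1) m = Nat.choose k m + (if m = 0 then 0 else Nat.choose k (m-1)) := by
          match m with
          | 0 => simp
          | (n+1) => simp [Nat.choose_succ_succ' k n]; omega
        omega
      · -- 2(m+1) = k+2 : empty set, symmetric binomials
        have hk : k + 1 = 2 * (m+1) - 1 := by omega
        have he : (mS (k+1) (m+1)).card = 0 := by
          rw [mS_empty (by omega)]; rfl
        rw [he]
        have : Nat.choose (k+1) (m+1) = Nat.choose (k+1) m := by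
          have h1 : m + 1 ≤ k + 1 := by omega
          rw [← Nat.choose_symm h1]
          congr 1
          omega
        omega

theorem card_nonzero_motzkin_paths (k ℓ : ℕ) (h : ℓ ≤ k / 2) :
    (Finset.univ.filter (fun a : Fin k → Fin 2 =>
        (∀ s : ℕ, s ≤ k →
          0 ≤ ∑ i : Fin k, if (i : ℕ) < s then (2 * (a i : ℤ) - 1) else 0) ∧
        (∑ i : Fin k, (2 * (a i : ℤ) - 1)) = (k : ℤ) - 2 * ℓ)).card =
      Nat.choose k ℓ - (if ℓ = 0 then 0 else Nat.choose k (ℓ - 1)) := by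
  have := main_lemma k ℓ (by omega)
  rw [show (Finset.univ.filter _ : Finset (Fin k → Fin 2)) = mS k ℓ from rfl]
  omega
end

section
/- The Motzkin numbers satisfy the recurrence M_{n+2} = M_{n+1} + \sum_{i=0}^{n} M_i \, M_{n-i} for all natural numbers n, together with M_0 = 1 and M_1 = 1. -/
namespace MotzkinAux

def stp (a : Fin 3) : ℤ := (a : ℤ) - 1

def Ok (l : List ℤ) : Prop := (∀ t : ℕ, 0 ≤ (l.take t).sum) ∧ l.sum = 0

abbrev MSet (k : ℕ) : Type := {l : List (Fin 3) // l.length = k ∧ Ok (l.map stp)}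

lemma ok_cons_zero (l : List ℤ) : Ok ((0 : ℤ) :: l) ↔ Ok l := by
  constructor
  · rintro ⟨h1, h2⟩
    refine ⟨fun t => by simpa using h1 (t + 1), by simpa using h2⟩
  · rintro ⟨h1, h2⟩
    refine ⟨fun t => ?_, by simpa using h2⟩
    cases t with
    | zero => simp
    | succ t => simpa using h1 t

lemma ok_ud {p q : List ℤ} (hp : Ok p) (hq : Ok q) :
    Ok ((1 : ℤ) :: (p ++ (-1 : ℤ) :: q)) := by
  constructor
  · intro t
    cases t with
    | zero => simp
    | succ t =>
      rw [List.take_succ_cons, List.sum_cons]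
      rcases le_or_gt t p.length with h | h
      · rw [List.take_append_of_le_length h]
        have := hp.1 t
        linarith
      · obtain ⟨m, rfl⟩ : ∃ m, t = p.length + (m + 1) := ⟨t - p.length - 1, by omega⟩
        rw [List.take_append, List.take_of_length_le (by omega),
          List.sum_append]
        have h2 : p.length + (m + 1) - p.length = m + 1 := by omega
        rw [h2, List.take_succ_cons, List.sum_cons, hp.2]
        have := hq.1 m
        linarith
  · simp [hp.2, hq.2]

/-- First-return decomposition for a sequence of steps `≥ -1` with partial sums `≥ -1`
and total sum `-1`. -/
lemma exists_split (u : List ℤ) (hmem : ∀ x ∈ u, -1 ≤ x)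
    (h1 : ∀ t : ℕ, -1 ≤ (u.take t).sum) (h2 : u.sum = -1) :
    ∃ j : ℕ, j < u.length ∧ Ok (u.take j) ∧ (u.take (j + 1)).sum = -1 ∧
      Ok (u.drop (j + 1)) := by
  have hne : u ≠ [] := by rintro rfl; simp at h2
  have hlen : 1 ≤ u.length := List.length_pos_iff.mpr hne
  have hex : ∃ s : ℕ, (u.take (s + 1)).sum < 0 := by
    refine ⟨u.length - 1, ?_⟩
    rw [Nat.sub_add_cancel hlen, List.take_of_length_le le_rfl, h2]
    norm_num
  classical
  set j := Nat.find hex with hj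
  have hfind : (u.take (j + 1)).sum < 0 := Nat.find_spec hex
  have hmin : ∀ m : ℕ, m ≤ j → 0 ≤ (u.take m).sum := by
    intro m hm
    cases m with
    | zero => simp
    | succ m =>
      have : ¬ (u.take (m + 1)).sum < 0 := Nat.find_min hex (by omega)
      omega
  have hjlt : j < u.length := by
    have : j ≤ u.length - 1 := Nat.find_min' hex (by
      rw [Nat.sub_add_cancel hlen, List.take_of_length_le le_rfl, h2]; norm_num)
    omega
  have hstep : (u.take (j + 1)).sum = (u.take j).sum + u[j] := List.sum_take_succ u j hjlt
  have hgemem : -1 ≤ u[j] := hmem _ (List.getElem_mem hjlt)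
  have hge : -1 ≤ (u.take (j + 1)).sum := h1 (j + 1)
  have hj0 : (u.take j).sum = 0 := by
    have := hmin j le_rfl
    omega
  have hsum1 : (u.take (j + 1)).sum = -1 := by omega
  refine ⟨j, hjlt, ⟨?_, ?_⟩, hsum1, ?_, ?_⟩
  · intro t
    rw [List.take_take]
    exact hmin _ (min_le_right _ _)
  · exact hj0
  · intro t
    have hadd : u.take (j + 1 + t) = u.take (j + 1) ++ (u.drop (j + 1)).take t :=
      List.take_add
    have hsum : (u.take (j + 1 + t)).sum = -1 + ((u.drop (j + 1)).take t).sum := by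
      rw [hadd, List.sum_append, hsum1]
    have := h1 (j + 1 + t)
    omega
  · have := List.take_append_drop (j + 1) u
    have hs : (u.take (j + 1)).sum + (u.drop (j + 1)).sum = u.sum := by
      conv_rhs => rw [← this]
      rw [List.sum_append]
    omega


lemma stp0 : stp 0 = -1 := by decide
lemma stp1 : stp 1 = 0 := by decide
lemma stp2 : stp 2 = 1 := by decide

def phi (n : ℕ) :
    MSet (n + 1) ⊕ (Σ i : Fin (n + 1), MSet i.val × MSet (n - i.val)) → MSet (n + 2)
  | Sum.inl ⟨l, hl, ho⟩ => ⟨1 :: l, by simp [hl], by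
      rw [List.map_cons, stp1]
      exact (ok_cons_zero _).mpr ho⟩
  | Sum.inr ⟨i, ⟨p, hp, hop⟩, ⟨q, hq, hoq⟩⟩ => ⟨2 :: (p ++ 0 :: q), by
      have hi := i.2
      simp only [List.length_cons, List.length_append, hp, hq]
      omega, by
      rw [List.map_cons, List.map_append, List.map_cons, stp2, stp0]
      exact ok_ud hop hoq⟩

/-- The middle marker of the decomposition is determined. -/
lemma not_lt_len {p q p' q' : List (Fin 3)} (hop : Ok (p.map stp)) (hop' : Ok (p'.map stp))
    (h : p ++ (0 : Fin 3) :: q = p' ++ (0 : Fin 3) :: q') (hlt : p.length < p'.length) :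
    False := by
  have hL : ((p ++ (0 : Fin 3) :: q).map stp).take (p.length + 1)
      = p.map stp ++ [(-1 : ℤ)] := by
    rw [List.map_append, List.map_cons, stp0, List.take_append,
      List.take_of_length_le (by simp), List.length_map]
    congr 1
    rw [Nat.add_sub_cancel_left]
    rfl
  have hR : ((p' ++ (0 : Fin 3) :: q').map stp).take (p.length + 1)
      = (p'.map stp).take (p.length + 1) := by
    rw [List.map_append, List.take_append_of_le_length (by simpa using hlt)]
  have e1 : (((p ++ (0 : Fin 3) :: q).map stp).take (p.length + 1)).sum = -1 := by
    rw [hL, List.sum_append, hop.2]; simp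
  have e2 : 0 ≤ (((p ++ (0 : Fin 3) :: q).map stp).take (p.length + 1)).sum := by
    rw [h, hR]
    exact hop'.1 _
  omega

lemma middle_unique {p q p' q' : List (Fin 3)} (hop : Ok (p.map stp)) (hop' : Ok (p'.map stp))
    (h : p ++ (0 : Fin 3) :: q = p' ++ (0 : Fin 3) :: q') : p = p' ∧ q = q' := by
  have hlen : p.length = p'.length := by
    rcases lt_trichotomy p.length p'.length with hlt | he | hgt
    · exact absurd (not_lt_len hop hop' h hlt) id
    · exact he
    · exact absurd (not_lt_len hop' hop h.symm hgt) id
  obtain ⟨h1, h2⟩ := List.append_inj h hlen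
  exact ⟨h1, by injection h2⟩

lemma phi_inj (n : ℕ) : Function.Injective (phi n) := by
  rintro (⟨l, hl, ho⟩ | ⟨i, ⟨p, hp, hop⟩, ⟨q, hq, hoq⟩⟩)
    (⟨l', hl', ho'⟩ | ⟨i', ⟨p', hp', hop'⟩, ⟨q', hq', hoq'⟩⟩) hφ <;>
    simp only [phi, Subtype.mk.injEq, List.cons.injEq] at hφ
  · simp only [Sum.inl.injEq, Subtype.mk.injEq]
    exact hφ.2
  · exact absurd hφ.1 (by decide)
  · exact absurd hφ.1 (by decide)
  · obtain ⟨hpq, hqq⟩ := middle_unique hop hop' hφ.2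
    have hii : i = i' := by
      apply Fin.ext
      rw [← hp, ← hp', hpq]
    subst hii hpq hqq
    rfl

lemma phi_surj (n : ℕ) : Function.Surjective (phi n) := by
  rintro ⟨l, hl, ho⟩
  obtain ⟨h, t, rfl⟩ : ∃ h t, l = h :: t := by
    cases l with
    | nil => simp at hl
    | cons h t => exact ⟨h, t, rfl⟩
  have ht : t.length = n + 1 := by simpa using hl
  fin_cases h
  · exfalso
    have := ho.1 1
    rw [List.map_cons] at this
    simp [stp0] at this
  · -- head is the level step
    refine ⟨Sum.inl ⟨t, ht, ?_⟩, ?_⟩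
    · have h0 := ho
      rw [show ((⟨1, by omega⟩ : Fin 3) :: t).map stp = (0 : ℤ) :: t.map stp by
        rw [List.map_cons]; congr 1] at h0
      exact (ok_cons_zero _).mp h0
    · exact Subtype.ext rfl
  · -- head is the up step
    have hmap : ((⟨2, by omega⟩ : Fin 3) :: t).map stp = (1 : ℤ) :: t.map stp := by
      rw [List.map_cons]; congr 1
    set u : List ℤ := t.map stp with hu
    have hmem : ∀ x ∈ u, (-1 : ℤ) ≤ x := by
      intro x hx
      obtain ⟨a, _, rfl⟩ := List.mem_map.1 hx
      have : (0 : ℤ) ≤ (a : ℤ) := Int.ofNat_nonneg _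
      simp only [stp]
      omega
    have h1 : ∀ s : ℕ, (-1 : ℤ) ≤ (u.take s).sum := by
      intro s
      have := ho.1 (s + 1)
      rw [hmap, List.take_succ_cons, List.sum_cons] at this
      omega
    have h2 : u.sum = -1 := by
      have := ho.2
      rw [hmap, List.sum_cons] at this
      omega
    obtain ⟨j, hjlt, hokp, hm1, hokq⟩ := exists_split u hmem h1 h2
    have hul : u.length = n + 1 := by rw [hu, List.length_map, ht]
    have hjn : j ≤ n := by omega
    have hjt : j < t.length := by omega
    have huj : u[j] = -1 := by
      have hstep := List.sum_take_succ u j (by omega)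
      rw [hokp.2] at hstep
      omega
    have htj : t[j] = (0 : Fin 3) := by
      have : stp t[j] = -1 := by
        rw [← huj]
        exact (List.getElem_map stp).symm
      simp only [stp] at this
      have h3 := t[j].2
      apply Fin.ext
      omega
    refine ⟨Sum.inr ⟨⟨j, by omega⟩, ⟨t.take j, by simp [ht]; omega, ?_⟩,
      ⟨t.drop (j + 1), by simp [ht], ?_⟩⟩, ?_⟩
    · rwa [List.map_take]
    · rwa [List.map_drop]
    · apply Subtype.ext
      show (2 : Fin 3) :: (t.take j ++ (0 : Fin 3) :: t.drop (j + 1)) = _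
      have hrec : t.take j ++ (0 : Fin 3) :: t.drop (j + 1) = t := by
        conv_rhs => rw [← List.take_append_drop j t, List.drop_eq_getElem_cons hjt, htj]
      rw [hrec]
      congr 1

lemma ofFn_get_cast {α : Type*} {k : ℕ} (l : List α) (h : l.length = k) :
    List.ofFn (fun i : Fin k => l.get (Fin.cast h.symm i)) = l := by
  subst h
  exact List.ofFn_get l

/-- The equivalence between the function encoding and the list encoding. -/
def msetEquiv (k : ℕ) :
    {a : Fin k → Fin 3 //
      (∀ s : ℕ, s ≤ k → 0 ≤ ∑ i : Fin k, if (i : ℕ) < s then ((a i : ℤ) - 1) else 0) ∧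
      (∑ i : Fin k, ((a i : ℤ) - 1)) = 0} ≃ MSet k where
  toFun a := ⟨List.ofFn a.1, by
    refine ⟨by simp, ?_, ?_⟩
    · intro t
      rcases le_or_gt t k with ht | ht
      · have := a.2.1 t ht
        rw [List.map_ofFn, List.sum_take_ofFn, Finset.sum_filter]
        simpa [stp] using this
      · rw [List.take_of_length_le (by simpa using ht.le)]
        simp only [List.map_ofFn, List.sum_ofFn, Function.comp, stp]
        rw [a.2.2]
    · simp only [List.map_ofFn, List.sum_ofFn, Function.comp, stp]
      exact a.2.2⟩
  invFun l := ⟨fun i => l.1.get (Fin.cast l.2.1.symm i), by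
    have key : List.ofFn (fun i : Fin k => l.1.get (Fin.cast l.2.1.symm i)) = l.1 :=
      ofFn_get_cast l.1 l.2.1
    constructor
    · intro s _
      have := l.2.2.1 s
      rw [← key] at this
      rw [List.map_ofFn, List.sum_take_ofFn, Finset.sum_filter] at this
      simpa [stp] using this
    · have := l.2.2.2
      rw [← key] at this
      rw [List.map_ofFn, List.sum_ofFn] at this
      simpa [stp] using this⟩
  left_inv a := by
    ext i
    simp
  right_inv l := Subtype.ext (ofFn_get_cast l.1 l.2.1)

instance (k : ℕ) : Finite (MSet k) := Finite.of_equiv _ (msetEquiv k)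

lemma count_eq (k : ℕ) : motzkinCount k 0 = Nat.card (MSet k) := by
  classical
  rw [← Nat.card_congr (msetEquiv k), Nat.card_eq_fintype_card, Fintype.card_subtype,
    motzkinCount]

lemma card_rec (n : ℕ) :
    Nat.card (MSet (n + 2)) = Nat.card (MSet (n + 1)) +
      ∑ i ∈ Finset.range (n + 1), Nat.card (MSet i) * Nat.card (MSet (n - i)) := by
  classical
  haveI : ∀ k, Fintype (MSet k) := fun k => Fintype.ofFinite _
  rw [← Nat.card_eq_of_bijective (phi n) ⟨phi_inj n, phi_surj n⟩,
    Nat.card_eq_fintype_card, Fintype.card_sum, Fintype.card_sigma]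
  simp only [Fintype.card_prod, Nat.card_eq_fintype_card]
  rw [Fin.sum_univ_eq_sum_range (fun i => Fintype.card (MSet i) * Fintype.card (MSet (n - i)))]

end MotzkinAux

theorem motzkin_number_recurrence :
    motzkinCount 0 0 = 1 ∧ motzkinCount 1 0 = 1 ∧
      ∀ n : ℕ, motzkinCount (n + 2) 0 =
        motzkinCount (n + 1) 0 +
          ∑ i ∈ Finset.range (n + 1), motzkinCount i 0 * motzkinCount (n - i) 0 := by
  refine ⟨by decide, by decide, fun n => ?_⟩
  rw [MotzkinAux.count_eq, MotzkinAux.count_eq, MotzkinAux.card_rec]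
  congr 1
  exact Finset.sum_congr rfl fun i _ => by rw [MotzkinAux.count_eq, MotzkinAux.count_eq]
end
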